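/- arXiv:2409.10181 — 11 statements merged into one kernel-verified Lean document; each statement's English description precedes it below -/
import Mathlib

section
/- Let G=(V,E) be a finite connected graph with positive vertex measure μ and positive symmetric edge weights w. Let f:ℝ→ℝ satisfy f(t)=a e^t+g(t)e^t with a>0 a constant, g uniformly bounded on ℝ, g(t)→0 as t→±∞, and f(t)>0 for all t. Let h:V→ℝ and c∈ℝ satisfy: (1) if c>0, there exists x₀∈V with h(x₀)>0; (2) if c=0, h changes sign on V and ∫_V h dμ<0; (3) if c<0, there exists x₀∈V with h(x₀)<0. Then there exists a constant C (depending on h, c, G, f) such that every solution u:V→ℝ of −Δu = h(x) f(u) − c satisfies max_{x∈V} |u(x)| ≤ C. -/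
/-!
Everything rests on a discrete Harnack-type propagation estimate: if `Δu ≥ -β` wherever `u` is
within `C β` of its maximum, then `u` is within `C β` of its maximum everywhere (and likewise at
the minimum), with `C` depending only on the weighted graph.

Upper bound: near the maximum of a large solution `|h| f(u)` would be superlinear in `u`, while
`|c - Δu|` is only linear, so `h = 0` and `Δu = c` there; propagation spreads this to the whole
graph, contradicting `h ≢ 0`.

Lower bound: for `c < 0` it is read off at the minimum, where `Δu ≥ 0`. For `c ≥ 0` a very low
minimum makes `Δu` small near it, so by propagation the whole solution is very low. For `c > 0`
this contradicts `c ≤ h f(u)` at the maximum. For `c = 0` the solution is squeezed into a short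
interval where `f(u) ≈ a e^{min u}` uniformly, so `∑ μ h f(u)` has the sign of `∑ μ h < 0`,
whereas summation by parts makes it vanish.
-/

open Finset Filter Topology Real

section

variable {V : Type*} [Fintype V]

noncomputable def graphLaplacian (G : SimpleGraph V) [DecidableRel G.Adj] (μ : V → ℝ)
    (w : V → V → ℝ) (u : V → ℝ) (x : V) : ℝ :=
  (1 / μ x) * ∑ y ∈ G.neighborFinset x, w x y * (u y - u x)

section Laplacian

variable {G : SimpleGraph V} [DecidableRel G.Adj] {μ : V → ℝ} {w : V → V → ℝ}

lemma graphLaplacian_neg (u : V → ℝ) (x : V) :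
    graphLaplacian G μ w (-u) x = -graphLaplacian G μ w u x := by
  simp only [graphLaplacian, Pi.neg_apply]
  rw [← mul_neg, ← sum_neg_distrib]
  exact congrArg _ (sum_congr rfl fun y _ => by ring)

lemma graphLaplacian_nonneg_at_min {u : V → ℝ} {x : V} (hμ : 0 ≤ μ x)
    (hw : ∀ y, G.Adj x y → 0 ≤ w x y) (hx : ∀ y, u x ≤ u y) :
    0 ≤ graphLaplacian G μ w u x :=
  mul_nonneg (by positivity) <| sum_nonneg fun y hy =>
    mul_nonneg (hw y ((G.mem_neighborFinset x y).1 hy)) (sub_nonneg.2 (hx y))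

lemma graphLaplacian_nonpos_at_max {u : V → ℝ} {x : V} (hμ : 0 ≤ μ x)
    (hw : ∀ y, G.Adj x y → 0 ≤ w x y) (hx : ∀ y, u y ≤ u x) :
    graphLaplacian G μ w u x ≤ 0 := by
  have := graphLaplacian_nonneg_at_min (u := -u) hμ hw (fun y => neg_le_neg (hx y))
  rw [graphLaplacian_neg] at this
  linarith

lemma sum_mul_graphLaplacian_eq_zero (hμ : ∀ x, μ x ≠ 0) (hw : ∀ x y, w x y = w y x)
    (u : V → ℝ) : ∑ x, μ x * graphLaplacian G μ w u x = 0 := by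
  set F : V → V → ℝ := fun x y => if G.Adj x y then w x y * (u y - u x) else 0
  have hF : ∀ x y, F x y = -F y x := by
    intro x y
    by_cases hxy : G.Adj x y
    · simp only [F, if_pos hxy, if_pos hxy.symm, hw x y]
      ring
    · simp [F, hxy, G.adj_comm y x]
  have hflux : ∑ x, ∑ y, F x y = 0 := by
    have : ∑ x, ∑ y, F x y = -∑ x, ∑ y, F x y := by
      calc ∑ x, ∑ y, F x y = ∑ y, ∑ x, -F y x :=
            sum_comm.trans (sum_congr rfl fun y _ => sum_congr rfl fun x _ => hF x y)
        _ = -∑ x, ∑ y, F x y := by simp only [sum_neg_distrib]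
    linarith
  rw [← hflux]
  refine sum_congr rfl fun x _ => ?_
  rw [graphLaplacian, ← mul_assoc, mul_one_div_cancel (hμ x), one_mul,
    SimpleGraph.neighborFinset_eq_filter, sum_filter]

lemma exists_abs_graphLaplacian_le (hμ : ∀ x, 0 < μ x) (hwpos : ∀ x y, G.Adj x y → 0 < w x y) :
    ∃ L, 0 ≤ L ∧ ∀ (u : V → ℝ) (m s : ℝ), (∀ x, m ≤ u x) → (∀ x, u x ≤ s) →
      ∀ y, |graphLaplacian G μ w u y| ≤ L * (s - m) := by
  obtain ⟨M, hM⟩ := Finite.exists_le fun y => (∑ z ∈ G.neighborFinset y, w y z) / μ y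
  refine ⟨max M 0, le_max_right _ _, fun u m s hm hs y => ?_⟩
  have hsum : |∑ z ∈ G.neighborFinset y, w y z * (u z - u y)| ≤
      (∑ z ∈ G.neighborFinset y, w y z) * (s - m) := by
    rw [sum_mul]
    refine (abs_sum_le_sum_abs _ _).trans (sum_le_sum fun z hz => ?_)
    have hw := hwpos y z ((G.mem_neighborFinset y z).1 hz)
    rw [abs_mul, abs_of_pos hw]
    exact mul_le_mul_of_nonneg_left
      (abs_sub_le_iff.2 ⟨by linarith [hs z, hm y], by linarith [hs y, hm z]⟩) hw.le
  have hsm : 0 ≤ s - m := by linarith [hs y, hm y]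
  rw [graphLaplacian, abs_mul, abs_of_pos (one_div_pos.2 (hμ y)), one_div_mul_eq_div,
    div_le_iff₀ (hμ y)]
  calc _ ≤ (∑ z ∈ G.neighborFinset y, w y z) * (s - m) := hsum
    _ ≤ (M * μ y) * (s - m) := by
        gcongr
        exact (div_le_iff₀ (hμ y)).1 (hM y)
    _ ≤ max M 0 * (s - m) * μ y := by
        rw [mul_right_comm]
        gcongr
        exacts [(hμ y).le, le_max_left _ _]

end Laplacian

section Propagation

variable {G : SimpleGraph V} [DecidableRel G.Adj] {μ : V → ℝ} {w : V → V → ℝ}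

lemma exists_le_mul_weight (hwpos : ∀ x y, G.Adj x y → 0 < w x y) :
    ∃ Λ, 0 ≤ Λ ∧ ∀ y z, G.Adj y z →
      μ y ≤ Λ * w y z ∧ ∑ z' ∈ G.neighborFinset y, w y z' ≤ Λ * w y z := by
  obtain ⟨M, hM⟩ := Finite.exists_le fun p : V × V =>
    max (μ p.1 / w p.1 p.2) ((∑ z' ∈ G.neighborFinset p.1, w p.1 z') / w p.1 p.2)
  refine ⟨max M 0, le_max_right _ _, fun y z hyz => ?_⟩
  have hw := hwpos y z hyz
  have hM' := (hM (y, z)).trans (le_max_left M 0)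
  rw [max_le_iff, div_le_iff₀ hw, div_le_iff₀ hw] at hM'
  exact hM'

/-- No term of `μ y Δu y = ∑ w y z' (u z' - u y)` exceeds `w y z' d`, so the term at `z` is at
least `-(μ y β + d ∑ w y z')`. -/
lemma sub_le_of_adj_of_neg_le_graphLaplacian {u : V → ℝ} {y z : V} {Λ d β s : ℝ}
    (hμ : 0 < μ y) (hwpos : ∀ z, G.Adj y z → 0 < w y z) (hyz : G.Adj y z)
    (hμΛ : μ y ≤ Λ * w y z) (hdegΛ : ∑ z' ∈ G.neighborFinset y, w y z' ≤ Λ * w y z)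
    (hd : 0 ≤ d) (hβ : 0 ≤ β) (hs : ∀ x, u x ≤ s) (hy : s - d ≤ u y)
    (hΔ : -β ≤ graphLaplacian G μ w u y) :
    s - (d + Λ * (d + β)) ≤ u z := by
  have hw : 0 < w y z := hwpos z hyz
  have hflux : -(μ y * β) ≤ ∑ z' ∈ G.neighborFinset y, w y z' * (u z' - u y) := by
    have := mul_le_mul_of_nonneg_left hΔ hμ.le
    rwa [graphLaplacian, ← mul_assoc, mul_one_div_cancel hμ.ne', one_mul, mul_neg] at this
  have hterm : w y z * d - w y z * (u z - u y) ≤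
      ∑ z' ∈ G.neighborFinset y, (w y z' * d - w y z' * (u z' - u y)) :=
    single_le_sum (f := fun z' => w y z' * d - w y z' * (u z' - u y))
      (fun z' hz' => sub_nonneg.2 <| mul_le_mul_of_nonneg_left (by linarith [hs z'])
        (hwpos z' ((G.mem_neighborFinset y z').1 hz')).le)
      ((G.mem_neighborFinset y z).2 hyz)
  rw [sum_sub_distrib, ← sum_mul] at hterm
  have hdrop : -(Λ * (d + β)) * w y z ≤ (u z - u y) * w y z := by
    nlinarith [mul_le_mul_of_nonneg_right hdegΛ hd, mul_le_mul_of_nonneg_right hμΛ hβ,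
      mul_nonneg hw.le hd]
  linarith [le_of_mul_le_mul_right hdrop hw]

lemma sub_le_of_walk {Λ β s : ℝ} {u : V → ℝ} {N : ℕ} (hμ : ∀ x, 0 < μ x)
    (hwpos : ∀ x y, G.Adj x y → 0 < w x y) (hΛ : 0 ≤ Λ)
    (hΛw : ∀ y z, G.Adj y z →
      μ y ≤ Λ * w y z ∧ ∑ z' ∈ G.neighborFinset y, w y z' ≤ Λ * w y z)
    (hβ : 0 ≤ β) (hs : ∀ x, u x ≤ s)
    (hΔ : ∀ y, s - β * ((1 + Λ) ^ N - 1) ≤ u y → -β ≤ graphLaplacian G μ w u y) :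
    ∀ {x z : V} (p : G.Walk x z) (j : ℕ), j + p.length ≤ N →
      s - β * ((1 + Λ) ^ j - 1) ≤ u x → s - β * ((1 + Λ) ^ (j + p.length) - 1) ≤ u z := by
  have hmono : Monotone fun k : ℕ => β * ((1 + Λ) ^ k - 1) := fun i j hij => by
    have := pow_le_pow_right₀ (by linarith : (1 : ℝ) ≤ 1 + Λ) hij
    dsimp only
    nlinarith
  intro x z p
  induction p with
  | nil => simp
  | @cons x y z hxy p ih =>
    intro j hj hx
    rw [SimpleGraph.Walk.length_cons, add_comm p.length, ← add_assoc] at hj ⊢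
    refine ih (j + 1) hj ?_
    have hd : 0 ≤ β * ((1 + Λ) ^ j - 1) := by
      have := one_le_pow₀ (by linarith : (1 : ℝ) ≤ 1 + Λ) (n := j)
      nlinarith
    have := sub_le_of_adj_of_neg_le_graphLaplacian (hμ x) (hwpos x) hxy (hΛw x y hxy).1
      (hΛw x y hxy).2 hd hβ hs hx
      (hΔ x ((sub_le_sub_left (hmono (by omega)) s).trans hx))
    convert this using 2
    ring

/-- `C = (1 + Λ) ^ |V| - 1`: along a path from the maximum, each edge multiplies `d + β`, where `d`
bounds the distance to the maximum, by `1 + Λ`, and a path has fewer than `|V|` edges. -/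
theorem exists_near_max_propagation (hconn : G.Connected) (hμ : ∀ x, 0 < μ x)
    (hwpos : ∀ x y, G.Adj x y → 0 < w x y) :
    ∃ C : ℝ, ∀ (u : V → ℝ) (β : ℝ) (xM : V), 0 ≤ β → (∀ x, u x ≤ u xM) →
      (∀ y, u xM - C * β ≤ u y → -β ≤ graphLaplacian G μ w u y) →
      ∀ z, u xM - C * β ≤ u z := by
  classical
  obtain ⟨Λ, hΛ, hΛw⟩ := exists_le_mul_weight (μ := μ) hwpos
  refine ⟨(1 + Λ) ^ Fintype.card V - 1, fun u β xM hβ hxM hΔ z => ?_⟩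
  obtain ⟨p⟩ := hconn.preconnected xM z
  have hlen := p.bypass_isPath.length_lt
  have := sub_le_of_walk hμ hwpos hΛ hΛw hβ hxM (by simpa only [mul_comm β] using hΔ)
    p.bypass (Fintype.card V - p.bypass.length) (by omega)
    (sub_le_self _ (mul_nonneg hβ (sub_nonneg.2 (one_le_pow₀ (by linarith)))))
  rwa [Nat.sub_add_cancel hlen.le, mul_comm] at this

theorem exists_near_min_propagation (hconn : G.Connected) (hμ : ∀ x, 0 < μ x)
    (hwpos : ∀ x y, G.Adj x y → 0 < w x y) :
    ∃ C : ℝ, ∀ (u : V → ℝ) (β : ℝ) (xm : V), 0 ≤ β → (∀ x, u xm ≤ u x) →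
      (∀ y, u y ≤ u xm + C * β → graphLaplacian G μ w u y ≤ β) →
      ∀ z, u z ≤ u xm + C * β := by
  obtain ⟨C, hC⟩ := exists_near_max_propagation hconn hμ hwpos
  refine ⟨C, fun u β xm hβ hxm hΔ z => ?_⟩
  have := hC (-u) β xm hβ (fun x => neg_le_neg (hxm x)) (fun y hy => by
    rw [graphLaplacian_neg, neg_le_neg_iff]
    exact hΔ y (by simp only [Pi.neg_apply] at hy; linarith)) z
  simp only [Pi.neg_apply] at this
  linarith

end Propagation

lemma exists_forall_abs_mul_lt {ι : Type*} [Finite ι] {f : ℝ → ℝ}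
    (hf : Tendsto f atBot (𝓝 0)) (h : ι → ℝ) {ε : ℝ} (hε : 0 < ε) :
    ∃ τ, ∀ t ≤ τ, ∀ i, |h i| * f t < ε := by
  refine eventually_atBot.1 (eventually_all.2 fun i => ?_)
  have : Tendsto (fun t => |h i| * f t) atBot (𝓝 0) := by
    simpa using hf.const_mul |h i|
  exact this.eventually (gt_mem_nhds hε)

section ExpAsymptotics

variable {f g : ℝ → ℝ} {a : ℝ}

lemma tendsto_atBot_of_eq_exp (hf : ∀ t, f t = a * exp t + g t * exp t)
    (hg : Tendsto g atBot (𝓝 0)) : Tendsto f atBot (𝓝 0) := by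
  have := (tendsto_const_nhds (x := a)).add hg |>.mul tendsto_exp_atBot
  simp only [add_zero, mul_zero] at this
  exact this.congr fun t => by rw [hf, add_mul]

lemma tendsto_sub_mul_atTop_of_eq_exp (ha : 0 < a) (hf : ∀ t, f t = a * exp t + g t * exp t)
    (hg : Tendsto g atTop (𝓝 0)) (A : ℝ) : Tendsto (fun t => f t - A * t) atTop atTop := by
  have hexp : Tendsto (fun t => a / 2 * exp t - A * t) atTop atTop := by
    have := tendsto_id.atTop_mul_atTop₀
      ((tendsto_mul_exp_add_div_pow_atTop (a / 2) 0 1 (by positivity)).atTop_add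
        (tendsto_const_nhds (x := -A)))
    refine this.congr' ((eventually_gt_atTop 0).mono fun t ht => ?_)
    simp only [id, pow_one, add_zero]
    field_simp
    ring
  refine tendsto_atTop_mono' _ ?_ hexp
  filter_upwards [hg.eventually (Metric.closedBall_mem_nhds 0 (half_pos ha))] with t ht
  rw [dist_zero_right, Real.norm_eq_abs] at ht
  rw [hf]
  nlinarith [neg_abs_le (g t), exp_pos t]

lemma abs_mul_exp_add_mul_exp_sub_le {b δ m t D : ℝ} (ha : 0 ≤ a) (hb : |b| ≤ δ)
    (hmt : m ≤ t) (htD : t ≤ m + D) :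
    |a * exp t + b * exp t - a * exp m| ≤ (δ * exp D + a * (exp D - 1)) * exp m := by
  have het : exp t ≤ exp D * exp m := by rw [← exp_add, add_comm]; exact exp_le_exp.2 htD
  have hem : exp m ≤ exp t := exp_le_exp.2 hmt
  have hbe : |b * exp t| ≤ δ * exp D * exp m := by
    rw [abs_mul, abs_of_pos (exp_pos t), mul_assoc]
    exact mul_le_mul hb het (exp_pos t).le ((abs_nonneg b).trans hb)
  calc |a * exp t + b * exp t - a * exp m|
      ≤ |b * exp t| + |a * (exp t - exp m)| := by
        rw [show a * exp t + b * exp t - a * exp m = b * exp t + a * (exp t - exp m) by ring]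
        exact abs_add_le _ _
    _ ≤ δ * exp D * exp m + a * (exp D * exp m - exp m) := by
        rw [abs_of_nonneg (mul_nonneg ha (sub_nonneg.2 hem))]
        gcongr
    _ = (δ * exp D + a * (exp D - 1)) * exp m := by ring

end ExpAsymptotics

lemma sum_mul_mul_neg_of_abs_sub_le {ι : Type*} [Fintype ι] {μ h F : ι → ℝ} {A ε : ℝ}
    (hμ : ∀ i, 0 ≤ μ i) (hF : ∀ i, |F i - A| ≤ ε)
    (hneg : A * ∑ i, μ i * h i + ε * ∑ i, μ i * |h i| < 0) :
    ∑ i, μ i * (h i * F i) < 0 := by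
  refine lt_of_le_of_lt ?_ hneg
  rw [mul_sum, mul_sum, ← sum_add_distrib]
  refine sum_le_sum fun i _ => ?_
  have : h i * (F i - A) ≤ |h i| * ε :=
    (le_abs_self _).trans (by rw [abs_mul]; exact mul_le_mul_of_nonneg_left (hF i) (abs_nonneg _))
  nlinarith [mul_le_mul_of_nonneg_left this (hμ i)]

namespace KazdanWarner

variable [Nonempty V] {G : SimpleGraph V} [DecidableRel G.Adj] {μ : V → ℝ} {w : V → V → ℝ}
  {f : ℝ → ℝ} {h : V → ℝ} {c : ℝ}

theorem exists_upper_bound (hconn : G.Connected) (hμ : ∀ x, 0 < μ x)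
    (hwpos : ∀ x y, G.Adj x y → 0 < w x y) (hf : ∀ t, 0 ≤ f t)
    (hsuper : ∀ A, Tendsto (fun t => f t - A * t) atTop atTop) {x₀ : V} (hx₀ : h x₀ ≠ 0)
    (m₀ : ℝ) :
    ∃ S, ∀ u : V → ℝ, (∀ x, graphLaplacian G μ w u x = c - h x * f (u x)) →
      (∀ x, m₀ ≤ u x) → ∀ x, u x ≤ S := by
  obtain ⟨C, hC⟩ := exists_near_max_propagation hconn hμ hwpos
  obtain ⟨L, hL, hΔL⟩ := exists_abs_graphLaplacian_le hμ hwpos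
  obtain ⟨T, hT⟩ : ∃ T, ∀ t ≥ T, ∀ x, h x ≠ 0 →
      |c| + L * (t + C * |c| - m₀) < |h x| * f t := by
    refine eventually_atTop.1 (eventually_all.2 fun x => ?_)
    by_cases hx : h x = 0
    · simp [hx]
    have hlim := (hsuper (L / |h x|)).const_mul_atTop (abs_pos.2 hx)
    filter_upwards [hlim.eventually_gt_atTop (|c| + L * (C * |c| - m₀))] with t ht _
    have hx' := abs_ne_zero.2 hx
    rw [show |h x| * (f t - L / |h x| * t) = |h x| * f t - L * t by field_simp] at ht
    linarith
  refine ⟨T + C * |c|, fun u hu hm₀ x => ?_⟩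
  obtain ⟨xM, hxM⟩ := Finite.exists_max u
  by_contra! hx
  have hnear : ∀ y, u xM - C * |c| ≤ u y → h y = 0 := by
    intro y hy
    by_contra hy0
    have hlin : |h y| * f (u y) ≤ |c| + L * (u xM - m₀) := by
      rw [← abs_of_nonneg (hf (u y)), ← abs_mul,
        show h y * f (u y) = c - graphLaplacian G μ w u y by rw [hu]; ring]
      exact (abs_sub _ _).trans (by linarith [hΔL u m₀ (u xM) hm₀ hxM y])
    have := hT (u y) (by linarith [hxM x]) y hy0
    nlinarith
  refine hx₀ (hnear x₀ (hC u |c| xM (abs_nonneg c) hxM (fun y hy => ?_) x₀))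
  rw [hu, hnear y hy, zero_mul, sub_zero]
  exact neg_abs_le c

theorem exists_lower_bound_of_neg (hμ : ∀ x, 0 < μ x) (hwpos : ∀ x y, G.Adj x y → 0 < w x y)
    (hf : ∀ t, 0 ≤ f t) (hfbot : Tendsto f atBot (𝓝 0)) (hc : c < 0) :
    ∃ m, ∀ u : V → ℝ, (∀ x, graphLaplacian G μ w u x = c - h x * f (u x)) →
      ∀ x, m ≤ u x := by
  obtain ⟨τ, hτ⟩ := exists_forall_abs_mul_lt hfbot h (neg_pos.2 hc)
  refine ⟨τ, fun u hu x => ?_⟩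
  obtain ⟨xm, hxm⟩ := Finite.exists_min u
  refine le_trans ?_ (hxm x)
  by_contra! hlt
  have hΔ := graphLaplacian_nonneg_at_min (hμ xm).le (fun y hy => (hwpos xm y hy).le) hxm
  rw [hu] at hΔ
  nlinarith [hτ (u xm) hlt.le xm, neg_abs_le (h xm), hf (u xm)]

theorem exists_lower_bound_of_pos (hconn : G.Connected) (hμ : ∀ x, 0 < μ x)
    (hwpos : ∀ x y, G.Adj x y → 0 < w x y) (hf : ∀ t, 0 ≤ f t)
    (hfbot : Tendsto f atBot (𝓝 0)) (hc : 0 < c) :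
    ∃ m, ∀ u : V → ℝ, (∀ x, graphLaplacian G μ w u x = c - h x * f (u x)) →
      ∀ x, m ≤ u x := by
  obtain ⟨C, hC⟩ := exists_near_min_propagation hconn hμ hwpos
  obtain ⟨τ, hτ⟩ := exists_forall_abs_mul_lt hfbot h hc
  refine ⟨τ - C * (2 * c), fun u hu x => ?_⟩
  obtain ⟨xm, hxm⟩ := Finite.exists_min u
  refine le_trans ?_ (hxm x)
  by_contra! hlt
  have hlow := hC u (2 * c) xm (by positivity) hxm fun y hy => by
    rw [hu]
    nlinarith [hτ (u y) (by linarith) y, neg_abs_le (h y), hf (u y)]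
  obtain ⟨xM, hxM⟩ := Finite.exists_max u
  have hΔ := graphLaplacian_nonpos_at_max (hμ xM).le (fun y hy => (hwpos xM y hy).le) hxM
  rw [hu] at hΔ
  nlinarith [hτ (u xM) (by linarith [hlow xM]) xM, le_abs_self (h xM), hf (u xM)]

theorem exists_lower_bound_of_eq_zero {g : ℝ → ℝ} {a : ℝ} (hconn : G.Connected)
    (hμ : ∀ x, 0 < μ x) (hwsymm : ∀ x y, w x y = w y x)
    (hwpos : ∀ x y, G.Adj x y → 0 < w x y) (ha : 0 < a)
    (hfg : ∀ t, f t = a * exp t + g t * exp t) (hg : Tendsto g atBot (𝓝 0))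
    (hf : ∀ t, 0 ≤ f t) (hh : ∑ x, μ x * h x < 0) :
    ∃ m, ∀ u : V → ℝ, (∀ x, graphLaplacian G μ w u x = -(h x * f (u x))) →
      ∀ x, m ≤ u x := by
  obtain ⟨C, hC⟩ := exists_near_min_propagation hconn hμ hwpos
  set S := ∑ x, μ x * h x
  set T := ∑ x, μ x * |h x|
  have hT : 0 ≤ T := sum_nonneg fun x _ => mul_nonneg (hμ x).le (abs_nonneg _)
  set ε := -(a * S) / (T + 1)
  have hε : 0 < ε := div_pos (by nlinarith) (by linarith)
  have hεS : a * S + ε * T < 0 := by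
    have := div_mul_cancel₀ (-(a * S)) (by linarith : T + 1 ≠ 0)
    linarith
  obtain ⟨β, hβ, hβε⟩ : ∃ β > 0, ε / 2 * exp (C * β) + a * (exp (C * β) - 1) < ε := by
    have hcont : Tendsto (fun β => ε / 2 * exp (C * β) + a * (exp (C * β) - 1)) (𝓝 0)
        (𝓝 (ε / 2)) := by
      simpa using ((by fun_prop : Continuous fun β =>
        ε / 2 * exp (C * β) + a * (exp (C * β) - 1)).tendsto 0)
    exact (hcont.eventually (gt_mem_nhds (half_lt_self hε))).exists_gt
  obtain ⟨τ₁, hτ₁⟩ : ∃ τ₁, ∀ t ≤ τ₁, |g t| ≤ ε / 2 := eventually_atBot.1 <|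
    (hg.eventually (Metric.closedBall_mem_nhds 0 (half_pos hε))).mono fun t ht => by
      rwa [dist_zero_right, Real.norm_eq_abs] at ht
  obtain ⟨τ₂, hτ₂⟩ := exists_forall_abs_mul_lt (tendsto_atBot_of_eq_exp hfg hg) h hβ
  refine ⟨min τ₁ τ₂ - C * β, fun u hu x => ?_⟩
  obtain ⟨xm, hxm⟩ := Finite.exists_min u
  refine le_trans ?_ (hxm x)
  by_contra! hlt
  have hup := hC u β xm hβ.le hxm fun y hy => by
    rw [hu]
    nlinarith [hτ₂ (u y) (by linarith [min_le_right τ₁ τ₂]) y, neg_abs_le (h y), hf (u y)]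
  have hclose : ∀ z, |f (u z) - a * exp (u xm)| ≤ ε * exp (u xm) := fun z => by
    rw [hfg]
    refine (abs_mul_exp_add_mul_exp_sub_le ha.le
      (hτ₁ (u z) (by linarith [hup z, min_le_left τ₁ τ₂])) (hxm z) (hup z)).trans ?_
    gcongr
  have hneg : ∑ x, μ x * (h x * f (u x)) < 0 :=
    sum_mul_mul_neg_of_abs_sub_le (fun x => (hμ x).le) hclose
      (by nlinarith [exp_pos (u xm)])
  have hzero : ∑ x, μ x * (h x * f (u x)) = 0 := by
    have := sum_mul_graphLaplacian_eq_zero (G := G) (fun x => (hμ x).ne') hwsymm u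
    simp only [hu, mul_neg, sum_neg_distrib, neg_eq_zero] at this
    exact this
  linarith

end KazdanWarner

end

open KazdanWarner in
theorem stmt0_general {V : Type*} [Fintype V] [Nonempty V]
    (G : SimpleGraph V) [DecidableRel G.Adj] (hconn : G.Connected)
    (μ : V → ℝ) (hμ : ∀ x, 0 < μ x)
    (w : V → V → ℝ) (hwsymm : ∀ x y, w x y = w y x)
    (hwpos : ∀ x y, G.Adj x y → 0 < w x y)
    (f g : ℝ → ℝ) (a : ℝ) (ha : 0 < a)
    (hf : ∀ t, f t = a * Real.exp t + g t * Real.exp t)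
    (hgtop : Filter.Tendsto g Filter.atTop (nhds 0))
    (hgbot : Filter.Tendsto g Filter.atBot (nhds 0))
    (hfpos : ∀ t, 0 < f t)
    (h : V → ℝ) (c : ℝ)
    (hcpos : 0 < c → ∃ x₀, 0 < h x₀)
    (hczero : c = 0 → (∃ x, 0 < h x) ∧ (∃ x, h x < 0) ∧ ∑ x, μ x * h x < 0)
    (hcneg : c < 0 → ∃ x₀, h x₀ < 0) :
    ∃ C : ℝ, ∀ u : V → ℝ,
      (∀ x, -((1 / μ x) * ∑ y ∈ G.neighborFinset x, w x y * (u y - u x))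
          = h x * f (u x) - c) →
      ∀ x, |u x| ≤ C := by
  have hfnn : ∀ t, 0 ≤ f t := fun t => (hfpos t).le
  have hfbot := tendsto_atBot_of_eq_exp hf hgbot
  obtain ⟨m, x₀, hx₀, hm⟩ : ∃ m x₀, h x₀ ≠ 0 ∧ ∀ u : V → ℝ,
      (∀ x, graphLaplacian G μ w u x = c - h x * f (u x)) → ∀ x, m ≤ u x := by
    rcases lt_trichotomy c 0 with hc | rfl | hc
    · obtain ⟨x₀, hx₀⟩ := hcneg hc
      obtain ⟨m, hm⟩ := exists_lower_bound_of_neg hμ hwpos hfnn hfbot hc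
      exact ⟨m, x₀, hx₀.ne, hm⟩
    · obtain ⟨⟨x₀, hx₀⟩, -, hsum⟩ := hczero rfl
      obtain ⟨m, hm⟩ :=
        exists_lower_bound_of_eq_zero hconn hμ hwsymm hwpos ha hf hgbot hfnn hsum
      exact ⟨m, x₀, hx₀.ne', fun u hu => hm u fun x => by rw [hu, zero_sub]⟩
    · obtain ⟨x₀, hx₀⟩ := hcpos hc
      obtain ⟨m, hm⟩ := exists_lower_bound_of_pos hconn hμ hwpos hfnn hfbot hc
      exact ⟨m, x₀, hx₀.ne', hm⟩
  obtain ⟨S, hS⟩ := exists_upper_bound hconn hμ hwpos hfnn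
    (tendsto_sub_mul_atTop_of_eq_exp ha hf hgtop) hx₀ m
  refine ⟨max S (-m), fun u hu x => ?_⟩
  have hsol : ∀ x, graphLaplacian G μ w u x = c - h x * f (u x) := fun x => by
    rw [graphLaplacian]
    linarith [hu x]
  exact abs_le.2 ⟨by linarith [le_max_right S (-m), hm u hsol x],
    (hS u hsol (hm u hsol) x).trans (le_max_left _ _)⟩

/-- Uniform a priori bound for solutions of the Kazdan-Warner type
equation `-Δu = h f(u) - c` on a finite connected graph, where
`f(t) = a e^t + g(t) e^t` with `a > 0`, `g` bounded, `g(t) → 0` as `t → ±∞`,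
and `f > 0`. -/
theorem stmt0 {V : Type*} [Fintype V] [Nonempty V]
    (G : SimpleGraph V) [DecidableRel G.Adj] (hconn : G.Connected)
    (μ : V → ℝ) (hμ : ∀ x, 0 < μ x)
    (w : V → V → ℝ) (hwsymm : ∀ x y, w x y = w y x)
    (hwpos : ∀ x y, G.Adj x y → 0 < w x y)
    (f g : ℝ → ℝ) (a : ℝ) (ha : 0 < a)
    (hf : ∀ t, f t = a * Real.exp t + g t * Real.exp t)
    (hgbdd : ∃ M : ℝ, ∀ t, |g t| ≤ M)
    (hgtop : Filter.Tendsto g Filter.atTop (nhds 0))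
    (hgbot : Filter.Tendsto g Filter.atBot (nhds 0))
    (hfpos : ∀ t, 0 < f t)
    (h : V → ℝ) (c : ℝ)
    (hcpos : 0 < c → ∃ x₀, 0 < h x₀)
    (hczero : c = 0 → (∃ x, 0 < h x) ∧ (∃ x, h x < 0) ∧ ∑ x, μ x * h x < 0)
    (hcneg : c < 0 → ∃ x₀, h x₀ < 0) :
    ∃ C : ℝ, ∀ u : V → ℝ,
      (∀ x, -((1 / μ x) * ∑ y ∈ G.neighborFinset x, w x y * (u y - u x))
          = h x * f (u x) - c) →
      ∀ x, |u x| ≤ C :=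
  stmt0_general G hconn μ hμ w hwsymm hwpos f g a ha hf hgtop hgbot hfpos h c hcpos hczero hcneg
end

section
/- Let G=(V,E) be a finite connected graph with positive vertex measure μ and positive symmetric edge weights w. Let f:ℝ→ℝ satisfy f(t)=a e^t+g(t)e^t with a>0 a constant, g uniformly bounded on ℝ, g(t)→0 as t→±∞, and f(t)>0 for all t. Suppose c_n→c in ℝ and h_n(x)→h(x) for every x∈V, and u_n:V→ℝ is a sequence of solutions of −Δu_n = h_n(x) f(u_n(x)) − c_n on V. Then, after passing to a subsequence, one of the following alternatives holds: (1) u_n is uniformly bounded on V; or (2) u_n converges to −∞ uniformly on V; or (3) there exists x₀∈V such that h(x₀)=0 and u_n(x₀)→+∞; moreover in case (3) the sequence u_n is uniformly bounded on the set {x∈V : h(x)>0} and is uniformly bounded from below on all of V. -/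
/-!
Pass to a subsequence along which every `uₙ(x)` converges in `[-∞, +∞]`. Summing the equation
`μ(x) (hₙ f(uₙ) - cₙ)(x) = ∑_{y ∼ x} w_{xy} (uₙ(x) - uₙ(y))` over a vertex set `S` cancels all
edges inside `S` and leaves only the flux through its boundary. For `S = {uₙ → -∞}` the left side
stays bounded (`f → 0` at `-∞`) while, by connectedness, a proper nonempty `S` has a boundary edge
whose flux tends to `-∞`; so `S` is empty or everything. If `S` is empty, at a vertex with
`uₙ → +∞` the left side grows like `h e^{uₙ}` while the right side is `O(uₙ)`, forcing `h ≤ 0`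
there; and if `h < 0` on all of `{uₙ → +∞}`, the left side over that set tends to `-∞` while its
outgoing flux is eventually nonnegative.
-/

open Filter Finset Topology

def HasExtendedLimit {α : Type*} (s : α → ℝ) (l : Filter α) : Prop :=
  Tendsto s l atBot ∨ (∃ r, Tendsto s l (𝓝 r)) ∨ Tendsto s l atTop

namespace HasExtendedLimit

variable {α : Type*} {s : α → ℝ} {l : Filter α}

theorem of_tendsto_coe_ereal {L : EReal} (hs : Tendsto (fun k => (s k : EReal)) l (𝓝 L)) :
    HasExtendedLimit s l := by
  induction L using EReal.rec with
  | bot =>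
    refine Or.inl (tendsto_atBot.2 fun r => ?_)
    exact (EReal.tendsto_nhds_bot_iff_real.1 hs r).mono fun k hk =>
      (EReal.coe_lt_coe_iff.1 hk).le
  | coe r => exact Or.inr (Or.inl ⟨r, EReal.tendsto_coe.1 hs⟩)
  | top =>
    refine Or.inr (Or.inr (tendsto_atTop.2 fun r => ?_))
    exact (EReal.tendsto_nhds_top_iff_real.1 hs r).mono fun k hk =>
      (EReal.coe_lt_coe_iff.1 hk).le

theorem exists_eventually_ge (hs : HasExtendedLimit s l) (hbot : ¬Tendsto s l atBot) :
    ∃ r, ∀ᶠ k in l, r ≤ s k := by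
  rcases hs with hs | ⟨r, hs⟩ | hs
  · exact absurd hs hbot
  · exact ⟨r - 1, hs.eventually_const_le (sub_one_lt r)⟩
  · exact ⟨0, hs.eventually_ge_atTop 0⟩

theorem exists_eventually_le (hs : HasExtendedLimit s l) (htop : ¬Tendsto s l atTop) :
    ∃ r, ∀ᶠ k in l, s k ≤ r := by
  rcases hs with hs | ⟨r, hs⟩ | hs
  · exact ⟨0, hs.eventually_le_atBot 0⟩
  · exact ⟨r + 1, hs.eventually_le_const (lt_add_one r)⟩
  · exact absurd hs htop

theorem exists_tendsto (hs : HasExtendedLimit s l) (hbot : ¬Tendsto s l atBot)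
    (htop : ¬Tendsto s l atTop) : ∃ r, Tendsto s l (𝓝 r) := by
  rcases hs with hs | hs | hs
  exacts [absurd hs hbot, hs, absurd hs htop]

end HasExtendedLimit

theorem exists_strictMono_forall_hasExtendedLimit {V : Type*} [Finite V] (u : ℕ → V → ℝ) :
    ∃ φ : ℕ → ℕ, StrictMono φ ∧ ∀ x, HasExtendedLimit (fun k => u (φ k) x) atTop := by
  obtain ⟨L, -, φ, hφ, hL⟩ :=
    isCompact_univ.tendsto_subseq (x := fun k x => (u k x : EReal)) fun _ => Set.mem_univ _
  exact ⟨φ, hφ, fun x => .of_tendsto_coe_ereal (tendsto_pi_nhds.1 hL x)⟩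

theorem exists_forall_abs_le_of_tendsto {s : ℕ → ℝ} {r : ℝ} (hs : Tendsto s atTop (𝓝 r)) :
    ∃ C, ∀ k, |s k| ≤ C := by
  obtain ⟨C, hC⟩ := isBounded_iff_forall_norm_le.1 (Metric.isBounded_range_of_tendsto s hs)
  exact ⟨C, fun k => hC _ ⟨k, rfl⟩⟩

theorem exists_forall_ge_of_eventually_ge {s : ℕ → ℝ} {r : ℝ} (hs : ∀ᶠ k in atTop, r ≤ s k) :
    ∃ C, ∀ k, C ≤ s k := by
  obtain ⟨C, hC⟩ := (isBoundedUnder_of_eventually_ge hs).bddBelow_range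
  exact ⟨C, fun k => hC ⟨k, rfl⟩⟩

theorem Finite.exists_forall_le_of_forall_exists {ι V : Type*} [Finite V] {s : ι → V → ℝ}
    (hs : ∀ x, ∃ C, ∀ k, s k x ≤ C) : ∃ C, ∀ k x, s k x ≤ C := by
  choose C hC using hs
  obtain ⟨M, hM⟩ := Finite.exists_le C
  exact ⟨M, fun k x => (hC x k).trans (hM x)⟩

theorem Filter.tendsto_finset_sum_atBot {ι β M : Type*} [AddCommMonoid M] [Preorder M]
    [IsOrderedAddMonoid M] {l : Filter β} {s : Finset ι} {F : ι → β → M} (hs : s.Nonempty)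
    (hF : ∀ i ∈ s, Tendsto (F i) l atBot) : Tendsto (fun b => ∑ i ∈ s, F i b) l atBot := by
  induction hs using Finset.Nonempty.cons_induction with
  | singleton i => simpa using hF i (mem_singleton_self i)
  | cons i s hi hs ih =>
    simp only [sum_cons]
    exact (hF i (mem_cons_self i s)).atBot_add_atBot (ih fun j hj => hF j (mem_cons_of_mem hj))

theorem SimpleGraph.sum_sum_neighborFinset_eq_sum_sigma_sdiff {V : Type*} [Fintype V]
    [DecidableEq V] (G : SimpleGraph V) [DecidableRel G.Adj] {w : V → V → ℝ}
    (hw : ∀ x y, w x y = w y x) (v : V → ℝ) (S : Finset V) :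
    ∑ x ∈ S, ∑ y ∈ G.neighborFinset x, w x y * (v x - v y) =
      ∑ p ∈ S.sigma fun x => G.neighborFinset x \ S, w p.1 p.2 * (v p.1 - v p.2) := by
  have hinside : ∑ x ∈ S, ∑ y ∈ G.neighborFinset x ∩ S, w x y * (v x - v y) = 0 := by
    have hswap := Finset.sum_comm' (s := S) (t := fun x => G.neighborFinset x ∩ S) (t' := S)
      (s' := fun y => G.neighborFinset y ∩ S) (f := fun x y => w x y * (v x - v y))
      (fun x y => by simp only [mem_inter, SimpleGraph.mem_neighborFinset, G.adj_comm x y]; tauto)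
    have hanti : ∑ y ∈ S, ∑ x ∈ G.neighborFinset y ∩ S, w x y * (v x - v y) =
        -∑ x ∈ S, ∑ y ∈ G.neighborFinset x ∩ S, w x y * (v x - v y) := by
      simp only [← sum_neg_distrib]
      exact sum_congr rfl fun y _ => sum_congr rfl fun x _ => by rw [hw]; ring
    linarith
  calc ∑ x ∈ S, ∑ y ∈ G.neighborFinset x, w x y * (v x - v y)
      = ∑ x ∈ S, (∑ y ∈ G.neighborFinset x ∩ S, w x y * (v x - v y) +
          ∑ y ∈ G.neighborFinset x \ S, w x y * (v x - v y)) :=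
        sum_congr rfl fun x _ => (sum_inter_add_sum_sdiff _ _ _).symm
    _ = _ := by rw [sum_add_distrib, hinside, zero_add, sum_sigma]

section ExpProfile

variable {f g : ℝ → ℝ} {a : ℝ}

theorem tendsto_atBot_nhds_zero_of_eq_exp (hf : ∀ t, f t = a * Real.exp t + g t * Real.exp t)
    (hg : Tendsto g atBot (𝓝 0)) : Tendsto f atBot (𝓝 0) := by
  have hlim := (tendsto_const_nhds (x := a)).add hg |>.mul Real.tendsto_exp_atBot
  rw [mul_zero] at hlim
  exact hlim.congr fun t => by rw [hf, add_mul]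

theorem eventually_affine_lt_mul_of_eq_exp (ha : 0 < a)
    (hf : ∀ t, f t = a * Real.exp t + g t * Real.exp t) (hg : Tendsto g atTop (𝓝 0))
    {b : ℝ} (hb : 0 < b) (K d : ℝ) : ∀ᶠ t in atTop, K * t + d < b * f t := by
  have hexp := (Real.tendsto_mul_exp_add_div_pow_atTop (b * (a / 2)) (-d) 1
    (by positivity)).eventually_gt_atTop K
  filter_upwards [hexp, hg.eventually_const_lt (neg_lt_zero.2 (half_pos ha)),
    eventually_gt_atTop 0] with t hexp hgt ht
  rw [pow_one, lt_div_iff₀ ht] at hexp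
  have hf_ge : a / 2 * Real.exp t ≤ f t := by
    rw [hf]; nlinarith [Real.exp_pos t]
  nlinarith [mul_le_mul_of_nonneg_left hf_ge hb.le]

end ExpProfile

section Alternatives

variable {V : Type*} [Fintype V] {G : SimpleGraph V} [DecidableRel G.Adj]
  {μ : V → ℝ} {w : V → V → ℝ} {f : ℝ → ℝ} {h : V → ℝ} {hseq : ℕ → V → ℝ} {c : ℝ}
  {cseq : ℕ → ℝ} {u : ℕ → V → ℝ}

theorem forall_tendsto_atBot_of_exists (hconn : G.Connected) (hw : ∀ x y, w x y = w y x)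
    (hwpos : ∀ x y, G.Adj x y → 0 < w x y) (hf : Tendsto f atBot (𝓝 0))
    (hh : ∀ x, Tendsto (fun k => hseq k x) atTop (𝓝 (h x))) (hc : Tendsto cseq atTop (𝓝 c))
    (hu : ∀ k x, μ x * (hseq k x * f (u k x) - cseq k) =
      ∑ y ∈ G.neighborFinset x, w x y * (u k x - u k y))
    (hlim : ∀ x, HasExtendedLimit (fun k => u k x) atTop)
    (hex : ∃ x, Tendsto (fun k => u k x) atTop atBot) :
    ∀ x, Tendsto (fun k => u k x) atTop atBot := by
  classical
  by_contra! hnot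
  obtain ⟨x₀, hx₀⟩ := hex
  obtain ⟨y₀, hy₀⟩ := hnot
  set A := univ.filter fun x => Tendsto (fun k => u k x) atTop atBot
  obtain ⟨⟨⟨x₁, y₁⟩, hadj⟩, -, hx₁, hy₁⟩ := (hconn x₀ y₀).some.exists_boundary_dart (A : Set V)
    (by simpa [A] using hx₀) (by simpa [A] using hy₀)
  have hlhs : Tendsto (fun k => ∑ x ∈ A, μ x * (hseq k x * f (u k x) - cseq k)) atTop
      (𝓝 (∑ x ∈ A, μ x * (h x * 0 - c))) :=
    tendsto_finsetSum _ fun x hx =>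
      (((hh x).mul (hf.comp (mem_filter.1 hx).2)).sub hc).const_mul _
  have hrhs : Tendsto (fun k => ∑ p ∈ A.sigma fun x => G.neighborFinset x \ A,
      w p.1 p.2 * (u k p.1 - u k p.2)) atTop atBot := by
    refine tendsto_finset_sum_atBot ⟨⟨x₁, y₁⟩, by simp_all [A]⟩ fun p hp => ?_
    rw [Finset.mem_sigma, Finset.mem_sdiff, SimpleGraph.mem_neighborFinset] at hp
    obtain ⟨hp₁, hadj, hp₂⟩ := hp
    simp only [A, mem_filter, mem_univ, true_and] at hp₁ hp₂
    obtain ⟨r, hr⟩ := (hlim p.2).exists_eventually_ge hp₂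
    refine (tendsto_atBot_mono' _ ?_ (tendsto_atBot_add_const_right _ (-r) hp₁)).const_mul_atBot
      (hwpos _ _ hadj)
    filter_upwards [hr] with k hk
    linarith
  refine not_tendsto_atBot_of_tendsto_nhds hlhs ?_
  simpa only [hu, G.sum_sum_neighborFinset_eq_sum_sigma_sdiff hw] using hrhs

theorem nonpos_of_tendsto_atTop {x : V} (hμ : 0 < μ x) (hwpos : ∀ x y, G.Adj x y → 0 < w x y)
    (hfpos : ∀ t, 0 < f t) (hfsuper : ∀ b > 0, ∀ K d, ∀ᶠ t in atTop, K * t + d < b * f t)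
    (hh : Tendsto (fun k => hseq k x) atTop (𝓝 (h x))) (hc : Tendsto cseq atTop (𝓝 c))
    (hu : ∀ k, μ x * (hseq k x * f (u k x) - cseq k) =
      ∑ y ∈ G.neighborFinset x, w x y * (u k x - u k y))
    (hlow : ∀ y, ∃ r, ∀ᶠ k in atTop, r ≤ u k y) (hx : Tendsto (fun k => u k x) atTop atTop) :
    h x ≤ 0 := by
  by_contra! hpos
  choose r hr using hlow
  set K := ∑ y ∈ G.neighborFinset x, w x y
  set d := ∑ y ∈ G.neighborFinset x, w x y * r y
  obtain ⟨k, hrk, hhk, hck, hfk⟩ : ∃ k, (∀ y ∈ G.neighborFinset x, r y ≤ u k y) ∧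
      h x / 2 ≤ hseq k x ∧ cseq k ≤ c + 1 ∧
      K * u k x + (μ x * (c + 1) - d) < μ x * (h x / 2) * f (u k x) :=
    ((eventually_all_finset _).2 fun y _ => hr y).and
      ((hh.eventually_const_le (half_lt_self hpos)).and
        ((hc.eventually_le_const (lt_add_one c)).and
          (hx.eventually (hfsuper _ (by positivity) K _)))) |>.exists
  have hupper : μ x * (hseq k x * f (u k x) - cseq k) ≤ K * u k x - d := by
    rw [hu k]
    calc ∑ y ∈ G.neighborFinset x, w x y * (u k x - u k y)
        ≤ ∑ y ∈ G.neighborFinset x, w x y * (u k x - r y) :=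
          sum_le_sum fun y hy => mul_le_mul_of_nonneg_left (by linarith [hrk y hy])
            (hwpos x y ((G.mem_neighborFinset x y).1 hy)).le
      _ = K * u k x - d := by simp only [K, d, mul_sub, sum_sub_distrib, sum_mul]
  have hlower : μ x * (h x / 2) * f (u k x) - μ x * (c + 1) ≤
      μ x * (hseq k x * f (u k x) - cseq k) := by
    have := mul_le_mul_of_nonneg_right hhk (hfpos (u k x)).le
    nlinarith
  linarith

theorem exists_eq_zero_of_tendsto_atTop (hμ : ∀ x, 0 < μ x) (hw : ∀ x y, w x y = w y x)
    (hwpos : ∀ x y, G.Adj x y → 0 < w x y) (hf : Tendsto f atTop atTop)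
    (hh : ∀ x, Tendsto (fun k => hseq k x) atTop (𝓝 (h x))) (hc : Tendsto cseq atTop (𝓝 c))
    (hu : ∀ k x, μ x * (hseq k x * f (u k x) - cseq k) =
      ∑ y ∈ G.neighborFinset x, w x y * (u k x - u k y))
    (hlim : ∀ x, HasExtendedLimit (fun k => u k x) atTop)
    (hnonpos : ∀ x, Tendsto (fun k => u k x) atTop atTop → h x ≤ 0)
    (hex : ∃ x, Tendsto (fun k => u k x) atTop atTop) :
    ∃ x, h x = 0 ∧ Tendsto (fun k => u k x) atTop atTop := by
  classical
  by_contra! hne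
  obtain ⟨x₀, hx₀⟩ := hex
  set C := univ.filter fun x => Tendsto (fun k => u k x) atTop atTop
  have hlhs : Tendsto (fun k => ∑ x ∈ C, μ x * (hseq k x * f (u k x) - cseq k)) atTop atBot := by
    refine tendsto_finset_sum_atBot ⟨x₀, by simpa [C] using hx₀⟩ fun x hx => ?_
    replace hx : Tendsto (fun k => u k x) atTop atTop := by simpa [C] using hx
    have hneg : h x < 0 := (hnonpos x hx).lt_of_ne fun h0 => hne x h0 hx
    simpa only [sub_eq_add_neg, Function.comp_apply] using
      (((hh x).neg_mul_atTop hneg (hf.comp hx)).atBot_add hc.neg).const_mul_atBot (hμ x)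
  have hrhs : ∀ᶠ k in atTop, 0 ≤ ∑ p ∈ C.sigma fun x => G.neighborFinset x \ C,
      w p.1 p.2 * (u k p.1 - u k p.2) := by
    refine ((eventually_all_finset _).2 fun p hp => ?_).mono fun k hk => sum_nonneg hk
    rw [Finset.mem_sigma, Finset.mem_sdiff, SimpleGraph.mem_neighborFinset] at hp
    obtain ⟨hp₁, hadj, hp₂⟩ := hp
    simp only [C, mem_filter, mem_univ, true_and] at hp₁ hp₂
    obtain ⟨r, hr⟩ := (hlim p.2).exists_eventually_le hp₂
    filter_upwards [hr, hp₁.eventually_ge_atTop r] with k hk₂ hk₁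
    exact mul_nonneg (hwpos _ _ hadj).le (by linarith)
  obtain ⟨k, hk⟩ := ((hlhs.eventually_lt_atBot 0).and hrhs).exists
  simp only [hu, G.sum_sum_neighborFinset_eq_sum_sigma_sdiff hw] at hk
  linarith [hk.1, hk.2]

theorem alternatives_of_forall_hasExtendedLimit (hconn : G.Connected) (hμ : ∀ x, 0 < μ x)
    (hw : ∀ x y, w x y = w y x) (hwpos : ∀ x y, G.Adj x y → 0 < w x y)
    (hfpos : ∀ t, 0 < f t) (hf₀ : Tendsto f atBot (𝓝 0))
    (hfsuper : ∀ b > 0, ∀ K d, ∀ᶠ t in atTop, K * t + d < b * f t)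
    (hh : ∀ x, Tendsto (fun k => hseq k x) atTop (𝓝 (h x))) (hc : Tendsto cseq atTop (𝓝 c))
    (hu : ∀ k x, μ x * (hseq k x * f (u k x) - cseq k) =
      ∑ y ∈ G.neighborFinset x, w x y * (u k x - u k y))
    (hlim : ∀ x, HasExtendedLimit (fun k => u k x) atTop) :
    (∃ C : ℝ, ∀ k x, |u k x| ≤ C) ∨
      (∀ M : ℝ, ∃ N : ℕ, ∀ k ≥ N, ∀ x, u k x < M) ∨
      (∃ x₀, h x₀ = 0 ∧ Tendsto (fun k => u k x₀) atTop atTop ∧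
        (∃ C : ℝ, ∀ k x, 0 < h x → |u k x| ≤ C) ∧ (∃ C : ℝ, ∀ k x, -C ≤ u k x)) := by
  by_cases hbot : ∃ x, Tendsto (fun k => u k x) atTop atBot
  · have hall := forall_tendsto_atBot_of_exists hconn hw hwpos hf₀ hh hc hu hlim hbot
    exact Or.inr (Or.inl fun M =>
      eventually_atTop.1 (eventually_all.2 fun x => (hall x).eventually_lt_atBot M))
  push Not at hbot
  have hlow x : ∃ r, ∀ᶠ k in atTop, r ≤ u k x := (hlim x).exists_eventually_ge (hbot x)
  have hbdd x (htop : ¬Tendsto (fun k => u k x) atTop atTop) : ∃ C, ∀ k, |u k x| ≤ C :=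
    let ⟨_, hr⟩ := (hlim x).exists_tendsto (hbot x) htop
    exists_forall_abs_le_of_tendsto hr
  by_cases htop : ∃ x, Tendsto (fun k => u k x) atTop atTop
  · have hnonpos x : Tendsto (fun k => u k x) atTop atTop → h x ≤ 0 :=
      nonpos_of_tendsto_atTop (hμ x) hwpos hfpos hfsuper (hh x) hc (hu · x) hlow
    have hftop : Tendsto f atTop atTop :=
      tendsto_atTop_mono' _ ((hfsuper 1 one_pos 1 0).mono fun t ht => show t ≤ f t by linarith)
        tendsto_id
    obtain ⟨x₀, hx₀, hx₀top⟩ :=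
      exists_eq_zero_of_tendsto_atTop hμ hw hwpos hftop hh hc hu hlim hnonpos htop
    obtain ⟨Cpos, hCpos⟩ := Finite.exists_forall_le_of_forall_exists
      (s := fun k (x : {x // 0 < h x}) => |u k x|) fun x =>
        hbdd x fun hx => (hnonpos x hx).not_gt x.2
    have hbddBelow x : ∃ C, ∀ k, -u k x ≤ C := by
      obtain ⟨r, hr⟩ := hlow x
      obtain ⟨C, hC⟩ := exists_forall_ge_of_eventually_ge hr
      exact ⟨-C, fun k => neg_le_neg (hC k)⟩
    obtain ⟨Cneg, hCneg⟩ := Finite.exists_forall_le_of_forall_exists hbddBelow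
    exact Or.inr (Or.inr ⟨x₀, hx₀, hx₀top, ⟨Cpos, fun k x hx => hCpos k ⟨x, hx⟩⟩,
      ⟨Cneg, fun k x => neg_le.1 (hCneg k x)⟩⟩)
  · push Not at htop
    exact Or.inl (Finite.exists_forall_le_of_forall_exists fun x => hbdd x (htop x))

end Alternatives

theorem stmt1_general {V : Type*} [Fintype V]
    (G : SimpleGraph V) [DecidableRel G.Adj] (hconn : G.Connected)
    (μ : V → ℝ) (hμ : ∀ x, 0 < μ x)
    (w : V → V → ℝ) (hwsymm : ∀ x y, w x y = w y x)
    (hwpos : ∀ x y, G.Adj x y → 0 < w x y)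
    (f g : ℝ → ℝ) (a : ℝ) (ha : 0 < a)
    (hf : ∀ t, f t = a * Real.exp t + g t * Real.exp t)
    (hgtop : Filter.Tendsto g Filter.atTop (nhds 0))
    (hgbot : Filter.Tendsto g Filter.atBot (nhds 0))
    (hfpos : ∀ t, 0 < f t)
    (c : ℝ) (cseq : ℕ → ℝ) (hc : Filter.Tendsto cseq Filter.atTop (nhds c))
    (h : V → ℝ) (hseq : ℕ → V → ℝ)
    (hh : ∀ x, Filter.Tendsto (fun k => hseq k x) Filter.atTop (nhds (h x)))
    (u : ℕ → V → ℝ)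
    (hu : ∀ k x, -((1 / μ x) * ∑ y ∈ G.neighborFinset x, w x y * (u k y - u k x))
        = hseq k x * f (u k x) - cseq k) :
    ∃ φ : ℕ → ℕ, StrictMono φ ∧
      ((∃ C : ℝ, ∀ k x, |u (φ k) x| ≤ C) ∨
       (∀ M : ℝ, ∃ N : ℕ, ∀ k ≥ N, ∀ x, u (φ k) x < M) ∨
       (∃ x₀, h x₀ = 0 ∧
          Filter.Tendsto (fun k => u (φ k) x₀) Filter.atTop Filter.atTop ∧
          (∃ C : ℝ, ∀ k x, 0 < h x → |u (φ k) x| ≤ C) ∧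
          (∃ C : ℝ, ∀ k x, -C ≤ u (φ k) x))) := by
  obtain ⟨φ, hφ, hlim⟩ := exists_strictMono_forall_hasExtendedLimit u
  have hflux k x : μ x * (hseq (φ k) x * f (u (φ k) x) - cseq (φ k)) =
      ∑ y ∈ G.neighborFinset x, w x y * (u (φ k) x - u (φ k) y) := by
    rw [← hu, mul_neg, ← mul_assoc, mul_one_div_cancel (hμ x).ne', one_mul, ← sum_neg_distrib]
    exact sum_congr rfl fun y _ => by ring
  exact ⟨φ, hφ, alternatives_of_forall_hasExtendedLimit hconn hμ hwsymm hwpos hfpos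
    (tendsto_atBot_nhds_zero_of_eq_exp hf hgbot)
    (fun _ hb => eventually_affine_lt_mul_of_eq_exp ha hf hgtop hb)
    (fun x => (hh x).comp hφ.tendsto_atTop) (hc.comp hφ.tendsto_atTop) hflux hlim⟩

/-- Brezis-Merle type alternative for sequences of solutions of
`-Δuₙ = hₙ f(uₙ) - cₙ` on a finite connected graph: after passing to a
subsequence, either `uₙ` is uniformly bounded, or `uₙ → -∞` uniformly, or there
is `x₀` with `h(x₀) = 0`, `uₙ(x₀) → +∞`, `uₙ` uniformly bounded on
`{h > 0}` and uniformly bounded from below on `V`. -/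
theorem stmt1 {V : Type*} [Fintype V] [Nonempty V]
    (G : SimpleGraph V) [DecidableRel G.Adj] (hconn : G.Connected)
    (μ : V → ℝ) (hμ : ∀ x, 0 < μ x)
    (w : V → V → ℝ) (hwsymm : ∀ x y, w x y = w y x)
    (hwpos : ∀ x y, G.Adj x y → 0 < w x y)
    (f g : ℝ → ℝ) (a : ℝ) (ha : 0 < a)
    (hf : ∀ t, f t = a * Real.exp t + g t * Real.exp t)
    (hgbdd : ∃ M : ℝ, ∀ t, |g t| ≤ M)
    (hgtop : Filter.Tendsto g Filter.atTop (nhds 0))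
    (hgbot : Filter.Tendsto g Filter.atBot (nhds 0))
    (hfpos : ∀ t, 0 < f t)
    (c : ℝ) (cseq : ℕ → ℝ) (hc : Filter.Tendsto cseq Filter.atTop (nhds c))
    (h : V → ℝ) (hseq : ℕ → V → ℝ)
    (hh : ∀ x, Filter.Tendsto (fun k => hseq k x) Filter.atTop (nhds (h x)))
    (u : ℕ → V → ℝ)
    (hu : ∀ k x, -((1 / μ x) * ∑ y ∈ G.neighborFinset x, w x y * (u k y - u k x))
        = hseq k x * f (u k x) - cseq k) :
    ∃ φ : ℕ → ℕ, StrictMono φ ∧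
      ((∃ C : ℝ, ∀ k x, |u (φ k) x| ≤ C) ∨
       (∀ M : ℝ, ∃ N : ℕ, ∀ k ≥ N, ∀ x, u (φ k) x < M) ∨
       (∃ x₀, h x₀ = 0 ∧
          Filter.Tendsto (fun k => u (φ k) x₀) Filter.atTop Filter.atTop ∧
          (∃ C : ℝ, ∀ k x, 0 < h x → |u (φ k) x| ≤ C) ∧
          (∃ C : ℝ, ∀ k x, -C ≤ u (φ k) x))) :=
  stmt1_general G hconn μ hμ w hwsymm hwpos f g a ha hf hgtop hgbot hfpos c cseq hc h hseq hh u hu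
end

section
/- Let G=(V,E) be a finite connected graph with positive vertex measure μ and positive symmetric edge weights w. Let f:ℝ→ℝ satisfy f(t)=a e^t+g(t)e^t with a>0 a constant, g uniformly bounded on ℝ, g(t)→0 as t→±∞, and f(t)>0 for all t. Fix A>0. Then there exists a constant C=C(A,G,f)≥0 such that for every h:V→ℝ and c∈ℝ satisfying (1) max_V(|h|+|c|)≤A, (2) h(x)>0 for some x∈V implies h(x)≥A^{−1}, (3) c>0 implies c≥A^{−1}, (4) c=0 implies ∫_V h dμ ≤ −A^{−1}, (5) c<0 implies c≤−A^{−1} and min_V h ≤ −A^{−1}, every solution u:V→ℝ of −Δu = h(x) f(u) − c satisfies max_{x∈V}|u(x)| ≤ C. -/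
/-!
Write the equation as `μ(x) (-Δu)(x) = μ(x) (h(x) f(u(x)) - c)`; summing over `V` gives
`∫ h f(u) dμ = c μ(V)`. The main tool is a Harnack chain estimate: if `u` is maximal at `x₀`
and `μ (-Δu) ≤ β` on a set `Ω`, then along a path from `x₀` the values of `u` stay within `β Γ`
of the maximum until the path leaves `Ω`, with `Γ` depending only on the weighted graph.

* `max u` is bounded below: otherwise `|c| ≤ A sup |f(u)|` forces `c = 0`, the chain estimate
  makes `u` almost constant, so `f(u) ≈ a e^{max u}` and `∫ h f(u) dμ ≈ a e^{max u} ∫ h dμ < 0`.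
* `min u` is bounded below: apply the chain estimate to `-u` on `{u ≤ 0}`, where `f(u)` is
  bounded, from the minimum to the maximum.
* Where `h ≥ A⁻¹`, the equation bounds `f(u)` linearly in `u`, hence bounds `u`.
* `max u` is bounded above: chain from the maximum through `{h ≤ 0}` to a vertex with `h > 0`,
  or, if `h ≤ 0` everywhere, to a vertex with `h ≤ -A⁻¹`, where `∫ h f(u) dμ = c μ(V) ≥ -A μ(V)`
  bounds `f(u)`.
-/

open Finset Filter Real Topology Asymptotics

namespace SimpleGraph

variable {V : Type*} [Fintype V] {G : SimpleGraph V} [DecidableRel G.Adj] {w : V → V → ℝ}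

variable (G) in
/-- `μ(x) (-Δu)(x)`, for the Laplacian `Δ` with edge weights `w` and vertex measure `μ`. -/
def weightedLap (w : V → V → ℝ) (u : V → ℝ) (x : V) : ℝ :=
  ∑ y ∈ G.neighborFinset x, w x y * (u x - u y)

lemma mul_neg_laplacian_eq_weightedLap {μ : ℝ} (hμ : μ ≠ 0) (u : V → ℝ) (x : V) :
    μ * -((1 / μ) * ∑ y ∈ G.neighborFinset x, w x y * (u y - u x)) = G.weightedLap w u x := by
  rw [weightedLap, mul_neg, ← mul_assoc, mul_one_div_cancel hμ, one_mul, ← sum_neg_distrib]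
  exact sum_congr rfl fun y _ => by ring

lemma weightedLap_neg (u : V → ℝ) (x : V) : G.weightedLap w (-u) x = -G.weightedLap w u x := by
  rw [weightedLap, weightedLap, ← sum_neg_distrib]
  exact sum_congr rfl fun y _ => by simp only [Pi.neg_apply]; ring

lemma sum_weightedLap_eq_zero (hw : ∀ x y, w x y = w y x) (u : V → ℝ) :
    ∑ x, G.weightedLap w u x = 0 := by
  have hswap : ∑ x, G.weightedLap w u x
      = ∑ y, ∑ x ∈ G.neighborFinset y, w x y * (u x - u y) :=
    sum_comm' fun x y => by simp [G.adj_comm]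
  have hanti : ∑ y, ∑ x ∈ G.neighborFinset y, w x y * (u x - u y)
      = -∑ y, G.weightedLap w u y := by
    simp only [weightedLap, ← sum_neg_distrib]
    exact sum_congr rfl fun y _ => sum_congr rfl fun x _ => by rw [hw]; ring
  linarith

lemma weightedLap_le_of_forall_le (hw : ∀ x y, G.Adj x y → 0 < w x y) {u : V → ℝ} {ℓ : ℝ}
    (hℓ : ∀ y, ℓ ≤ u y) (x : V) :
    G.weightedLap w u x ≤ (∑ y ∈ G.neighborFinset x, w x y) * (u x - ℓ) := by
  rw [weightedLap, sum_mul]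
  refine sum_le_sum fun y hy => mul_le_mul_of_nonneg_left ?_ (hw x y ?_).le
  · linarith [hℓ y]
  · rwa [mem_neighborFinset] at hy

lemma mul_sub_le_of_adj (hw : ∀ x y, G.Adj x y → 0 < w x y) {u : V → ℝ} {m : ℝ}
    (hm : ∀ v, u v ≤ m) {x y : V} (hxy : G.Adj x y) :
    w x y * (m - u y) ≤ G.weightedLap w u x + (∑ z ∈ G.neighborFinset x, w x z) * (m - u x) := by
  have hsum : G.weightedLap w u x + (∑ z ∈ G.neighborFinset x, w x z) * (m - u x)
      = ∑ z ∈ G.neighborFinset x, w x z * (m - u z) := by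
    rw [weightedLap, sum_mul, ← sum_add_distrib]
    exact sum_congr rfl fun z _ => by ring
  rw [hsum]
  refine single_le_sum (f := fun z => w x z * (m - u z)) (fun z hz => ?_) (by simpa using hxy)
  rw [mem_neighborFinset] at hz
  exact mul_nonneg (hw x z hz).le (by linarith [hm z])

lemma exists_sum_weight_le (hw : ∀ x y, G.Adj x y → 0 < w x y) :
    ∃ W, 0 ≤ W ∧ ∀ x, ∑ y ∈ G.neighborFinset x, w x y ≤ W := by
  have hnonneg : ∀ x, 0 ≤ ∑ y ∈ G.neighborFinset x, w x y := fun x =>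
    sum_nonneg fun y hy => (hw x y ((mem_neighborFinset ..).1 hy)).le
  exact ⟨∑ x, ∑ y ∈ G.neighborFinset x, w x y, sum_nonneg fun x _ => hnonneg x,
    fun x => single_le_sum (fun x _ => hnonneg x) (mem_univ x)⟩

lemma Walk.exists_notMem_or_eq_sub_le (hw : ∀ x y, G.Adj x y → 0 < w x y)
    {w₀ W ρ : ℝ} (hw₀ : 0 < w₀) (hw₀le : ∀ x y, G.Adj x y → w₀ ≤ w x y)
    (hW : ∀ x, ∑ y ∈ G.neighborFinset x, w x y ≤ W) (hW₀ : 0 ≤ W)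
    (hρ₁ : 1 ≤ ρ) (hρ : 1 + W ≤ w₀ * (ρ - 1)) {u : V → ℝ} {Ω : Set V} {m β : ℝ} (hβ : 0 ≤ β)
    (hm : ∀ v, u v ≤ m) (hΩ : ∀ x ∈ Ω, G.weightedLap w u x ≤ β) {x z : V} (p : G.Walk x z)
    (k : ℕ) (hx : m - u x ≤ β * (ρ ^ k - 1)) :
    ∃ v, (v ∉ Ω ∨ v = z) ∧ m - u v ≤ β * (ρ ^ (k + p.length) - 1) := by
  induction p generalizing k with
  | nil => exact ⟨_, Or.inr rfl, by simpa using hx⟩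
  | @cons x y z hxy p ih =>
    by_cases hxΩ : x ∈ Ω
    · have hρk : 1 ≤ ρ ^ k := one_le_pow₀ hρ₁
      have hy : m - u y ≤ β * (ρ ^ (k + 1) - 1) := by
        refine le_of_mul_le_mul_left ?_ hw₀
        calc w₀ * (m - u y) ≤ w x y * (m - u y) :=
              mul_le_mul_of_nonneg_right (hw₀le x y hxy) (by linarith [hm y])
          _ ≤ β + W * (β * (ρ ^ k - 1)) := by
              have := mul_sub_le_of_adj hw hm hxy
              have := mul_le_mul (hW x) hx (by linarith [hm x]) hW₀
              linarith [hΩ x hxΩ]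
          _ ≤ w₀ * (β * (ρ ^ (k + 1) - 1)) := by
              have hρk' : 0 ≤ β * (ρ ^ k - 1) := mul_nonneg hβ (by linarith)
              have := mul_le_mul_of_nonneg_left hρ (mul_nonneg hβ (by linarith : (0:ℝ) ≤ ρ ^ k))
              have := mul_nonneg hw₀.le hρk'
              have := mul_nonneg hW₀ hβ
              rw [pow_succ]; linarith
      obtain ⟨v, hv, hvm⟩ := ih (k + 1) hy
      exact ⟨v, hv, by rwa [length_cons, ← add_assoc, add_right_comm]⟩
    · refine ⟨x, Or.inl hxΩ, hx.trans (mul_le_mul_of_nonneg_left ?_ hβ)⟩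
      exact sub_le_sub_right (pow_le_pow_right₀ hρ₁ (Nat.le_add_right _ _)) 1

theorem exists_chain_const (hconn : G.Connected) (hw : ∀ x y, G.Adj x y → 0 < w x y) :
    ∃ Γ, 0 ≤ Γ ∧ ∀ (u : V → ℝ) (Ω : Set V) (β : ℝ) (x z : V), 0 ≤ β → (∀ v, u v ≤ u x) →
      (∀ y ∈ Ω, G.weightedLap w u y ≤ β) → ∃ v, (v ∉ Ω ∨ v = z) ∧ u x - u v ≤ β * Γ := by
  classical
  have := hconn.nonempty
  set φ : V × V → ℝ := fun e => if G.Adj e.1 e.2 then w e.1 e.2 else 1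
  obtain ⟨e, he⟩ := Finite.exists_min φ
  have hw₀ : 0 < φ e := by
    simp only [φ]; split_ifs with h; exacts [hw _ _ h, one_pos]
  have hw₀le : ∀ x y, G.Adj x y → φ e ≤ w x y := fun x y hxy => by
    simpa [φ, hxy] using he (x, y)
  obtain ⟨W, hW₀, hW⟩ := exists_sum_weight_le hw
  set ρ := 1 + (1 + W) / φ e
  have hρ₁ : 1 ≤ ρ := le_add_of_nonneg_right (by positivity)
  have hρ : 1 + W ≤ φ e * (ρ - 1) := by rw [add_sub_cancel_left, mul_div_cancel₀ _ hw₀.ne']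
  refine ⟨ρ ^ Fintype.card V - 1, sub_nonneg.2 (one_le_pow₀ hρ₁), ?_⟩
  intro u Ω β x z hβ hx hΩ
  obtain ⟨p⟩ := hconn.preconnected x z
  obtain ⟨v, hv, hvx⟩ := p.bypass.exists_notMem_or_eq_sub_le hw hw₀ hw₀le hW hW₀ hρ₁ hρ hβ hx hΩ
    0 (by simp)
  refine ⟨v, hv, hvx.trans (mul_le_mul_of_nonneg_left ?_ hβ)⟩
  rw [zero_add]
  exact sub_le_sub_right (pow_le_pow_right₀ hρ₁ p.bypass_isPath.length_lt.le) 1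

end SimpleGraph

section Growth

variable {f g : ℝ → ℝ} {a : ℝ}

lemma exists_abs_le_mul_exp (hf : ∀ t, f t = a * exp t + g t * exp t)
    (hg : ∃ M, ∀ t, |g t| ≤ M) : ∃ b, 0 ≤ b ∧ ∀ t, |f t| ≤ b * exp t := by
  obtain ⟨M, hM⟩ := hg
  refine ⟨|a| + M, add_nonneg (abs_nonneg a) ((abs_nonneg _).trans (hM 0)), fun t => ?_⟩
  rw [hf, ← add_mul, abs_mul, abs_of_pos (exp_pos t)]
  exact mul_le_mul_of_nonneg_right ((abs_add_le _ _).trans (add_le_add_right (hM t) _))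
    (exp_pos t).le

lemma exists_le_of_le_add_mul (hf : ∀ t, f t = a * exp t + g t * exp t) (ha : 0 < a)
    (hg : Tendsto g atTop (𝓝 0)) (α β : ℝ) : ∃ T, ∀ t, f t ≤ α + β * t → t ≤ T := by
  have hlin : (fun t => α + β * t) =o[atTop] exp := by
    have h₀ := (isLittleO_pow_exp_atTop (n := 0)).const_mul_left α
    have h₁ := (isLittleO_pow_exp_atTop (n := 1)).const_mul_left β
    simpa using h₀.add h₁
  have hlt : ∀ᶠ t in atTop, α + β * t < f t := by
    filter_upwards [hlin.def (half_pos ha), hg.eventually (lt_mem_nhds (neg_lt_zero.2 (half_pos ha)))]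
      with t hαβ hgt
    rw [norm_of_nonneg (exp_pos t).le] at hαβ
    rw [hf, ← add_mul]
    have := mul_lt_mul_of_pos_right (by linarith : a / 2 < a + g t) (exp_pos t)
    linarith [le_abs_self (α + β * t), (norm_eq_abs (α + β * t)).symm.le]
  obtain ⟨T, hT⟩ := eventually_atTop.1 hlt
  exact ⟨T, fun t ht => le_of_not_gt fun hTt => (hT t hTt.le).not_ge ht⟩

lemma exists_abs_div_exp_sub_le (hf : ∀ t, f t = a * exp t + g t * exp t) (ha : 0 < a)
    (hg : Tendsto g atBot (𝓝 0)) {ε : ℝ} (hε : 0 < ε) :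
    ∃ T δ, 0 < δ ∧ ∀ s t, s ≤ T → t ≤ s → s - t ≤ δ → |f t / exp s - a| ≤ ε := by
  obtain ⟨T, hT⟩ := eventually_atBot.1
    (hg.eventually (Icc_mem_nhds (neg_lt_zero.2 (half_pos hε)) (half_pos hε)))
  refine ⟨T, ε / (2 * a), by positivity, fun s t hs hts hδ => ?_⟩
  have hsplit : f t / exp s - a = a * (exp (t - s) - 1) + g t * exp (t - s) := by
    rw [hf, exp_sub]; field_simp; ring
  have he₁ : exp (t - s) ≤ 1 := exp_le_one_iff.2 (by linarith)
  have he₂ : 1 - exp (t - s) ≤ s - t := by linarith [add_one_le_exp (t - s)]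
  have hgt : |g t| ≤ ε / 2 := abs_le.2 (hT t (hts.trans hs))
  have hδ' : a * (s - t) ≤ ε / 2 := by
    calc a * (s - t) ≤ a * (ε / (2 * a)) := mul_le_mul_of_nonneg_left hδ ha.le
      _ = ε / 2 := by field_simp
  rw [hsplit]
  calc |a * (exp (t - s) - 1) + g t * exp (t - s)|
      ≤ a * (1 - exp (t - s)) + |g t| * 1 := by
        refine (abs_add_le _ _).trans (add_le_add ?_ ?_)
        · rw [abs_mul, abs_of_pos ha, abs_sub_comm, abs_of_nonneg (by linarith)]
        · rw [abs_mul, abs_of_pos (exp_pos _)]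
          exact mul_le_mul_of_nonneg_left he₁ (abs_nonneg _)
    _ ≤ ε := by linarith [mul_le_mul_of_nonneg_left he₂ ha.le]

end Growth

section Averages

variable {V : Type*} [Fintype V] {μ r : V → ℝ}

lemma abs_le_of_sum_mul_eq (hμ : ∀ x, 0 ≤ μ x) (hμV : 0 < ∑ x, μ x) {c K : ℝ}
    (hr : ∀ x, |r x| ≤ K) (hsum : ∑ x, μ x * r x = c * ∑ x, μ x) : |c| ≤ K := by
  refine le_of_mul_le_mul_right ?_ hμV
  calc |c| * ∑ x, μ x = |∑ x, μ x * r x| := by rw [hsum, abs_mul, abs_of_pos hμV]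
    _ ≤ ∑ x, μ x * |r x| := (abs_sum_le_sum_abs _ _).trans_eq
        (sum_congr rfl fun x _ => by rw [abs_mul, abs_of_nonneg (hμ x)])
    _ ≤ ∑ x, μ x * K := sum_le_sum fun x _ => mul_le_mul_of_nonneg_left (hr x) (hμ x)
    _ = K * ∑ x, μ x := by rw [← sum_mul, mul_comm]

lemma sum_mul_mul_neg_of_abs_sub_le_s2 (hμ : ∀ x, 0 ≤ μ x) {h : V → ℝ} {A a ε : ℝ} (ha : 0 < a)
    (hh : ∀ x, |h x| ≤ A) (hsum : ∑ x, μ x * h x ≤ -A⁻¹) (hr : ∀ x, |r x - a| ≤ ε)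
    (hε : A * ε * ∑ x, μ x < a * A⁻¹) : ∑ x, μ x * h x * r x < 0 := by
  have hterm : ∀ x, h x * (r x - a) ≤ A * ε := fun x =>
    (le_abs_self _).trans <| (abs_mul _ _).trans_le <|
      mul_le_mul (hh x) (hr x) (abs_nonneg _) ((abs_nonneg _).trans (hh x))
  calc ∑ x, μ x * h x * r x = a * ∑ x, μ x * h x + ∑ x, μ x * (h x * (r x - a)) := by
        rw [mul_sum, ← sum_add_distrib]; exact sum_congr rfl fun x _ => by ring
    _ ≤ a * -A⁻¹ + ∑ x, μ x * (A * ε) :=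
        add_le_add (mul_le_mul_of_nonneg_left hsum ha.le)
          (sum_le_sum fun x _ => mul_le_mul_of_nonneg_left (hterm x) (hμ x))
    _ < 0 := by rw [← sum_mul]; linarith

end Averages

section Solutions

open SimpleGraph

variable {V : Type*} [Fintype V] {G : SimpleGraph V} [DecidableRel G.Adj] {μ : V → ℝ}
  {w : V → V → ℝ} {f : ℝ → ℝ} {A : ℝ}

lemma sum_mul_eq_of_weightedLap_eq (hw : ∀ x y, w x y = w y x) {u r : V → ℝ} {c : ℝ}
    (hu : ∀ x, G.weightedLap w u x = μ x * (r x - c)) : ∑ x, μ x * r x = c * ∑ x, μ x := by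
  have := G.sum_weightedLap_eq_zero hw u
  simp only [hu, mul_sub, sum_sub_distrib, ← sum_mul] at this
  linarith

theorem exists_max_lower_bound (hconn : G.Connected) (hμ : ∀ x, 0 < μ x) (hw : ∀ x y, w x y = w y x)
    (hwpos : ∀ x y, G.Adj x y → 0 < w x y) {g : ℝ → ℝ} {a b : ℝ} (ha : 0 < a)
    (hf : ∀ t, f t = a * exp t + g t * exp t) (hb₀ : 0 ≤ b) (hb : ∀ t, |f t| ≤ b * exp t)
    (hg : Tendsto g atBot (𝓝 0)) (hA : 0 < A) :
    ∃ m₀, ∀ (h : V → ℝ) (c : ℝ) (u : V → ℝ) (x₀ : V), (∀ x, |h x| ≤ A) →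
      (c ≠ 0 → A⁻¹ ≤ |c|) → (c = 0 → ∑ x, μ x * h x ≤ -A⁻¹) →
      (∀ x, G.weightedLap w u x = μ x * (h x * f (u x) - c)) → (∀ y, u y ≤ u x₀) → m₀ ≤ u x₀ := by
  have := hconn.nonempty
  obtain ⟨Γ, -, hchain⟩ := exists_chain_const hconn hwpos
  obtain ⟨x₁, hx₁⟩ := Finite.exists_max μ
  have hμV : 0 < ∑ x, μ x := sum_pos (fun x _ => hμ x) univ_nonempty
  set ε := a * A⁻¹ / (2 * A * ∑ x, μ x)
  obtain ⟨T, δ, hδ, hT⟩ := exists_abs_div_exp_sub_le hf ha hg (ε := ε) (by positivity)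
  have hexp : ∀ K ε, 0 < ε → ∀ᶠ m in atBot, K * exp m < ε := fun K ε hε => by
    simpa using (tendsto_exp_atBot.const_mul K).eventually_lt_const (by simpa using hε)
  obtain ⟨m₀, hm₀⟩ := eventually_atBot.1 <| (eventually_le_atBot T).and <|
    (hexp (μ x₁ * (A * b) * Γ) δ hδ).and (hexp (A * b) A⁻¹ (inv_pos.2 hA))
  refine ⟨m₀, fun h c u x₀ hh hc hc₀ hu hx₀ => ?_⟩
  by_contra! hlt
  obtain ⟨hmT, hosc, hmc⟩ := hm₀ _ hlt.le
  set m := u x₀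
  have hterm : ∀ x, |h x * f (u x)| ≤ A * b * exp m := fun x => by
    rw [abs_mul, mul_assoc]
    exact mul_le_mul (hh x) ((hb _).trans (mul_le_mul_of_nonneg_left (exp_le_exp.2 (hx₀ x)) hb₀))
      (abs_nonneg _) hA.le
  have hsum := sum_mul_eq_of_weightedLap_eq (r := fun x => h x * f (u x)) hw hu
  have hc0 : c = 0 := by
    by_contra hne
    linarith [hc hne, abs_le_of_sum_mul_eq (fun x => (hμ x).le) hμV hterm hsum]
  have hμ₁ := hμ x₁
  have hΩ : ∀ y ∈ Set.univ, G.weightedLap w u y ≤ μ x₁ * (A * b * exp m) := fun y _ => by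
    rw [hu, hc0, sub_zero]
    exact mul_le_mul_of_nonneg (hx₁ y) ((le_abs_self _).trans (hterm y)) (hμ y).le (by positivity)
  have hr : ∀ x, |f (u x) / exp m - a| ≤ ε := fun x => by
    obtain ⟨v, hv, hxv⟩ := hchain u Set.univ _ x₀ x (by positivity) hx₀ hΩ
    obtain rfl := hv.resolve_left (· (Set.mem_univ v))
    exact hT m (u v) hmT (hx₀ v) ((hxv.trans_eq (by ring)).trans hosc.le)
  have hε : A * ε * ∑ x, μ x = a * A⁻¹ / 2 := by simp only [ε]; field_simp
  have hneg := sum_mul_mul_neg_of_abs_sub_le_s2 (fun x => (hμ x).le) ha hh (hc₀ hc0) hr (by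
    rw [hε]; linarith [mul_pos ha (inv_pos.2 hA)])
  have hzero : ∑ x, μ x * h x * (f (u x) / exp m) = 0 := by
    calc ∑ x, μ x * h x * (f (u x) / exp m) = (∑ x, μ x * (h x * f (u x))) / exp m := by
          rw [sum_div]; exact sum_congr rfl fun x _ => by ring
      _ = 0 := by rw [hsum, hc0, zero_mul, zero_div]
  exact hneg.ne hzero

theorem exists_min_lower_bound (hconn : G.Connected) (hμ : ∀ x, 0 < μ x)
    (hwpos : ∀ x y, G.Adj x y → 0 < w x y) {b : ℝ} (hb₀ : 0 ≤ b) (hb : ∀ t, |f t| ≤ b * exp t)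
    (hA : 0 ≤ A) (m₀ : ℝ) :
    ∃ L, 0 ≤ L ∧ ∀ (h : V → ℝ) (c : ℝ) (u : V → ℝ) (x₀ : V), (∀ x, |h x| ≤ A) → c ≤ A →
      (∀ x, G.weightedLap w u x = μ x * (h x * f (u x) - c)) → (∀ y, u y ≤ u x₀) →
      m₀ ≤ u x₀ → ∀ y, -L ≤ u y := by
  have := hconn.nonempty
  obtain ⟨Γ, hΓ, hchain⟩ := exists_chain_const hconn hwpos
  obtain ⟨x₁, hx₁⟩ := Finite.exists_max μ
  have hμ₁ := hμ x₁
  refine ⟨μ x₁ * (A + A * b) * Γ - min 0 m₀, by linarith [min_le_left 0 m₀, (by positivity :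
    0 ≤ μ x₁ * (A + A * b) * Γ)], fun h c u x₀ hh hc hu hx₀ hm₀ y => ?_⟩
  obtain ⟨x₂, hx₂⟩ := Finite.exists_min u
  have hΩ : ∀ v ∈ {v | u v ≤ 0}, G.weightedLap w (-u) v ≤ μ x₁ * (A + A * b) := fun v hv => by
    rw [weightedLap_neg, hu, ← mul_neg]
    refine mul_le_mul_of_nonneg (hx₁ v) ?_ (hμ v).le (by positivity)
    have hf : |h v * f (u v)| ≤ A * b := by
      rw [abs_mul]
      refine mul_le_mul (hh v) ((hb _).trans ?_) (abs_nonneg _) hA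
      exact mul_le_of_le_one_right hb₀ (exp_le_one_iff.2 hv)
    linarith [neg_abs_le (h v * f (u v))]
  obtain ⟨v, hv, hvx⟩ :=
    hchain (-u) {v | u v ≤ 0} _ x₂ x₀ (by positivity) (fun v => neg_le_neg (hx₂ v)) hΩ
  have hv₀ : min 0 m₀ ≤ u v := by
    rcases hv with hv | rfl
    · exact (min_le_left _ _).trans (le_of_lt (not_le.1 hv))
    · exact (min_le_right _ _).trans hm₀
  simp only [Pi.neg_apply] at hvx
  linarith [hx₂ y]

theorem exists_upper_bound_of_inv_le [Nonempty V] (hμ : ∀ x, 0 < μ x)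
    (hwpos : ∀ x y, G.Adj x y → 0 < w x y) (hfpos : ∀ t, 0 < f t)
    (hsuper : ∀ α β, ∃ T, ∀ t, f t ≤ α + β * t → t ≤ T) (hA : 0 < A) (L : ℝ) :
    ∃ M, ∀ (h : V → ℝ) (c : ℝ) (u : V → ℝ) (v : V), c ≤ A → (∀ y, -L ≤ u y) →
      (∀ x, G.weightedLap w u x = μ x * (h x * f (u x) - c)) → A⁻¹ ≤ h v → u v ≤ M := by
  obtain ⟨x₁, hx₁⟩ := Finite.exists_min μ
  obtain ⟨W, hW₀, hW⟩ := exists_sum_weight_le (G := G) hwpos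
  have hμ₁ := hμ x₁
  set κ := A * W / μ x₁
  obtain ⟨T, hT⟩ := hsuper (A * A + κ * L) κ
  refine ⟨T, fun h c u v hc hL hu hv => hT _ ?_⟩
  have hlap : μ v * (h v * f (u v) - c) ≤ W * (u v + L) := by
    rw [← hu, ← sub_neg_eq_add]
    exact (weightedLap_le_of_forall_le hwpos hL v).trans
      (mul_le_mul_of_nonneg_right (hW v) (by linarith [hL v]))
  have hfA : f (u v) ≤ A * (h v * f (u v)) := by
    rw [← mul_assoc]
    exact le_mul_of_one_le_left (hfpos _).le ((inv_le_iff_one_le_mul₀' hA).1 hv)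
  have hμv : μ x₁ * (h v * f (u v) - c) ≤ W * (u v + L) := by
    rcases le_or_gt (h v * f (u v) - c) 0 with hneg | hpos
    · linarith [mul_nonpos_of_nonneg_of_nonpos hμ₁.le hneg, mul_nonneg hW₀ (by linarith [hL v] :
        0 ≤ u v + L)]
    · exact (mul_le_mul_of_nonneg_right (hx₁ v) hpos.le).trans hlap
  have hkey : μ x₁ * f (u v) ≤ μ x₁ * (A * A) + A * W * (u v + L) := by
    have := mul_le_mul_of_nonneg_left hfA hμ₁.le
    have := mul_le_mul_of_nonneg_left hμv hA.le
    have := mul_le_mul_of_nonneg_left hc (mul_nonneg hA.le hμ₁.le)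
    linarith
  calc f (u v) ≤ (μ x₁ * (A * A) + A * W * (u v + L)) / μ x₁ := by rwa [le_div_iff₀' hμ₁]
    _ = A * A + κ * L + κ * u v := by simp only [κ]; field_simp; ring

lemma exists_f_le_of_forall_nonpos [Nonempty V] (hμ : ∀ x, 0 < μ x) (hw : ∀ x y, w x y = w y x)
    (hfpos : ∀ t, 0 < f t) {μ₀ : ℝ} (hμ₀ : 0 < μ₀) (hμ₀le : ∀ x, μ₀ ≤ μ x) (hA : 0 < A)
    {h : V → ℝ} {c : ℝ} {u : V → ℝ} (hc : -A ≤ c) (hc₀ : c = 0 → ∑ x, μ x * h x ≤ -A⁻¹)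
    (hc_neg : c < 0 → ∃ x, h x ≤ -A⁻¹) (hh : ∀ x, h x ≤ 0)
    (hu : ∀ x, G.weightedLap w u x = μ x * (h x * f (u x) - c)) :
    ∃ z, f (u z) ≤ A * A * (∑ x, μ x) / μ₀ := by
  classical
  have hsum := sum_mul_eq_of_weightedLap_eq (r := fun x => h x * f (u x)) hw hu
  have hμV : 0 < ∑ x, μ x := sum_pos (fun x _ => hμ x) univ_nonempty
  have hhf : ∀ x, h x * f (u x) ≤ 0 := fun x =>
    mul_nonpos_of_nonpos_of_nonneg (hh x) (hfpos _).le
  have hle : ∀ z, ∑ x, μ x * (h x * f (u x)) ≤ μ z * (h z * f (u z)) := fun z => by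
    rw [← add_sum_erase _ _ (mem_univ z)]
    linarith [sum_nonpos fun x (_ : x ∈ univ.erase z) =>
      mul_nonpos_of_nonneg_of_nonpos (hμ x).le (hhf x)]
  have hc_lt : c < 0 := by
    have hc_le : c ≤ 0 := by
      by_contra! hpos
      obtain ⟨x⟩ := ‹Nonempty V›
      linarith [hle x, mul_pos hpos hμV, mul_nonpos_of_nonneg_of_nonpos (hμ x).le (hhf x)]
    refine hc_le.lt_of_ne fun hc0 => ?_
    obtain ⟨x, -, hx⟩ := exists_lt_of_sum_lt (s := univ) (f := fun x => μ x * h x)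
      (g := fun _ => 0) (by simp only [sum_const_zero]; linarith [hc₀ hc0, inv_pos.2 hA])
    have : μ x * (h x * f (u x)) < 0 := by rw [← mul_assoc]; exact mul_neg_of_neg_of_pos hx (hfpos _)
    rw [hc0, zero_mul] at hsum
    linarith [hle x]
  obtain ⟨z, hz⟩ := hc_neg hc_lt
  have hμz : μ z * (h z * f (u z)) ≤ μ₀ * (-A⁻¹ * f (u z)) :=
    (mul_le_mul_of_nonpos_right (hμ₀le z) (hhf z)).trans
      (mul_le_mul_of_nonneg_left (mul_le_mul_of_nonneg_right hz (hfpos _).le) hμ₀.le)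
  have hbound : μ₀ * (A⁻¹ * f (u z)) ≤ A * ∑ x, μ x := by
    linarith [hle z, mul_le_mul_of_nonneg_right hc hμV.le]
  refine ⟨z, (le_div_iff₀' hμ₀).2 ?_⟩
  calc μ₀ * f (u z) = A * (μ₀ * (A⁻¹ * f (u z))) := by field_simp
    _ ≤ A * (A * ∑ x, μ x) := mul_le_mul_of_nonneg_left hbound hA.le
    _ = A * A * ∑ x, μ x := by ring

theorem exists_max_upper_bound (hconn : G.Connected) (hμ : ∀ x, 0 < μ x) (hw : ∀ x y, w x y = w y x)
    (hwpos : ∀ x y, G.Adj x y → 0 < w x y) (hfpos : ∀ t, 0 < f t)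
    (hsuper : ∀ α β, ∃ T, ∀ t, f t ≤ α + β * t → t ≤ T) (hA : 0 < A) (L : ℝ) :
    ∃ M, ∀ (h : V → ℝ) (c : ℝ) (u : V → ℝ) (x₀ : V), |c| ≤ A →
      (∀ x, 0 < h x → A⁻¹ ≤ h x) → (c = 0 → ∑ x, μ x * h x ≤ -A⁻¹) →
      (c < 0 → ∃ x, h x ≤ -A⁻¹) → (∀ y, -L ≤ u y) →
      (∀ x, G.weightedLap w u x = μ x * (h x * f (u x) - c)) → (∀ y, u y ≤ u x₀) →
      u x₀ ≤ M := by
  have := hconn.nonempty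
  obtain ⟨Γ, -, hchain⟩ := exists_chain_const hconn hwpos
  obtain ⟨M₁, hM₁⟩ := exists_upper_bound_of_inv_le hμ hwpos hfpos hsuper hA L
  obtain ⟨x₁, hx₁⟩ := Finite.exists_max μ
  obtain ⟨x₂, hx₂⟩ := Finite.exists_min μ
  obtain ⟨M₂, hM₂⟩ := hsuper (A * A * (∑ x, μ x) / μ x₂) 0
  have hμ₁ := hμ x₁
  refine ⟨max M₁ M₂ + μ x₁ * A * Γ, fun h c u x₀ hc hpos hc₀ hc_neg hL hu hx₀ => ?_⟩
  have hreach : ∀ z, ∃ v, (0 < h v ∨ v = z) ∧ u x₀ - u v ≤ μ x₁ * A * Γ := fun z => by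
    have hΩ : ∀ y ∈ {y | h y ≤ 0}, G.weightedLap w u y ≤ μ x₁ * A := fun y hy => by
      rw [hu]
      refine mul_le_mul_of_nonneg (hx₁ y) ?_ (hμ y).le hA.le
      linarith [mul_nonpos_of_nonpos_of_nonneg hy (hfpos (u y)).le,
        neg_abs_le c]
    obtain ⟨v, hv, hvx⟩ := hchain u _ _ x₀ z (by positivity) hx₀ hΩ
    exact ⟨v, hv.imp_left fun hv => not_le.1 hv, hvx⟩
  obtain ⟨v, hv, hvx⟩ : ∃ v, u v ≤ max M₁ M₂ ∧ u x₀ - u v ≤ μ x₁ * A * Γ := by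
    by_cases hh : ∃ z, 0 < h z
    · obtain ⟨z, hz⟩ := hh
      obtain ⟨v, hv, hvx⟩ := hreach z
      have hv₀ : 0 < h v := by rcases hv with hv | rfl; exacts [hv, hz]
      exact ⟨v, (hM₁ h c u v ((le_abs_self c).trans hc) hL hu (hpos v hv₀)).trans
        (le_max_left _ _), hvx⟩
    · push Not at hh
      obtain ⟨z, hz⟩ := exists_f_le_of_forall_nonpos hμ hw hfpos (hμ x₂) hx₂ hA
        (by linarith [neg_abs_le c]) hc₀ hc_neg hh hu
      obtain ⟨v, hv, hvx⟩ := hreach z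
      obtain rfl := hv.resolve_left (hh v).not_gt
      exact ⟨v, (hM₂ _ (by simpa using hz)).trans (le_max_right _ _), hvx⟩
  linarith

end Solutions

theorem stmt2_general {V : Type*} [Fintype V]
    (G : SimpleGraph V) [DecidableRel G.Adj] (hconn : G.Connected)
    (μ : V → ℝ) (hμ : ∀ x, 0 < μ x)
    (w : V → V → ℝ) (hwsymm : ∀ x y, w x y = w y x)
    (hwpos : ∀ x y, G.Adj x y → 0 < w x y)
    (f g : ℝ → ℝ) (a : ℝ) (ha : 0 < a)
    (hf : ∀ t, f t = a * Real.exp t + g t * Real.exp t)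
    (hgbdd : ∃ M : ℝ, ∀ t, |g t| ≤ M)
    (hgtop : Filter.Tendsto g Filter.atTop (nhds 0))
    (hgbot : Filter.Tendsto g Filter.atBot (nhds 0))
    (hfpos : ∀ t, 0 < f t)
    (A : ℝ) (hA : 0 < A) :
    ∃ C : ℝ, 0 ≤ C ∧ ∀ (h : V → ℝ) (c : ℝ),
      (∀ x, |h x| + |c| ≤ A) →
      (∀ x, 0 < h x → A⁻¹ ≤ h x) →
      (0 < c → A⁻¹ ≤ c) →
      (c = 0 → ∑ x, μ x * h x ≤ -A⁻¹) →
      (c < 0 → c ≤ -A⁻¹ ∧ ∃ x, h x ≤ -A⁻¹) →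
      ∀ u : V → ℝ,
        (∀ x, -((1 / μ x) * ∑ y ∈ G.neighborFinset x, w x y * (u y - u x))
            = h x * f (u x) - c) →
        ∀ x, |u x| ≤ C := by
  have := hconn.nonempty
  obtain ⟨b, hb₀, hb⟩ := exists_abs_le_mul_exp hf hgbdd
  obtain ⟨m₀, hm₀⟩ := exists_max_lower_bound hconn hμ hwsymm hwpos ha hf hb₀ hb hgbot hA
  obtain ⟨L, hL₀, hL⟩ := exists_min_lower_bound hconn hμ hwpos hb₀ hb hA.le m₀
  obtain ⟨M, hM⟩ := exists_max_upper_bound hconn hμ hwsymm hwpos hfpos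
    (exists_le_of_le_add_mul hf ha hgtop) hA L
  refine ⟨max M L, hL₀.trans (le_max_right _ _), fun h c h1 h2 h3 h4 h5 u hu x => ?_⟩
  obtain ⟨y⟩ := ‹Nonempty V›
  have hh : ∀ x, |h x| ≤ A := fun x => by linarith [h1 x, abs_nonneg c]
  have hc : |c| ≤ A := by linarith [h1 y, abs_nonneg (h y)]
  have hc_inv : c ≠ 0 → A⁻¹ ≤ |c| := fun hc₀ => by
    rcases hc₀.lt_or_gt with hneg | hpos
    · rw [abs_of_neg hneg]; linarith [(h5 hneg).1]
    · rw [abs_of_pos hpos]; exact h3 hpos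
  have hu' : ∀ x, G.weightedLap w u x = μ x * (h x * f (u x) - c) := fun x => by
    rw [← hu, SimpleGraph.mul_neg_laplacian_eq_weightedLap (hμ x).ne']
  obtain ⟨x₀, hx₀⟩ := Finite.exists_max u
  have hmin := hL h c u x₀ hh ((le_abs_self c).trans hc) hu' hx₀ (hm₀ h c u x₀ hh hc_inv h4 hu' hx₀)
  have hmax := hM h c u x₀ hc h2 h4 (fun hneg => (h5 hneg).2) hmin hu' hx₀
  exact abs_le.2 ⟨by linarith [hmin x, le_max_right M L], by linarith [hx₀ x, le_max_left M L]⟩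

/-- Compactness with a bound depending only on `A`, the graph and
`f`: under conditions (1)-(5) on `h` and `c`, every solution of
`-Δu = h f(u) - c` satisfies `max |u| ≤ C(A, G, f)`. -/
theorem stmt2 {V : Type*} [Fintype V] [Nonempty V]
    (G : SimpleGraph V) [DecidableRel G.Adj] (hconn : G.Connected)
    (μ : V → ℝ) (hμ : ∀ x, 0 < μ x)
    (w : V → V → ℝ) (hwsymm : ∀ x y, w x y = w y x)
    (hwpos : ∀ x y, G.Adj x y → 0 < w x y)
    (f g : ℝ → ℝ) (a : ℝ) (ha : 0 < a)
    (hf : ∀ t, f t = a * Real.exp t + g t * Real.exp t)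
    (hgbdd : ∃ M : ℝ, ∀ t, |g t| ≤ M)
    (hgtop : Filter.Tendsto g Filter.atTop (nhds 0))
    (hgbot : Filter.Tendsto g Filter.atBot (nhds 0))
    (hfpos : ∀ t, 0 < f t)
    (A : ℝ) (hA : 0 < A) :
    ∃ C : ℝ, 0 ≤ C ∧ ∀ (h : V → ℝ) (c : ℝ),
      (∀ x, |h x| + |c| ≤ A) →
      (∀ x, 0 < h x → A⁻¹ ≤ h x) →
      (0 < c → A⁻¹ ≤ c) →
      (c = 0 → ∑ x, μ x * h x ≤ -A⁻¹) →
      (c < 0 → c ≤ -A⁻¹ ∧ ∃ x, h x ≤ -A⁻¹) →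
      ∀ u : V → ℝ,
        (∀ x, -((1 / μ x) * ∑ y ∈ G.neighborFinset x, w x y * (u y - u x))
            = h x * f (u x) - c) →
        ∀ x, |u x| ≤ C :=
  stmt2_general G hconn μ hμ w hwsymm hwpos f g a ha hf hgbdd hgtop hgbot hfpos A hA
end

section
/- Let n≥1 be an integer and define Q(u) = (u^{2n}/(1+u^{2n})) e^u − ε. For all sufficiently small ε>0 one has Q(−2ε^{1/(2n)}) > 0 and Q(−√ε) < 0; consequently Q has a zero u₂ in the open interval (−2ε^{1/(2n)}, −√ε). -/
/-- `Q(u) = u^(2n)/(1+u^(2n)) e^u - ε`. -/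
noncomputable def Q (n : ℕ) (ε u : ℝ) : ℝ :=
  u ^ (2 * n) / (1 + u ^ (2 * n)) * Real.exp u - ε

/-- For all sufficiently small `ε > 0`, `Q(-2ε^(1/(2n))) > 0` and
`Q(-√ε) < 0`; consequently `Q` has a zero `u₂ ∈ (-2ε^(1/(2n)), -√ε)`. -/
theorem stmt6 (n : ℕ) (hn : 1 ≤ n) :
    ∃ ε₀ : ℝ, 0 < ε₀ ∧ ∀ ε : ℝ, 0 < ε → ε < ε₀ →
      0 < Q n ε (-2 * ε ^ (1 / (2 * (n : ℝ)))) ∧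
      Q n ε (-Real.sqrt ε) < 0 ∧
      ∃ u₂ ∈ Set.Ioo (-2 * ε ^ (1 / (2 * (n : ℝ)))) (-Real.sqrt ε),
        Q n ε u₂ = 0 := by
  refine ⟨(4:ℝ)⁻¹ ^ (2 * n), by positivity, fun ε hε hεlt => ?_⟩
  have hn0 : (n:ℝ) ≠ 0 := Nat.cast_ne_zero.mpr (by omega)
  set r : ℝ := ε ^ (1 / (2 * (n : ℝ))) with hr
  have hrpos : 0 < r := Real.rpow_pos_of_pos hε _
  -- r < 1/4
  have hr14 : r < 1/4 := by
    have h1 : r < ((4:ℝ)⁻¹ ^ (2 * n)) ^ (1 / (2 * (n : ℝ))) :=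
      Real.rpow_lt_rpow hε.le hεlt (by positivity)
    have h2 : (((4:ℝ)⁻¹ ^ (2 * n)) : ℝ) ^ (1 / (2 * (n : ℝ))) = (4:ℝ)⁻¹ := by
      rw [← Real.rpow_natCast ((4:ℝ)⁻¹) (2*n), ← Real.rpow_mul (by norm_num)]
      push_cast
      rw [mul_one_div, div_self (by positivity)]
      norm_num
    rw [h2] at h1; linarith
  -- ε < 1
  have hε1 : ε < 1 := by
    have : (4:ℝ)⁻¹ ^ (2*n) ≤ (4:ℝ)⁻¹ ^ 1 :=
      pow_le_pow_of_le_one (by norm_num) (by norm_num) (by omega)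
    simpa using lt_of_lt_of_le hεlt (by linarith)
  -- r ^ (2n) = ε
  have hr2n : r ^ (2 * n) = ε := by
    rw [hr, ← Real.rpow_natCast _ (2*n), ← Real.rpow_mul hε.le]
    push_cast
    rw [one_div, inv_mul_cancel₀ (by positivity), Real.rpow_one]
  -- A = 2^(2n) ε
  set A : ℝ := 2 ^ (2*n) * ε with hA
  have hApos : 0 < A := by positivity
  have hA1 : A < 1 := by
    have h : (2:ℝ) ^ (2*n) * ((4:ℝ)⁻¹ ^ (2*n)) = (2:ℝ)⁻¹ ^ (2*n) := by
      rw [← mul_pow]; norm_num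
    have h2 : (2:ℝ)⁻¹ ^ (2*n) ≤ 1 := pow_le_one₀ (by norm_num) (by norm_num)
    nlinarith [pow_pos (show (0:ℝ) < 2 by norm_num) (2*n)]
  have hA4 : 4 * ε ≤ A := by
    have : (2:ℝ)^2 ≤ (2:ℝ)^(2*n) := pow_le_pow_right₀ (by norm_num) (by omega)
    nlinarith
  -- Q at -2r
  have hu2n : (-2 * r) ^ (2 * n) = A := by
    have he : Even (2*n) := even_two_mul n
    rw [show (-2 * r) = -(2*r) by ring, he.neg_pow, mul_pow, hr2n]
  have hexp : (1:ℝ)/2 < Real.exp (-2 * r) := by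
    have := Real.add_one_lt_exp (show (-2 : ℝ) * r ≠ 0 by nlinarith)
    linarith
  have hQa : 0 < Q n ε (-2 * r) := by
    rw [Q, hu2n, sub_pos, div_mul_eq_mul_div, lt_div_iff₀ (by linarith)]
    nlinarith [Real.exp_pos (-2*r)]
  -- Q at -√ε
  have hs : 0 < Real.sqrt ε := Real.sqrt_pos.mpr hε
  have hsε : (-Real.sqrt ε) ^ (2*n) = ε ^ n := by
    rw [pow_mul, neg_pow_two, Real.sq_sqrt hε.le]
  have hεn : ε ^ n ≤ ε := pow_le_of_le_one hε.le hε1.le (by omega)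
  have hεnpos : 0 < ε ^ n := pow_pos hε n
  have hQb : Q n ε (-Real.sqrt ε) < 0 := by
    rw [Q, hsε, sub_neg]
    have h1 : Real.exp (-Real.sqrt ε) < 1 := Real.exp_lt_one_iff.mpr (by linarith)
    have h2 : ε ^ n / (1 + ε ^ n) ≤ ε ^ n := div_le_self hεnpos.le (by linarith)
    have h3 : 0 < ε ^ n / (1 + ε ^ n) := by positivity
    calc ε ^ n / (1 + ε ^ n) * Real.exp (-Real.sqrt ε)
        < ε ^ n / (1 + ε ^ n) * 1 := by exact mul_lt_mul_of_pos_left h1 h3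
      _ ≤ ε := by rw [mul_one]; linarith
  -- a < b
  have hab : -2 * r < -Real.sqrt ε := by
    have h1 : Real.sqrt ε = ε ^ ((1:ℝ)/2) := Real.sqrt_eq_rpow ε
    have h2 : ε ^ ((1:ℝ)/2) ≤ r := by
      apply Real.rpow_le_rpow_of_exponent_ge hε hε1.le
      rw [div_le_div_iff₀ (by positivity) (by norm_num)]
      have : (1:ℝ) ≤ (n:ℝ) := by exact_mod_cast hn
      linarith
    have : Real.sqrt ε ≤ r := by rw [h1]; exact h2
    linarith
  -- continuity and IVT
  have hc : Continuous (Q n ε) := by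
    apply Continuous.sub _ continuous_const
    apply Continuous.mul _ Real.continuous_exp
    apply Continuous.div (continuous_pow _) (by continuity)
    intro x
    have : (0:ℝ) ≤ x ^ (2*n) := (even_two_mul n).pow_nonneg x
    linarith
  refine ⟨hQa, hQb, ?_⟩
  have hivt := intermediate_value_Ioo' hab.le hc.continuousOn
  have h0 : (0:ℝ) ∈ Set.Ioo (Q n ε (-Real.sqrt ε)) (Q n ε (-2 * r)) := ⟨hQb, hQa⟩
  obtain ⟨u₂, hu₂, hQu₂⟩ := hivt h0
  exact ⟨u₂, hu₂, hQu₂⟩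
end

section
/- Let G=(V,E) be a finite connected graph with positive vertex measure μ and positive symmetric edge weights w, and let n≥1 be an integer and ε>0. If u:V→ℝ solves −Δu = (u^{2n}/(1+u^{2n})) e^u − ε on V, then for every x∈V one has (u(x)^{2n}/(1+u(x)^{2n})) e^{u(x)} ≤ ε|V|/μ_min, where |V| = Σ_{x∈V} μ(x) and μ_min = min_{x∈V} μ(x). -/
/-- If `u` solves `-Δu = u^(2n)/(1+u^(2n)) e^u - ε` on a finite
connected graph, then at every vertex
`u^(2n)/(1+u^(2n)) e^u ≤ ε |V| / μ_min`. -/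
theorem stmt9 {V : Type*} [Fintype V] [Nonempty V]
    (G : SimpleGraph V) [DecidableRel G.Adj] (hconn : G.Connected)
    (μ : V → ℝ) (hμ : ∀ x, 0 < μ x)
    (w : V → V → ℝ) (hwsymm : ∀ x y, w x y = w y x)
    (hwpos : ∀ x y, G.Adj x y → 0 < w x y)
    (n : ℕ) (hn : 1 ≤ n) (ε : ℝ) (hε : 0 < ε)
    (u : V → ℝ)
    (hu : ∀ x, -((1 / μ x) * ∑ y ∈ G.neighborFinset x, w x y * (u y - u x))
        = (u x) ^ (2 * n) / (1 + (u x) ^ (2 * n)) * Real.exp (u x) - ε) :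
    ∀ x, (u x) ^ (2 * n) / (1 + (u x) ^ (2 * n)) * Real.exp (u x)
        ≤ ε * (∑ y, μ y) / (Finset.univ.inf' Finset.univ_nonempty μ) := by
  set f : V → ℝ := fun x => (u x) ^ (2 * n) / (1 + (u x) ^ (2 * n)) * Real.exp (u x) with hf
  -- positivity of denominator and nonnegativity of f
  have hden : ∀ x, (0:ℝ) < 1 + (u x) ^ (2 * n) := by
    intro x
    have : (0:ℝ) ≤ (u x) ^ (2 * n) := by rw [pow_mul]; positivity
    linarith
  have hfnonneg : ∀ x, 0 ≤ f x := by
    intro x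
    have h1 : (0:ℝ) ≤ (u x) ^ (2 * n) := by rw [pow_mul]; positivity
    have := hden x
    positivity
  -- the Laplacian sum vanishes
  have hsum0 : ∑ x, ∑ y ∈ G.neighborFinset x, w x y * (u y - u x) = 0 := by
    have hrw : ∀ x : V, ∑ y ∈ G.neighborFinset x, w x y * (u y - u x)
        = ∑ y, if G.Adj x y then w x y * (u y - u x) else 0 := by
      intro x
      rw [SimpleGraph.neighborFinset_eq_filter, Finset.sum_filter]
    have key : (∑ x, ∑ y, if G.Adj x y then w x y * (u y - u x) else 0)
        = -(∑ x, ∑ y, if G.Adj x y then w x y * (u y - u x) else 0) := by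
      conv_lhs => rw [Finset.sum_comm]
      rw [← Finset.sum_neg_distrib]
      refine Finset.sum_congr rfl fun x _ => ?_
      rw [← Finset.sum_neg_distrib]
      refine Finset.sum_congr rfl fun y _ => ?_
      by_cases h : G.Adj x y
      · simp [h, h.symm, hwsymm y x]; ring
      · have h' : ¬ G.Adj y x := fun h'' => h h''.symm
        simp [h, h']
    have : (∑ x, ∑ y, if G.Adj x y then w x y * (u y - u x) else 0) = 0 := by linarith
    simpa [hrw] using this
  -- from the equation: μ x * f x = μ x * ε + (Laplacian term)
  have heq : ∀ x, μ x * f x = μ x * ε - ∑ y ∈ G.neighborFinset x, w x y * (u y - u x) := by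
    intro x
    have hμx := (hμ x).ne'
    have h2 : f x = ε - (1 / μ x) * ∑ y ∈ G.neighborFinset x, w x y * (u y - u x) := by
      simp only [hf]
      linarith [hu x]
    rw [h2]
    field_simp
  have hsumf : ∑ x, μ x * f x = ε * ∑ x, μ x := by
    rw [Finset.sum_congr rfl fun x _ => heq x, Finset.sum_sub_distrib, hsum0,
      ← Finset.sum_mul]
    ring
  intro x
  set m := Finset.univ.inf' Finset.univ_nonempty μ with hm
  have hmpos : 0 < m := by
    obtain ⟨z, _, hz⟩ := Finset.exists_mem_eq_inf' Finset.univ_nonempty μ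
    rw [hm, hz]; exact hμ z
  have hmle : m ≤ μ x := Finset.inf'_le _ (Finset.mem_univ x)
  have hle : μ x * f x ≤ ε * ∑ y, μ y := by
    rw [← hsumf]
    exact Finset.single_le_sum (f := fun y => μ y * f y)
      (fun y _ => mul_nonneg (hμ y).le (hfnonneg y)) (Finset.mem_univ x)
  have : m * f x ≤ ε * ∑ y, μ y :=
    le_trans (mul_le_mul_of_nonneg_right hmle (hfnonneg x)) hle
  have hgoal : f x ≤ ε * (∑ y, μ y) / m := by
    rw [le_div_iff₀ hmpos]
    nlinarith
  exact hgoal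
end

section
/- Let G=(V,E) be a finite connected graph with positive vertex measure μ and positive symmetric edge weights w, let n≥1 be an integer and ε>0 be sufficiently small, and let u₃ denote the unique zero of Q(u) = (u^{2n}/(1+u^{2n})) e^u − ε in the interval (√ε, ε^{1/(2n)}). If u:V→ℝ solves −Δu = (u^{2n}/(1+u^{2n})) e^u − ε on V and u(x) < u₃ for all x∈V, then u(x) < 0 for all x∈V. -/
/-- `Q n ε` is strictly increasing on `[0, ∞)`. -/
lemma Q_strictMonoOn (n : ℕ) (ε : ℝ) {a b : ℝ} (ha : 0 ≤ a) (hab : a < b) :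
    Q n ε a < Q n ε b := by
  unfold Q
  have hb : 0 < b := lt_of_le_of_lt ha hab
  have h1 : a ^ (2 * n) ≤ b ^ (2 * n) := pow_le_pow_left₀ ha hab.le _
  have hda : (0 : ℝ) < 1 + a ^ (2 * n) := by positivity
  have hdb : (0 : ℝ) < 1 + b ^ (2 * n) := by positivity
  have hfrac : a ^ (2 * n) / (1 + a ^ (2 * n)) ≤ b ^ (2 * n) / (1 + b ^ (2 * n)) := by
    rw [div_le_div_iff₀ hda hdb]; nlinarith
  have hfb : 0 < b ^ (2 * n) / (1 + b ^ (2 * n)) := by positivity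
  have hexp : Real.exp a < Real.exp b := Real.exp_lt_exp.mpr hab
  have hea : 0 < Real.exp a := Real.exp_pos a
  have := mul_le_mul_of_nonneg_right hfrac hea.le
  nlinarith

/-- For sufficiently small `ε > 0`, if `u₃` is the zero of `Q` in
`(√ε, ε^(1/(2n)))` and `u` solves `-Δu = u^(2n)/(1+u^(2n)) e^u - ε` on a finite
connected graph with `u(x) < u₃` everywhere, then `u(x) < 0` everywhere. -/
theorem stmt10 {V : Type*} [Fintype V] [Nonempty V]
    (G : SimpleGraph V) [DecidableRel G.Adj] (hconn : G.Connected)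
    (μ : V → ℝ) (hμ : ∀ x, 0 < μ x)
    (w : V → V → ℝ) (hwsymm : ∀ x y, w x y = w y x)
    (hwpos : ∀ x y, G.Adj x y → 0 < w x y)
    (n : ℕ) (hn : 1 ≤ n) :
    ∃ ε₀ : ℝ, 0 < ε₀ ∧ ∀ ε : ℝ, 0 < ε → ε < ε₀ →
      ∀ u₃ : ℝ, u₃ ∈ Set.Ioo (Real.sqrt ε) (ε ^ (1 / (2 * (n : ℝ)))) →
        Q n ε u₃ = 0 →
      ∀ u : V → ℝ,
        (∀ x, -((1 / μ x) * ∑ y ∈ G.neighborFinset x, w x y * (u y - u x))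
            = Q n ε (u x)) →
        (∀ x, u x < u₃) →
        ∀ x, u x < 0 := by
  refine ⟨1, one_pos, ?_⟩
  intro ε hε _ u₃ hu₃ hQ u hPDE hlt x
  obtain ⟨x₀, hx₀⟩ := Finite.exists_max u
  have hmax : u x₀ < 0 := by
    by_contra h
    push_neg at h
    have hsum : ∑ y ∈ G.neighborFinset x₀, w x₀ y * (u y - u x₀) ≤ 0 := by
      apply Finset.sum_nonpos
      intro y hy
      exact mul_nonpos_of_nonneg_of_nonpos
        (hwpos x₀ y ((G.mem_neighborFinset x₀ y).mp hy)).le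
        (sub_nonpos.mpr (hx₀ y))
    have h1 : 0 ≤ Q n ε (u x₀) := by
      rw [← hPDE x₀]
      have hμ0 := hμ x₀
      have : (1 / μ x₀) * ∑ y ∈ G.neighborFinset x₀, w x₀ y * (u y - u x₀) ≤ 0 :=
        mul_nonpos_of_nonneg_of_nonpos (by positivity) hsum
      linarith
    have h2 : Q n ε (u x₀) < 0 := by
      rw [← hQ]
      exact Q_strictMonoOn n ε h (hlt x₀)
    linarith
  exact lt_of_le_of_lt (hx₀ x) hmax
end

section
/- Let G=(V,E) be a finite connected graph with positive vertex measure μ and positive symmetric edge weights w, let n≥1 be an integer and ε>0 be sufficiently small, and let u₃ denote the unique zero of Q(u) = (u^{2n}/(1+u^{2n})) e^u − ε in the interval (√ε, ε^{1/(2n)}). If u:V→ℝ solves −Δu = (u^{2n}/(1+u^{2n})) e^u − ε on V and u(x) ≥ u₃ for all x∈V, then u(x) = u₃ for all x∈V. -/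
lemma Q_strict_mono (n : ℕ) (hn : 1 ≤ n) (ε : ℝ) {a b : ℝ} (ha : 0 ≤ a) (hab : a < b) :
    Q n ε a < Q n ε b := by
  unfold Q
  have h2n : 2 * n ≠ 0 := by positivity
  set A := a ^ (2 * n) with hA
  set B := b ^ (2 * n) with hB
  have hA0 : 0 ≤ A := pow_nonneg ha _
  have hAB : A < B := pow_lt_pow_left₀ hab ha h2n
  have hB0 : 0 < B := lt_of_le_of_lt hA0 hAB
  have hgab : A / (1 + A) < B / (1 + B) := by
    rw [div_lt_div_iff₀ (by linarith) (by linarith)]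
    nlinarith
  have hgB : 0 < B / (1 + B) := by positivity
  have hgA : 0 ≤ A / (1 + A) := by positivity
  have key : A / (1 + A) * Real.exp a < B / (1 + B) * Real.exp b := by
    calc A / (1 + A) * Real.exp a ≤ B / (1 + B) * Real.exp a :=
          mul_le_mul_of_nonneg_right hgab.le (Real.exp_pos a).le
      _ < B / (1 + B) * Real.exp b :=
          mul_lt_mul_of_pos_left (Real.exp_lt_exp.2 hab) hgB
  linarith

/-- For sufficiently small `ε > 0`, if `u₃` is the zero of `Q` in
`(√ε, ε^(1/(2n)))` and `u` solves `-Δu = u^(2n)/(1+u^(2n)) e^u - ε` on a finite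
connected graph with `u(x) ≥ u₃` everywhere, then `u ≡ u₃`. -/
theorem stmt11 {V : Type*} [Fintype V] [Nonempty V]
    (G : SimpleGraph V) [DecidableRel G.Adj] (hconn : G.Connected)
    (μ : V → ℝ) (hμ : ∀ x, 0 < μ x)
    (w : V → V → ℝ) (hwsymm : ∀ x y, w x y = w y x)
    (hwpos : ∀ x y, G.Adj x y → 0 < w x y)
    (n : ℕ) (hn : 1 ≤ n) :
    ∃ ε₀ : ℝ, 0 < ε₀ ∧ ∀ ε : ℝ, 0 < ε → ε < ε₀ →
      ∀ u₃ : ℝ, u₃ ∈ Set.Ioo (Real.sqrt ε) (ε ^ (1 / (2 * (n : ℝ)))) →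
        Q n ε u₃ = 0 →
      ∀ u : V → ℝ,
        (∀ x, -((1 / μ x) * ∑ y ∈ G.neighborFinset x, w x y * (u y - u x))
            = Q n ε (u x)) →
        (∀ x, u₃ ≤ u x) →
        ∀ x, u x = u₃ := by
  refine ⟨1, one_pos, ?_⟩
  intro ε hε hε1 u₃ hu₃ hQ3 u heq hge x
  have hu₃pos : 0 < u₃ := lt_trans (Real.sqrt_pos.mpr hε) hu₃.1
  -- Q(u y) ≥ 0 for all y
  have hQnn : ∀ y, 0 ≤ Q n ε (u y) := by
    intro y
    rcases eq_or_lt_of_le (hge y) with h | h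
    · rw [← h, hQ3]
    · have := Q_strict_mono n hn ε hu₃pos.le h
      linarith [hQ3 ▸ this]
  -- the Laplacian terms sum to zero
  classical
  set f : V → V → ℝ := fun a b => if G.Adj a b then w a b * (u b - u a) else 0 with hf
  have hanti : ∀ a b, f a b = -f b a := by
    intro a b
    by_cases h : G.Adj a b
    · simp only [hf, if_pos h, if_pos h.symm, hwsymm a b]; ring
    · simp only [hf, if_neg h, if_neg (fun h' : G.Adj b a => h h'.symm), neg_zero]
  have hnbr : ∀ a : V, (∑ y ∈ G.neighborFinset a, w a y * (u y - u a)) = ∑ y : V, f a y := by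
    intro a
    rw [hf]
    rw [SimpleGraph.neighborFinset_eq_filter, Finset.sum_filter]
  have hsum : (∑ a : V, ∑ b : V, f a b) = 0 := by
    have h1 : (∑ a : V, ∑ b : V, (f a b + f b a)) = 0 := by
      apply Finset.sum_eq_zero
      intro a _
      apply Finset.sum_eq_zero
      intro b _
      rw [hanti a b]; ring
    have h2 : (∑ a : V, ∑ b : V, f b a) = ∑ a : V, ∑ b : V, f a b := Finset.sum_comm
    simp only [Finset.sum_add_distrib] at h1
    linarith
  -- each equation gives the neighbor sum = -μ x * Q(u x)
  have hA : ∀ a : V, (∑ b : V, f a b) = -(μ a * Q n ε (u a)) := by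
    intro a
    have h := heq a
    rw [hnbr a] at h
    have hμa : μ a ≠ 0 := (hμ a).ne'
    field_simp at h
    linarith
  have hsum2 : (∑ a : V, μ a * Q n ε (u a)) = 0 := by
    have : (∑ a : V, -(μ a * Q n ε (u a))) = 0 := by
      rw [← Finset.sum_congr rfl (fun a _ => hA a)]
      exact hsum
    simpa using this
  have hzero : μ x * Q n ε (u x) = 0 := by
    have := (Finset.sum_eq_zero_iff_of_nonneg
      (fun a _ => mul_nonneg (hμ a).le (hQnn a))).mp hsum2 x (Finset.mem_univ x)
    exact this
  have hQx : Q n ε (u x) = 0 := by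
    rcases mul_eq_zero.mp hzero with h | h
    · exact absurd h (hμ x).ne'
    · exact h
  rcases eq_or_lt_of_le (hge x) with h | h
  · exact h.symm
  · have := Q_strict_mono n hn ε hu₃pos.le h
    rw [hQ3, hQx] at this
    exact absurd this (lt_irrefl 0)
end

section
/- Let n≥1 be an integer and define Q(u) = (u^{2n}/(1+u^{2n})) e^u − ε. For all sufficiently small ε>0, the second derivative satisfies Q''(u) > 0 for every u in (ln ε, 1+ln ε) ∪ (−2ε^{1/(2n)}, −√ε) ∪ (√ε, ε^{1/(2n)}); in particular Q' is strictly increasing on each of these three intervals. -/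
open Real Set

section DerivRules

variable {f g dg : ℝ → ℝ} {f' g' d2g x : ℝ}

theorem hasDerivAt_mul_exp (hf : HasDerivAt f f' x) :
    HasDerivAt (fun y => f y * exp y) ((f x + f') * exp x) x :=
  (hf.mul (hasDerivAt_exp x)).congr_deriv (by ring)

theorem hasDerivAt_div_one_add (hg : HasDerivAt g g' x) (h : 1 + g x ≠ 0) :
    HasDerivAt (fun y => g y / (1 + g y)) (g' / (1 + g x) ^ 2) x :=
  (hg.div (hg.const_add 1) h).congr_deriv (by field_simp; ring)

theorem hasDerivAt_div_sq_one_add (hg : HasDerivAt g (dg x) x) (hdg : HasDerivAt dg d2g x)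
    (h : 1 + g x ≠ 0) :
    HasDerivAt (fun y => dg y / (1 + g y) ^ 2)
      ((d2g * (1 + g x) - 2 * dg x ^ 2) / (1 + g x) ^ 3) x :=
  (hdg.div ((hg.const_add 1).pow 2) (pow_ne_zero 2 h)).congr_deriv
    (by simp only [Pi.pow_apply]; field_simp; ring)

end DerivRules

/-- `P(m, g, x)` from the header; it is evaluated at `m = 2n` and `g = x ^ m`. -/
def secondDerivFactor (m g x : ℝ) : ℝ :=
  x ^ 2 * (1 + g) ^ 2 + 2 * m * x * (1 + g) + m * (m - 1) - m * (m + 1) * g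

theorem secondDerivFactor_pos_of_le {m g x : ℝ} (hm : 1 ≤ m) (hg : 0 ≤ g) (hx : x ≤ -(4 * m)) :
    0 < secondDerivFactor m g x := by
  have hy : 4 * m * (1 + g) ≤ -x * (1 + g) := by nlinarith
  have hprod : 4 * m * (1 + g) * (2 * m) ≤ (-x * (1 + g)) * (-x * (1 + g) - 2 * m) :=
    mul_le_mul hy (by nlinarith) (by positivity) (by nlinarith)
  have hmg : 0 ≤ m * (m - 1) * g := mul_nonneg (mul_nonneg (by linarith) (by linarith)) hg
  unfold secondDerivFactor
  nlinarith

theorem secondDerivFactor_pos_of_abs_le {m g x : ℝ} (hm : 2 ≤ m) (hg : 0 ≤ g)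
    (hg' : g ≤ 1 / 100) (hx : |x| ≤ 1 / 100) :
    0 < secondDerivFactor m g x := by
  have hmx : -(2 * m * (1 + g) / 100) ≤ 2 * m * x * (1 + g) := by
    have := neg_abs_le x
    have : 0 ≤ 2 * m * (1 + g) := by positivity
    nlinarith
  have hmg : m * (m + 1) * g ≤ m * (m + 1) * (1 / 100) :=
    mul_le_mul_of_nonneg_left hg' (by positivity)
  have hmg' : m * g ≤ m * (1 / 100) := mul_le_mul_of_nonneg_left hg' (by linarith)
  unfold secondDerivFactor
  nlinarith [sq_nonneg (x * (1 + g))]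

theorem one_add_pow_two_mul_add_two_pos (n : ℕ) (x : ℝ) : 0 < 1 + x ^ (2 * n + 2) := by
  have : 0 ≤ x ^ (2 * n + 2) := (even_two_mul (n + 1)).pow_nonneg x
  linarith

theorem hasDerivAt_pow_two_mul_add_two (n : ℕ) (x : ℝ) :
    HasDerivAt (fun y : ℝ => y ^ (2 * n + 2)) ((2 * n + 2) * x ^ (2 * n + 1)) x :=
  (hasDerivAt_pow (2 * n + 2) x).congr_deriv (by push_cast; ring)

-- Stated for `Q (n + 1)` so that the exponents `2n + 1` and `2n` need no truncated subtraction.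
theorem deriv_Q (n : ℕ) (ε : ℝ) :
    deriv (Q (n + 1) ε) = fun x =>
      (x ^ (2 * n + 2) / (1 + x ^ (2 * n + 2))
        + (2 * n + 2) * x ^ (2 * n + 1) / (1 + x ^ (2 * n + 2)) ^ 2) * exp x := by
  funext x
  have hB : 1 + x ^ (2 * n + 2) ≠ 0 := (one_add_pow_two_mul_add_two_pos n x).ne'
  have hQ : Q (n + 1) ε = fun y => y ^ (2 * n + 2) / (1 + y ^ (2 * n + 2)) * exp y - ε := by
    funext y; simp only [Q, mul_add, mul_one]
  rw [hQ]
  exact ((hasDerivAt_mul_exp (hasDerivAt_div_one_add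
    (hasDerivAt_pow_two_mul_add_two n x) hB)).sub_const ε).deriv

theorem hasDerivAt_deriv_Q (n : ℕ) (ε x : ℝ) :
    HasDerivAt (deriv (Q (n + 1) ε))
      (x ^ (2 * n) * secondDerivFactor (2 * n + 2) (x ^ (2 * n + 2)) x * exp x
        / (1 + x ^ (2 * n + 2)) ^ 3) x := by
  have hg := hasDerivAt_pow_two_mul_add_two n x
  have hdg : HasDerivAt (fun y : ℝ => (2 * n + 2) * y ^ (2 * n + 1))
      ((2 * n + 2) * ((2 * n + 1) * x ^ (2 * n))) x :=
    ((hasDerivAt_pow (2 * n + 1) x).const_mul (2 * (n : ℝ) + 2)).congr_deriv (by push_cast; ring)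
  have hB : 1 + x ^ (2 * n + 2) ≠ 0 := (one_add_pow_two_mul_add_two_pos n x).ne'
  rw [deriv_Q]
  refine (hasDerivAt_mul_exp ((hasDerivAt_div_one_add hg hB).add
    (hasDerivAt_div_sq_one_add (dg := fun y : ℝ => (2 * n + 2) * y ^ (2 * n + 1)) hg hdg hB))
    ).congr_deriv ?_
  simp only [Pi.add_apply, secondDerivFactor]
  field_simp
  ring

theorem deriv_deriv_Q_pos {n : ℕ} {ε x : ℝ} (hx : x ≠ 0)
    (hP : 0 < secondDerivFactor (2 * n + 2) (x ^ (2 * n + 2)) x) :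
    0 < deriv (deriv (Q (n + 1) ε)) x := by
  rw [(hasDerivAt_deriv_Q n ε x).deriv]
  exact div_pos (mul_pos (mul_pos ((even_two_mul n).pow_pos hx) hP) (exp_pos x))
    (pow_pos (one_add_pow_two_mul_add_two_pos n x) 3)

theorem deriv_deriv_Q_pos_of_le {n : ℕ} {ε x : ℝ} (hx : x ≤ -(8 * n + 8)) :
    0 < deriv (deriv (Q (n + 1) ε)) x :=
  deriv_deriv_Q_pos (by rintro rfl; linarith)
    (secondDerivFactor_pos_of_le (by linarith) ((even_two_mul (n + 1)).pow_nonneg x) (by linarith))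

theorem deriv_deriv_Q_pos_of_abs_le {n : ℕ} {ε x : ℝ} (hx : x ≠ 0) (hx' : |x| ≤ 1 / 100) :
    0 < deriv (deriv (Q (n + 1) ε)) x := by
  have hg : x ^ (2 * n + 2) ≤ 1 / 100 := by
    calc x ^ (2 * n + 2) ≤ |x| ^ (2 * n + 2) := (le_abs_self _).trans (abs_pow x _).le
      _ ≤ |x| := pow_le_of_le_one (abs_nonneg x) (hx'.trans (by norm_num)) (by omega)
      _ ≤ 1 / 100 := hx'
  exact deriv_deriv_Q_pos hx (secondDerivFactor_pos_of_abs_le (by linarith)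
    ((even_two_mul (n + 1)).pow_nonneg x) hg hx')

theorem strictMonoOn_deriv_Q {n : ℕ} {ε a b : ℝ}
    (h : ∀ x ∈ Ioo a b, 0 < deriv (deriv (Q (n + 1) ε)) x) :
    StrictMonoOn (deriv (Q (n + 1) ε)) (Ioo a b) := by
  have hdiff : Differentiable ℝ (deriv (Q (n + 1) ε)) :=
    fun x => (hasDerivAt_deriv_Q n ε x).differentiableAt
  exact strictMonoOn_of_deriv_pos (convex_Ioo a b) hdiff.continuous.continuousOn
    (by rwa [interior_Ioo])

/-- For all sufficiently small `ε > 0`, `Q''(u) > 0` for every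
`u` in `(ln ε, 1+ln ε) ∪ (-2ε^(1/(2n)), -√ε) ∪ (√ε, ε^(1/(2n)))`; in
particular `Q'` is strictly increasing on each of these three intervals. -/
theorem stmt13 (n : ℕ) (hn : 1 ≤ n) :
    ∃ ε₀ : ℝ, 0 < ε₀ ∧ ∀ ε : ℝ, 0 < ε → ε < ε₀ →
      (∀ u ∈ Set.Ioo (Real.log ε) (1 + Real.log ε) ∪
          Set.Ioo (-2 * ε ^ (1 / (2 * (n : ℝ)))) (-Real.sqrt ε) ∪
          Set.Ioo (Real.sqrt ε) (ε ^ (1 / (2 * (n : ℝ)))),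
        0 < deriv (deriv (Q n ε)) u) ∧
      StrictMonoOn (deriv (Q n ε)) (Set.Ioo (Real.log ε) (1 + Real.log ε)) ∧
      StrictMonoOn (deriv (Q n ε))
        (Set.Ioo (-2 * ε ^ (1 / (2 * (n : ℝ)))) (-Real.sqrt ε)) ∧
      StrictMonoOn (deriv (Q n ε))
        (Set.Ioo (Real.sqrt ε) (ε ^ (1 / (2 * (n : ℝ))))) := by
  obtain ⟨n, rfl⟩ : ∃ k, n = k + 1 := ⟨n - 1, by omega⟩
  refine ⟨min (exp (-(8 * n + 9))) ((1 / 200) ^ (2 * ((n + 1 : ℕ) : ℝ))), by positivity,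
    fun ε hε hεε₀ => ?_⟩
  have hlog : log ε < -(8 * n + 9) := (log_lt_iff_lt_exp hε).2 (hεε₀.trans_le (min_le_left _ _))
  have hroot : ε ^ (1 / (2 * ((n + 1 : ℕ) : ℝ))) < 1 / 200 := by
    rw [one_div, rpow_inv_lt_iff_of_pos hε.le (by norm_num) (by positivity)]
    exact hεε₀.trans_le (min_le_right _ _)
  have hsqrt : 0 < √ε := sqrt_pos.2 hε
  have hpos : ∀ u ∈ Ioo (log ε) (1 + log ε) ∪
      Ioo (-2 * ε ^ (1 / (2 * ((n + 1 : ℕ) : ℝ)))) (-√ε) ∪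
      Ioo (√ε) (ε ^ (1 / (2 * ((n + 1 : ℕ) : ℝ)))),
      0 < deriv (deriv (Q (n + 1) ε)) u := by
    rintro u ((⟨-, hu⟩ | ⟨hu, hu'⟩) | ⟨hu, hu'⟩)
    · exact deriv_deriv_Q_pos_of_le (by linarith)
    · exact deriv_deriv_Q_pos_of_abs_le (by linarith) (abs_le.2 ⟨by linarith, by linarith⟩)
    · exact deriv_deriv_Q_pos_of_abs_le (by linarith) (abs_le.2 ⟨by linarith, by linarith⟩)
  exact ⟨hpos, strictMonoOn_deriv_Q fun u hu => hpos u (.inl (.inl hu)),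
    strictMonoOn_deriv_Q fun u hu => hpos u (.inl (.inr hu)),
    strictMonoOn_deriv_Q fun u hu => hpos u (.inr hu)⟩
end

section
/- Let n≥1 be an integer and define Q(u) = (u^{2n}/(1+u^{2n})) e^u − ε. For all sufficiently small ε>0, letting u₁∈(ln ε, 1+ln ε), u₂∈(−2ε^{1/(2n)}, −√ε), u₃∈(√ε, ε^{1/(2n)}) denote the three real zeros of Q, one has Q'(u₁) > 0, Q'(u₂) < 0, and Q'(u₃) > 0. -/
/-!
Writing `p = u ^ (2n)`, the quotient rule gives
`Q'(u) = eᵘ u^(2n-1) (2n + u (1 + p)) / (1 + p)²`, so the sign of `Q'(u)` is that of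
`u^(2n-1) (2n + u (1 + p))`. For small `ε` the three windows force `u₁ < -2n`, `-1 < u₂ < 0`
and `u₃ > 0`, and in each case the two factors have the claimed signs.
-/

open Real Set

theorem one_add_pow_two_mul_pos (n : ℕ) (u : ℝ) : 0 < 1 + u ^ (2 * n) := by
  have := (even_two_mul n).pow_nonneg u
  linarith

theorem exp_div_sq_one_add_pow_two_mul_pos (n : ℕ) (u : ℝ) :
    0 < exp u / (1 + u ^ (2 * n)) ^ 2 :=
  div_pos (exp_pos u) (pow_pos (one_add_pow_two_mul_pos n u) 2)

theorem Nat.odd_two_mul_sub_one {n : ℕ} (hn : 1 ≤ n) : Odd (2 * n - 1) := ⟨n - 1, by omega⟩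

theorem Real.rpow_one_div_lt_of_lt_pow {x a : ℝ} {k : ℕ} (hx : 0 ≤ x) (ha : 0 ≤ a) (hk : k ≠ 0)
    (h : x < a ^ k) : x ^ (1 / (k : ℝ)) < a := by
  rwa [one_div, rpow_inv_lt_iff_of_pos hx ha (by positivity), rpow_natCast]

namespace Q

variable {n : ℕ} {ε u : ℝ}

theorem hasDerivAt :
    HasDerivAt (Q n ε)
      (exp u * ((2 * n) * u ^ (2 * n - 1) + u ^ (2 * n) * (1 + u ^ (2 * n)))
        / (1 + u ^ (2 * n)) ^ 2) u := by
  have hpow : HasDerivAt (fun x : ℝ => x ^ (2 * n)) ((2 * n : ℕ) * u ^ (2 * n - 1)) u :=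
    hasDerivAt_pow _ u
  have hden : HasDerivAt (fun x : ℝ => 1 + x ^ (2 * n)) ((2 * n : ℕ) * u ^ (2 * n - 1)) u := by
    simpa using hpow.const_add 1
  have hne := (one_add_pow_two_mul_pos n u).ne'
  refine (((hpow.fun_div hden hne).fun_mul (hasDerivAt_exp u)).sub_const ε).congr_deriv ?_
  push_cast
  field_simp
  ring

theorem deriv_eq (hn : 1 ≤ n) :
    deriv (Q n ε) u =
      exp u / (1 + u ^ (2 * n)) ^ 2 * (u ^ (2 * n - 1) * (2 * n + u * (1 + u ^ (2 * n)))) := by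
  have hsplit : u ^ (2 * n) = u ^ (2 * n - 1) * u := by
    rw [← pow_succ]
    congr 1
    omega
  rw [hasDerivAt.deriv, hsplit]
  ring

theorem deriv_pos_of_lt_neg_two_mul (hn : 1 ≤ n) (hu : u < -(2 * n)) :
    0 < deriv (Q n ε) u := by
  rw [deriv_eq hn]
  have hneg : u < 0 := by linarith [(Nat.cast_nonneg n : (0 : ℝ) ≤ n)]
  have hfactor : 2 * n + u * (1 + u ^ (2 * n)) < 0 := by
    nlinarith [mul_nonpos_of_nonpos_of_nonneg hneg.le ((even_two_mul n).pow_nonneg u)]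
  exact mul_pos (exp_div_sq_one_add_pow_two_mul_pos n u)
    (mul_pos_of_neg_of_neg ((Nat.odd_two_mul_sub_one hn).pow_neg hneg) hfactor)

theorem deriv_neg_of_mem_Ioo (hn : 1 ≤ n) (hu : u ∈ Ioo (-1 : ℝ) 0) :
    deriv (Q n ε) u < 0 := by
  rw [deriv_eq hn]
  obtain ⟨hu₁, hu₀⟩ := hu
  have hpow_lt : u ^ (2 * n) < 1 := by
    rw [← (even_two_mul n).pow_abs]
    exact pow_lt_one₀ (abs_nonneg u) (abs_lt.mpr ⟨hu₁, by linarith⟩) (by omega)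
  have hn' : (1 : ℝ) ≤ n := by exact_mod_cast hn
  have hfactor : 0 < 2 * n + u * (1 + u ^ (2 * n)) := by
    nlinarith [(even_two_mul n).pow_nonneg u]
  exact mul_neg_of_pos_of_neg (exp_div_sq_one_add_pow_two_mul_pos n u)
    (mul_neg_of_neg_of_pos ((Nat.odd_two_mul_sub_one hn).pow_neg hu₀) hfactor)

theorem deriv_pos_of_pos (hn : 1 ≤ n) (hu : 0 < u) : 0 < deriv (Q n ε) u := by
  rw [deriv_eq hn]
  exact mul_pos (exp_div_sq_one_add_pow_two_mul_pos n u) (mul_pos (pow_pos hu _) (by positivity))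

end Q

/-- For all sufficiently small `ε > 0`, if `u₁ ∈ (ln ε, 1+ln ε)`,
`u₂ ∈ (-2ε^(1/(2n)), -√ε)`, `u₃ ∈ (√ε, ε^(1/(2n)))` are the three real zeros
of `Q`, then `Q'(u₁) > 0`, `Q'(u₂) < 0` and `Q'(u₃) > 0`. -/
theorem stmt14 (n : ℕ) (hn : 1 ≤ n) :
    ∃ ε₀ : ℝ, 0 < ε₀ ∧ ∀ ε : ℝ, 0 < ε → ε < ε₀ →
      ∀ u₁ u₂ u₃ : ℝ,
        u₁ ∈ Set.Ioo (Real.log ε) (1 + Real.log ε) →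
        u₂ ∈ Set.Ioo (-2 * ε ^ (1 / (2 * (n : ℝ)))) (-Real.sqrt ε) →
        u₃ ∈ Set.Ioo (Real.sqrt ε) (ε ^ (1 / (2 * (n : ℝ)))) →
        Q n ε u₁ = 0 → Q n ε u₂ = 0 → Q n ε u₃ = 0 →
        0 < deriv (Q n ε) u₁ ∧ deriv (Q n ε) u₂ < 0 ∧ 0 < deriv (Q n ε) u₃ := by
  refine ⟨min (exp (-(2 * n + 1))) ((1 / 2) ^ (2 * n)), by positivity, ?_⟩
  intro ε hε hε₀ u₁ u₂ u₃ hu₁ hu₂ hu₃ _ _ _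
  have hlog : log ε < -(2 * n + 1) :=
    (log_lt_iff_lt_exp hε).mpr (hε₀.trans_le (min_le_left _ _))
  have hroot : ε ^ (1 / (2 * (n : ℝ))) < 1 / 2 := by
    have := rpow_one_div_lt_of_lt_pow hε.le (by norm_num) (by omega : 2 * n ≠ 0)
      (hε₀.trans_le (min_le_right _ _))
    exact_mod_cast this
  have hsqrt := sqrt_nonneg ε
  exact ⟨Q.deriv_pos_of_lt_neg_two_mul hn (by linarith [hu₁.2]),
    Q.deriv_neg_of_mem_Ioo hn ⟨by linarith [hu₂.1], by linarith [hu₂.2]⟩,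
    Q.deriv_pos_of_pos hn (by linarith [hu₃.1])⟩
end

section
/- Let G=(V,E) be a finite connected graph with positive vertex measure μ and positive symmetric edge weights w, let n≥1 be an integer, let c<0, and let h:V→ℝ satisfy h(x)<0 for all x∈V. Then the equation −Δu = h(x)(1 − 1/(1+u^{2n})) e^u − c has at least one solution u:V→ℝ. -/
/-!
Solutions are the critical points of
`J u = ¼ ∑ₓ ∑_{y∼x} w x y (u y - u x)² + ∑ₓ μ x Φₓ (u x)`, where `Φₓ' t = c - h x g t` and
`g t = t^(2n)/(1 + t^(2n)) eᵗ`. As `h x < 0`, `Φₓ'` tends to `+∞` at `+∞` and to `c < 0` at `-∞`,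
so every `Φₓ` is coercive; hence `J` is coercive on `V → ℝ` and attains its minimum, where its
first variation in the direction of each vertex is exactly the equation.
-/

open Filter Topology Set

noncomputable section

def cutoffExp (n : ℕ) (t : ℝ) : ℝ := (1 - 1 / (1 + t ^ (2 * n))) * Real.exp t

lemma one_le_one_add_pow_two_mul (n : ℕ) (t : ℝ) : 1 ≤ 1 + t ^ (2 * n) :=
  le_add_of_nonneg_right ((even_two_mul n).pow_nonneg t)

lemma cutoffExp_nonneg (n : ℕ) (t : ℝ) : 0 ≤ cutoffExp n t := by
  have h := one_le_one_add_pow_two_mul n t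
  exact mul_nonneg (sub_nonneg.2 (div_le_one_of_le₀ h (zero_le_one.trans h))) (Real.exp_nonneg t)

lemma cutoffExp_le_exp (n : ℕ) (t : ℝ) : cutoffExp n t ≤ Real.exp t :=
  mul_le_of_le_one_left (Real.exp_nonneg t)
    (sub_le_self _ (div_nonneg zero_le_one (by linarith [one_le_one_add_pow_two_mul n t])))

lemma half_exp_le_cutoffExp (n : ℕ) {t : ℝ} (ht : 1 ≤ t) : Real.exp t / 2 ≤ cutoffExp n t := by
  have hhalf : 1 / (1 + t ^ (2 * n)) ≤ 1 / 2 :=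
    one_div_le_one_div_of_le two_pos (by linarith [one_le_pow₀ (n := 2 * n) ht])
  unfold cutoffExp
  nlinarith [Real.exp_pos t]

lemma continuous_cutoffExp (n : ℕ) : Continuous (cutoffExp n) :=
  (continuous_const.sub (continuous_const.div (by fun_prop)
    fun t => (by linarith [one_le_one_add_pow_two_mul n t]))).mul Real.continuous_exp

lemma tendsto_cutoffExp_atBot (n : ℕ) : Tendsto (cutoffExp n) atBot (𝓝 0) :=
  tendsto_of_tendsto_of_tendsto_of_le_of_le tendsto_const_nhds Real.tendsto_exp_atBot
    (cutoffExp_nonneg n) (cutoffExp_le_exp n)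

lemma tendsto_cutoffExp_atTop (n : ℕ) : Tendsto (cutoffExp n) atTop atTop :=
  tendsto_atTop_mono' atTop ((eventually_ge_atTop 1).mono fun _ => half_exp_le_cutoffExp n)
    (Real.tendsto_exp_atTop.atTop_div_const two_pos)

theorem tendsto_atTop_of_hasDerivAt_of_eventually_le {F f : ℝ → ℝ} {ε : ℝ}
    (hF : ∀ t, HasDerivAt F (f t) t) (hε : 0 < ε) (hf : ∀ᶠ t in atTop, ε ≤ f t) :
    Tendsto F atTop atTop := by
  obtain ⟨T, hT⟩ := eventually_atTop.1 hf
  have hgrowth : ∀ t, T ≤ t → ε * (t - T) ≤ F t - F T := fun t ht =>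
    (convex_Ici T).mul_sub_le_image_sub_of_le_deriv
      (fun s _ => (hF s).continuousAt.continuousWithinAt)
      (fun s _ => (hF s).differentiableAt.differentiableWithinAt)
      (fun s hs => (hF s).deriv ▸ hT s (interior_Ici.subset hs).le) T self_mem_Ici t ht ht
  have hlin : Tendsto (fun t => F T + ε * (t - T)) atTop atTop :=
    tendsto_atTop_add_const_left _ _
      ((tendsto_atTop_add_const_right _ _ tendsto_id).const_mul_atTop hε)
  exact tendsto_atTop_mono' atTop (eventually_atTop.2 ⟨T, fun t ht => by linarith [hgrowth t ht]⟩)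
    hlin

theorem tendsto_cocompact_atTop_of_hasDerivAt {F f : ℝ → ℝ} {ε : ℝ}
    (hF : ∀ t, HasDerivAt F (f t) t) (hε : 0 < ε) (htop : ∀ᶠ t in atTop, ε ≤ f t)
    (hbot : ∀ᶠ t in atBot, f t ≤ -ε) : Tendsto F (cocompact ℝ) atTop := by
  rw [cocompact_eq_atBot_atTop]
  refine Tendsto.sup ?_ (tendsto_atTop_of_hasDerivAt_of_eventually_le hF hε htop)
  have hreflect : Tendsto (fun t => F (-t)) atTop atTop :=
    tendsto_atTop_of_hasDerivAt_of_eventually_le (f := fun t => -f (-t))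
      (fun t => by simpa [Function.comp_def] using (hF (-t)).comp t (hasDerivAt_neg t)) hε
      ((tendsto_neg_atTop_atBot.eventually hbot).mono fun t ht => by linarith)
  simpa [Function.comp_def] using hreflect.comp tendsto_neg_atBot_atTop

theorem tendsto_cocompact_of_hasDerivAt_sub_mul_cutoffExp {Φ : ℝ → ℝ} (n : ℕ) {a c : ℝ}
    (ha : a < 0) (hc : c < 0) (hΦ : ∀ t, HasDerivAt Φ (c - a * cutoffExp n t) t) :
    Tendsto Φ (cocompact ℝ) atTop := by
  have htop : Tendsto (fun t => c - a * cutoffExp n t) atTop atTop := by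
    simpa [sub_eq_add_neg] using
      tendsto_atTop_add_const_left _ c ((tendsto_cutoffExp_atTop n).const_mul_atTop (neg_pos.2 ha))
  have hbot : Tendsto (fun t => c - a * cutoffExp n t) atBot (𝓝 c) := by
    simpa using ((tendsto_cutoffExp_atBot n).const_mul a).const_sub c
  exact tendsto_cocompact_atTop_of_hasDerivAt hΦ (by linarith : 0 < -(c / 2))
    (htop.eventually_ge_atTop _) ((hbot.eventually (gt_mem_nhds (by linarith : c < c / 2))).mono
      fun t ht => by linarith)

theorem tendsto_sum_apply_cocompact_atTop {ι : Type*} [Fintype ι] {X : ι → Type*}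
    [∀ i, TopologicalSpace (X i)] (φ : ∀ i, X i → ℝ)
    (hφ : ∀ i, Tendsto (φ i) (cocompact (X i)) atTop) (hbdd : ∀ i, BddBelow (range (φ i))) :
    Tendsto (fun u : ∀ i, X i => ∑ i, φ i (u i)) (cocompact (∀ i, X i)) atTop := by
  choose m hm using fun i => (hbdd i)
  rw [← coprodᵢ_cocompact, Filter.coprodᵢ, tendsto_iSup]
  intro i
  have hsum : ∀ u : ∀ i, X i, φ i (u i) + (∑ j, m j - m i) ≤ ∑ j, φ j (u j) := fun u => by
    have hsingle := Finset.single_le_sum (f := fun j => φ j (u j) - m j)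
      (fun j _ => sub_nonneg.2 (hm j (mem_range_self _))) (Finset.mem_univ i)
    simp only [Finset.sum_sub_distrib] at hsingle
    linarith
  exact tendsto_atTop_mono hsum
    (tendsto_atTop_add_const_right _ _ ((hφ i).comp tendsto_comap))

section WeightedGraph

variable {V : Type*} [Fintype V] (G : SimpleGraph V) [DecidableRel G.Adj] (w : V → V → ℝ)

/-- `Δu x = weightedLaplacian G w u x / μ x`. -/
def weightedLaplacian (u : V → ℝ) (x : V) : ℝ := ∑ y ∈ G.neighborFinset x, w x y * (u y - u x)

def dirichletForm (u v : V → ℝ) : ℝ :=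
  ∑ x, ∑ y ∈ G.neighborFinset x, w x y * (u y - u x) * (v y - v x)

lemma sum_sum_neighborFinset_comm (f : V → V → ℝ) :
    ∑ x, ∑ y ∈ G.neighborFinset x, f x y = ∑ x, ∑ y ∈ G.neighborFinset x, f y x := by
  simp only [SimpleGraph.neighborFinset_eq_filter, Finset.sum_filter]
  rw [Finset.sum_comm]
  simp only [G.adj_comm]

theorem dirichletForm_eq_neg_two_mul_sum (hw : ∀ x y, w x y = w y x) (u v : V → ℝ) :
    dirichletForm G w u v = -2 * ∑ x, v x * weightedLaplacian G w u x := by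
  set A := ∑ x, ∑ y ∈ G.neighborFinset x, w x y * (u y - u x) * v x
  have hswap : ∑ x, ∑ y ∈ G.neighborFinset x, w x y * (u y - u x) * v y = -A := by
    rw [sum_sum_neighborFinset_comm, ← Finset.sum_neg_distrib]
    refine Finset.sum_congr rfl fun x _ => ?_
    rw [← Finset.sum_neg_distrib]
    exact Finset.sum_congr rfl fun y _ => by rw [hw y x]; ring
  calc dirichletForm G w u v
      = ∑ x, ∑ y ∈ G.neighborFinset x, w x y * (u y - u x) * v y - A := by
        simp only [dirichletForm, A, ← Finset.sum_sub_distrib, mul_sub]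
    _ = -2 * A := by rw [hswap]; ring
    _ = -2 * ∑ x, v x * weightedLaplacian G w u x := by
        simp only [A, weightedLaplacian, Finset.mul_sum]
        exact Finset.sum_congr rfl fun x _ => Finset.sum_congr rfl fun y _ => by ring

lemma dirichletForm_self_nonneg (hw : ∀ x y, G.Adj x y → 0 ≤ w x y) (u : V → ℝ) :
    0 ≤ dirichletForm G w u u :=
  Finset.sum_nonneg fun x _ => Finset.sum_nonneg fun y hy => by
    rw [mul_assoc]
    exact mul_nonneg (hw x y ((G.mem_neighborFinset x y).1 hy)) (mul_self_nonneg _)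

theorem hasDerivAt_dirichletForm_add_smul (u v : V → ℝ) :
    HasDerivAt (fun s : ℝ => dirichletForm G w (u + s • v) (u + s • v))
      (2 * dirichletForm G w u v) 0 := by
  have hdiff : ∀ x y, HasDerivAt (fun s : ℝ => (u + s • v) y - (u + s • v) x) (v y - v x) 0 :=
    fun x y => ((hasDerivAt_mul_const (v y)).const_add (u y)).sub
      ((hasDerivAt_mul_const (v x)).const_add (u x))
  simp only [dirichletForm, Finset.mul_sum]
  refine HasDerivAt.fun_sum fun x _ => HasDerivAt.fun_sum fun y _ => ?_
  refine (((hdiff x y).const_mul (w x y)).fun_mul (hdiff x y)).congr_deriv ?_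
  simp only [zero_smul, add_zero]
  ring

def variationalEnergy (μ : V → ℝ) (Φ : V → ℝ → ℝ) (u : V → ℝ) : ℝ :=
  dirichletForm G w u u / 4 + ∑ x, μ x * Φ x (u x)

theorem hasDerivAt_sum_mul_comp_add_smul {Φ ψ : V → ℝ → ℝ}
    (hΦ : ∀ x t, HasDerivAt (Φ x) (ψ x t) t) (μ u v : V → ℝ) :
    HasDerivAt (fun s : ℝ => ∑ x, μ x * Φ x ((u + s • v) x)) (∑ x, μ x * (ψ x (u x) * v x)) 0 :=
  HasDerivAt.fun_sum fun x _ =>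
    ((hΦ x (u x)).comp_of_eq 0 ((hasDerivAt_mul_const (v x)).const_add (u x))
      (by simp)).const_mul (μ x)

theorem weightedLaplacian_eq_of_forall_variationalEnergy_le (hw : ∀ x y, w x y = w y x)
    {μ : V → ℝ} {Φ ψ : V → ℝ → ℝ} (hΦ : ∀ x t, HasDerivAt (Φ x) (ψ x t) t) {u : V → ℝ}
    (hu : ∀ v, variationalEnergy G w μ Φ u ≤ variationalEnergy G w μ Φ v) (x₀ : V) :
    weightedLaplacian G w u x₀ = μ x₀ * ψ x₀ (u x₀) := by
  classical
  set v : V → ℝ := Pi.single x₀ 1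
  have hderiv : HasDerivAt (fun s : ℝ => variationalEnergy G w μ Φ (u + s • v))
      (2 * dirichletForm G w u v / 4 + ∑ x, μ x * (ψ x (u x) * v x)) 0 :=
    ((hasDerivAt_dirichletForm_add_smul G w u v).div_const 4).add
      (hasDerivAt_sum_mul_comp_add_smul hΦ μ u v)
  have hmin : IsLocalMin (fun s : ℝ => variationalEnergy G w μ Φ (u + s • v)) 0 :=
    Eventually.of_forall fun s => by simpa using hu (u + s • v)
  have hzero := hmin.hasDerivAt_eq_zero hderiv
  simp [dirichletForm_eq_neg_two_mul_sum G w hw, v, Pi.single_apply] at hzero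
  linarith

theorem exists_forall_variationalEnergy_le (hw : ∀ x y, G.Adj x y → 0 ≤ w x y) {μ : V → ℝ}
    (hμ : ∀ x, 0 < μ x) {Φ : V → ℝ → ℝ} (hΦc : ∀ x, Continuous (Φ x))
    (hΦ : ∀ x, Tendsto (Φ x) (cocompact ℝ) atTop) :
    ∃ u, ∀ v, variationalEnergy G w μ Φ u ≤ variationalEnergy G w μ Φ v := by
  have hcont : Continuous (variationalEnergy G w μ Φ) := by
    unfold variationalEnergy dirichletForm
    fun_prop
  have hbdd : ∀ x, BddBelow (range fun t => μ x * Φ x t) := fun x =>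
    let ⟨t₀, ht₀⟩ := ((hΦc x).const_mul (μ x)).exists_forall_le ((hΦ x).const_mul_atTop (hμ x))
    ⟨_, forall_mem_range.2 ht₀⟩
  have hcoercive : Tendsto (variationalEnergy G w μ Φ) (cocompact (V → ℝ)) atTop :=
    tendsto_atTop_mono (fun u => le_add_of_nonneg_left (by
        have := dirichletForm_self_nonneg G w hw u; positivity))
      (tendsto_sum_apply_cocompact_atTop (fun x t => μ x * Φ x t)
        (fun x => (hΦ x).const_mul_atTop (hμ x)) hbdd)
  exact hcont.exists_forall_le hcoercive

end WeightedGraph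

theorem stmt18_general {V : Type*} [Fintype V]
    (G : SimpleGraph V) [DecidableRel G.Adj]
    (μ : V → ℝ) (hμ : ∀ x, 0 < μ x)
    (w : V → V → ℝ) (hwsymm : ∀ x y, w x y = w y x)
    (hwpos : ∀ x y, G.Adj x y → 0 < w x y)
    (n : ℕ) (c : ℝ) (hc : c < 0)
    (h : V → ℝ) (hh : ∀ x, h x < 0) :
    ∃ u : V → ℝ, ∀ x,
      -((1 / μ x) * ∑ y ∈ G.neighborFinset x, w x y * (u y - u x))
        = h x * (1 - 1 / (1 + (u x) ^ (2 * n))) * Real.exp (u x) - c := by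
  set ψ : V → ℝ → ℝ := fun x t => c - h x * cutoffExp n t
  set Φ : V → ℝ → ℝ := fun x t => ∫ s in (0 : ℝ)..t, ψ x s
  have hΦ : ∀ x t, HasDerivAt (Φ x) (ψ x t) t := fun x t =>
    ((continuous_const.sub (continuous_const.mul (continuous_cutoffExp n))).integral_hasStrictDerivAt
      0 t).hasDerivAt
  obtain ⟨u, hu⟩ := exists_forall_variationalEnergy_le G w (fun x y hxy => (hwpos x y hxy).le) hμ
    (fun x => continuous_iff_continuousAt.2 fun t => (hΦ x t).continuousAt)
    (fun x => tendsto_cocompact_of_hasDerivAt_sub_mul_cutoffExp n (hh x) hc (hΦ x))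
  refine ⟨u, fun x => ?_⟩
  change -((1 / μ x) * weightedLaplacian G w u x) = _
  rw [weightedLaplacian_eq_of_forall_variationalEnergy_le G w hwsymm hΦ hu x,
    one_div, inv_mul_cancel_left₀ (hμ x).ne']
  simp only [ψ, cutoffExp]
  ring

/-- If `c < 0` and `h < 0` on `V`, then the equation
`-Δu = h (1 - 1/(1+u^(2n))) e^u - c` has at least one solution on a finite
connected graph. -/
theorem stmt18 {V : Type*} [Fintype V] [Nonempty V]
    (G : SimpleGraph V) [DecidableRel G.Adj] (hconn : G.Connected)
    (μ : V → ℝ) (hμ : ∀ x, 0 < μ x)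
    (w : V → V → ℝ) (hwsymm : ∀ x y, w x y = w y x)
    (hwpos : ∀ x y, G.Adj x y → 0 < w x y)
    (n : ℕ) (hn : 1 ≤ n) (c : ℝ) (hc : c < 0)
    (h : V → ℝ) (hh : ∀ x, h x < 0) :
    ∃ u : V → ℝ, ∀ x,
      -((1 / μ x) * ∑ y ∈ G.neighborFinset x, w x y * (u y - u x))
        = h x * (1 - 1 / (1 + (u x) ^ (2 * n))) * Real.exp (u x) - c :=
  stmt18_general G μ hμ w hwsymm hwpos n c hc h hh
end
end

section
/- Let G=(V,E) be a finite connected graph with positive vertex measure μ and positive symmetric edge weights w, let n≥1 be an integer, and let h:V→ℝ change sign on V and satisfy ∫_V h dμ < 0. Then there exists a constant C>0 such that for every t∈[0,1], every solution u:V→ℝ of −Δu = h(x)(u^{2n}/(1+u^{2n})) e^u − t satisfies max_{x∈V} |u(x)| ≤ C. -/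
/-!
Write `L u x = ∑_{y ~ x} w x y (u y - u x)`, so that the equation reads
`L u = μ (t - h P(u) eᵘ)` with `P(s) = s^{2n} / (1 + s^{2n}) ∈ [0, 1)`.

Upper bound. By the strong maximum principle (`L u ≥ 0` at a maximum point where `h = 0`) the
maximum `M` of `u` is attained at a vertex where `h ≠ 0`, and if `M ≥ 1` the sign of `L u` there
forces `h > 0`. Summing the equation gives `∑ μ h P(u) eᵘ = t ∑ μ`, hence `e^M ≲ 1 + e^N` with
`N` the maximum of `u` on `{h < 0}`; at a vertex realising `N` the equation gives
`e^N ≲ L u ≲ M - N` when `N ≥ 1`. Together these bound `M`.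

Lower bound. Pairing `L u` with `u - min u` gives the Dirichlet energy, and a path of length
`< |V|` converts an energy bound into an oscillation bound: `osc u ≤ K sup |L u|`. With the upper
bound, `sup |L u|` is bounded, so it suffices to bound `M` from below. If `M ≪ 0`, then
`sup |L u| = O(e^M)`, so `u` stays within `O(e^M)` of `M` and `P(u) ≈ 1`; then
`∑ μ h P(u) eᵘ ≈ e^M ∑ μ h < 0`, contradicting `∑ μ h P(u) eᵘ = t ∑ μ ≥ 0`.
-/

open Finset Real

theorem exists_pos_forall_le {ι : Type*} [Finite ι] {p : ι → Prop} {f : ι → ℝ}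
    (hf : ∀ i, p i → 0 < f i) : ∃ c, 0 < c ∧ ∀ i, p i → c ≤ f i := by
  classical
  have := Fintype.ofFinite ι
  rcases (univ.filter p).eq_empty_or_nonempty with hempty | hne
  · exact ⟨1, one_pos, fun i hi => absurd (mem_filter.2 ⟨mem_univ i, hi⟩) (hempty ▸ notMem_empty i)⟩
  · obtain ⟨j, hj, hmin⟩ := exists_min_image _ f hne
    exact ⟨f j, hf j (mem_filter.1 hj).2, fun i hi => hmin i (mem_filter.2 ⟨mem_univ i, hi⟩)⟩

namespace SimpleGraph

variable {V : Type*}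

def weightedLaplacian [Fintype V] (G : SimpleGraph V) [DecidableRel G.Adj] (w : V → V → ℝ)
    (u : V → ℝ) (x : V) : ℝ :=
  ∑ y ∈ G.neighborFinset x, w x y * (u y - u x)

def dirichletEnergy [Fintype V] (G : SimpleGraph V) [DecidableRel G.Adj] (w : V → V → ℝ)
    (u : V → ℝ) : ℝ :=
  ∑ x, ∑ y ∈ G.neighborFinset x, w x y * (u y - u x) ^ 2

variable {G : SimpleGraph V} {u : V → ℝ}

theorem Reachable.mem_of_forall_adj {s : Set V} (hs : ∀ x y, G.Adj x y → x ∈ s → y ∈ s)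
    {a b : V} (hab : G.Reachable a b) (ha : a ∈ s) : b ∈ s := by
  rw [reachable_iff_reflTransGen] at hab
  induction hab with
  | refl => exact ha
  | tail _ hbc ih => exact hs _ _ hbc ih

theorem abs_sub_le_of_walk {g : ℝ} (hg : ∀ a b, G.Adj a b → |u a - u b| ≤ g) {a b : V}
    (p : G.Walk a b) : |u a - u b| ≤ p.length * g := by
  induction p with
  | nil => simp
  | @cons a c b hac q ih =>
    rw [Walk.length_cons, Nat.cast_succ]
    linarith [abs_sub_le (u a) (u c) (u b), hg a c hac]

variable [Fintype V] [DecidableRel G.Adj] {w : V → V → ℝ}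

theorem sum_sum_neighborFinset_swap (F : V → V → ℝ) :
    ∑ x, ∑ y ∈ G.neighborFinset x, F x y = ∑ x, ∑ y ∈ G.neighborFinset x, F y x := by
  rw [Finset.sum_comm' (t' := univ) (s' := fun y => G.neighborFinset y)]
  simp [G.adj_comm]

theorem sum_weightedLaplacian_mul (hw : ∀ x y, w x y = w y x) (u v : V → ℝ) :
    ∑ x, G.weightedLaplacian w u x * v x =
      -(1 / 2) * ∑ x, ∑ y ∈ G.neighborFinset x, w x y * (u y - u x) * (v y - v x) := by
  have hswap := sum_sum_neighborFinset_swap (G := G) fun x y => w x y * (u y - u x) * v x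
  have htwice : 2 * ∑ x, ∑ y ∈ G.neighborFinset x, w x y * (u y - u x) * v x =
      -∑ x, ∑ y ∈ G.neighborFinset x, w x y * (u y - u x) * (v y - v x) := by
    rw [two_mul]
    nth_rewrite 2 [hswap]
    simp only [← sum_add_distrib, ← sum_neg_distrib]
    refine sum_congr rfl fun x _ => sum_congr rfl fun y _ => ?_
    rw [hw y x]
    ring
  simp only [weightedLaplacian, sum_mul]
  linarith

theorem sum_weightedLaplacian (hw : ∀ x y, w x y = w y x) (u : V → ℝ) :
    ∑ x, G.weightedLaplacian w u x = 0 := by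
  simpa using sum_weightedLaplacian_mul hw u 1

theorem sum_weightedLaplacian_mul_sub (hw : ∀ x y, w x y = w y x) (u : V → ℝ) (c : ℝ) :
    ∑ x, G.weightedLaplacian w u x * (u x - c) = -(1 / 2) * G.dirichletEnergy w u := by
  rw [sum_weightedLaplacian_mul hw u (fun x => u x - c), dirichletEnergy]
  congr 1
  refine sum_congr rfl fun x _ => sum_congr rfl fun y _ => ?_
  ring

theorem weightedLaplacian_le_mul {x : V} {M : ℝ} (hw : ∀ y, G.Adj x y → 0 ≤ w x y)
    (hM : ∀ y, u y ≤ M) :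
    G.weightedLaplacian w u x ≤ (∑ y ∈ G.neighborFinset x, w x y) * (M - u x) := by
  rw [weightedLaplacian, sum_mul]
  refine sum_le_sum fun y hy => ?_
  exact mul_le_mul_of_nonneg_left (by linarith [hM y]) (hw y ((mem_neighborFinset G x y).1 hy))

theorem weightedLaplacian_nonpos_of_isMax {x : V} (hw : ∀ y, G.Adj x y → 0 ≤ w x y)
    (hx : ∀ y, u y ≤ u x) : G.weightedLaplacian w u x ≤ 0 := by
  simpa using weightedLaplacian_le_mul hw hx

theorem Connected.eq_of_weightedLaplacian_nonneg_of_isMax (hG : G.Connected)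
    (hw : ∀ x y, G.Adj x y → 0 < w x y)
    (hu : ∀ x, (∀ y, u y ≤ u x) → 0 ≤ G.weightedLaplacian w u x) (x y : V) : u x = u y := by
  have := hG.nonempty
  obtain ⟨x₀, -, hx₀⟩ := exists_max_image univ u univ_nonempty
  have hS : ∀ a b, G.Adj a b → a ∈ {z | u z = u x₀} → b ∈ {z | u z = u x₀} := by
    intro a b hab (ha : u a = u x₀)
    have hmax : ∀ y, u y ≤ u a := fun y => ha ▸ hx₀ y (mem_univ y)
    have hw' : ∀ y, G.Adj a y → 0 ≤ w a y := fun y hy => (hw a y hy).le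
    have hterm := (sum_eq_zero_iff_of_nonpos fun y hy =>
        mul_nonpos_of_nonneg_of_nonpos (hw' y ((mem_neighborFinset G a y).1 hy))
          (sub_nonpos.2 (hmax y))).1
      (le_antisymm (weightedLaplacian_nonpos_of_isMax hw' hmax) (hu a hmax)) b
      ((mem_neighborFinset G a b).2 hab)
    rcases mul_eq_zero.1 hterm with h | h
    · exact absurd h (hw a b hab).ne'
    · exact (sub_eq_zero.1 h).trans ha
  exact ((hG x₀ x).mem_of_forall_adj hS rfl).trans ((hG x₀ y).mem_of_forall_adj hS rfl).symm

theorem mul_sq_sub_le_dirichletEnergy (hw : ∀ x y, G.Adj x y → 0 ≤ w x y) {a b : V}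
    (hab : G.Adj a b) : w a b * (u a - u b) ^ 2 ≤ G.dirichletEnergy w u := by
  have hnonneg : ∀ x, ∀ y ∈ G.neighborFinset x, 0 ≤ w x y * (u y - u x) ^ 2 :=
    fun x y hy => mul_nonneg (hw x y ((mem_neighborFinset G x y).1 hy)) (sq_nonneg _)
  calc w a b * (u a - u b) ^ 2 = w a b * (u b - u a) ^ 2 := by ring
    _ ≤ ∑ y ∈ G.neighborFinset a, w a y * (u y - u a) ^ 2 :=
      single_le_sum (hnonneg a) ((mem_neighborFinset G a b).2 hab)
    _ ≤ G.dirichletEnergy w u :=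
      single_le_sum (f := fun x => ∑ y ∈ G.neighborFinset x, w x y * (u y - u x) ^ 2)
        (fun x _ => sum_nonneg (hnonneg x)) (mem_univ a)

theorem dirichletEnergy_le (hw : ∀ x y, w x y = w y x) {B m M : ℝ}
    (hB : ∀ x, |G.weightedLaplacian w u x| ≤ B) (hm : ∀ x, m ≤ u x) (hM : ∀ x, u x ≤ M) :
    G.dirichletEnergy w u ≤ 2 * (Fintype.card V * B * (M - m)) := by
  have hterm : ∀ x, -(B * (M - m)) ≤ G.weightedLaplacian w u x * (u x - m) := fun x =>
    calc -(B * (M - m)) ≤ -(|G.weightedLaplacian w u x| * |u x - m|) := by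
          rw [abs_of_nonneg (sub_nonneg.2 (hm x))]
          exact neg_le_neg (mul_le_mul (hB x) (by linarith [hM x]) (by linarith [hm x])
            ((abs_nonneg _).trans (hB x)))
      _ ≤ _ := by rw [← abs_mul]; exact neg_abs_le _
  have hsum := sum_le_sum fun x (_ : x ∈ univ) => hterm x
  rw [sum_weightedLaplacian_mul_sub hw u m, sum_const, card_univ, nsmul_eq_mul] at hsum
  linarith

theorem dirichletEnergy_nonneg (hw : ∀ x y, G.Adj x y → 0 ≤ w x y) :
    0 ≤ G.dirichletEnergy w u :=
  sum_nonneg fun x _ => sum_nonneg fun y hy =>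
    mul_nonneg (hw x y ((mem_neighborFinset G x y).1 hy)) (sq_nonneg _)

theorem Connected.sq_sub_le_dirichletEnergy (hG : G.Connected) {w₀ : ℝ} (hw₀ : 0 < w₀)
    (hw₀le : ∀ x y, G.Adj x y → w₀ ≤ w x y) (x y : V) :
    (u x - u y) ^ 2 ≤ (Fintype.card V - 1) ^ 2 * G.dirichletEnergy w u / w₀ := by
  classical
  set E := G.dirichletEnergy w u
  have hnonneg : ∀ x y, G.Adj x y → 0 ≤ w x y := fun x y hxy => hw₀.le.trans (hw₀le x y hxy)
  have hedge : ∀ a b, G.Adj a b → |u a - u b| ≤ √(E / w₀) := fun a b hab => by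
    rw [← sqrt_sq_eq_abs]
    refine sqrt_le_sqrt ((le_div_iff₀ hw₀).2 ?_)
    calc (u a - u b) ^ 2 * w₀ ≤ w a b * (u a - u b) ^ 2 := by
          rw [mul_comm]; exact mul_le_mul_of_nonneg_right (hw₀le a b hab) (sq_nonneg _)
      _ ≤ E := mul_sq_sub_le_dirichletEnergy hnonneg hab
  obtain ⟨p⟩ := hG.preconnected x y
  have hlen : (p.bypass.length : ℝ) ≤ Fintype.card V - 1 := by
    have : p.bypass.length + 1 ≤ Fintype.card V := p.bypass_isPath.length_lt
    rw [le_sub_iff_add_le]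
    exact_mod_cast this
  calc (u x - u y) ^ 2 = |u x - u y| ^ 2 := (sq_abs _).symm
    _ ≤ ((Fintype.card V - 1) * √(E / w₀)) ^ 2 := by
        refine pow_le_pow_left₀ (abs_nonneg _) ?_ 2
        exact (abs_sub_le_of_walk hedge p.bypass).trans
          (mul_le_mul_of_nonneg_right hlen (sqrt_nonneg _))
    _ = (Fintype.card V - 1) ^ 2 * E / w₀ := by
        rw [mul_pow, sq_sqrt (div_nonneg (dirichletEnergy_nonneg hnonneg) hw₀.le), mul_div_assoc]

theorem Connected.exists_sub_le_of_abs_weightedLaplacian_le (hG : G.Connected)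
    (hsymm : ∀ x y, w x y = w y x) (hpos : ∀ x y, G.Adj x y → 0 < w x y) :
    ∃ K, 0 ≤ K ∧ ∀ (u : V → ℝ) (B : ℝ), (∀ x, |G.weightedLaplacian w u x| ≤ B) →
      ∀ x y, u x - u y ≤ K * B := by
  classical
  obtain ⟨w₀, hw₀, hw₀le⟩ := exists_pos_forall_le (p := fun e : V × V => G.Adj e.1 e.2)
    (f := fun e => w e.1 e.2) fun e he => hpos _ _ he
  set N : ℝ := (Fintype.card V : ℝ)
  set K := 2 * (N - 1) ^ 2 * N / w₀
  refine ⟨K, by positivity, fun u B hB x y => ?_⟩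
  have := hG.nonempty
  obtain ⟨xM, -, hxM⟩ := exists_max_image univ u univ_nonempty
  obtain ⟨xm, -, hxm⟩ := exists_min_image univ u univ_nonempty
  have hMm : 0 ≤ u xM - u xm := sub_nonneg.2 (hxm xM (mem_univ _))
  have hsq : (u xM - u xm) * (u xM - u xm) ≤ K * B * (u xM - u xm) :=
    calc (u xM - u xm) * (u xM - u xm) ≤ (N - 1) ^ 2 * G.dirichletEnergy w u / w₀ := by
          rw [← sq]; exact hG.sq_sub_le_dirichletEnergy hw₀ (fun a b hab => hw₀le (a, b) hab) xM xm
      _ ≤ (N - 1) ^ 2 * (2 * (N * B * (u xM - u xm))) / w₀ := by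
          gcongr
          exact dirichletEnergy_le hsymm hB (fun z => hxm z (mem_univ z)) fun z => hxM z (mem_univ z)
      _ = K * B * (u xM - u xm) := by ring
  have hxy : u x - u y ≤ u xM - u xm := sub_le_sub (hxM x (mem_univ x)) (hxm y (mem_univ y))
  rcases hMm.eq_or_lt with hzero | hpos
  · have hB0 : 0 ≤ B := (abs_nonneg _).trans (hB x)
    have : 0 ≤ K * B := by positivity
    linarith
  · exact hxy.trans (le_of_mul_le_mul_right hsq hpos)

end SimpleGraph

noncomputable def evenPowRatio (n : ℕ) (s : ℝ) : ℝ := s ^ (2 * n) / (1 + s ^ (2 * n))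

section evenPowRatio

variable {n : ℕ} {s : ℝ}

theorem evenPowRatio_nonneg (n : ℕ) (s : ℝ) : 0 ≤ evenPowRatio n s := by
  have := (even_two_mul n).pow_nonneg s
  unfold evenPowRatio
  positivity

theorem evenPowRatio_le_one (n : ℕ) (s : ℝ) : evenPowRatio n s ≤ 1 := by
  have := (even_two_mul n).pow_nonneg s
  rw [evenPowRatio, div_le_one (by positivity)]
  linarith

theorem one_half_le_evenPowRatio (hs : 1 ≤ s) : 1 / 2 ≤ evenPowRatio n s := by
  have := one_le_pow₀ (n := 2 * n) hs
  rw [evenPowRatio, le_div_iff₀ (by positivity)]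
  linarith

theorem one_sub_inv_le_evenPowRatio (hn : 1 ≤ n) {C : ℝ} (hC : 1 ≤ C) (hs : s ≤ -C) :
    1 - 1 / C ≤ evenPowRatio n s := by
  have hpow : C ≤ s ^ (2 * n) :=
    calc C ≤ C ^ (2 * n) := le_self_pow₀ hC (by omega)
      _ ≤ (-s) ^ (2 * n) := pow_le_pow_left₀ (by linarith) (by linarith) _
      _ = s ^ (2 * n) := (even_two_mul n).neg_pow s
  have hC0 : 0 < C := by linarith
  have : 1 - evenPowRatio n s = 1 / (1 + s ^ (2 * n)) := by
    rw [evenPowRatio, one_sub_div (by linarith)]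
    ring
  linarith [one_div_le_one_div_of_le hC0 (by linarith : C ≤ 1 + s ^ (2 * n))]

theorem abs_mul_evenPowRatio_mul_exp_le {M : ℝ} (hs : s ≤ M) (a : ℝ) :
    |a * (evenPowRatio n s * exp s)| ≤ |a| * exp M := by
  rw [abs_mul, abs_of_nonneg (mul_nonneg (evenPowRatio_nonneg n s) (exp_pos s).le)]
  exact mul_le_mul_of_nonneg_left
    ((mul_le_of_le_one_left (exp_pos s).le (evenPowRatio_le_one n s)).trans (exp_le_exp.2 hs))
    (abs_nonneg a)

theorem mul_evenPowRatio_mul_exp_le (hn : 1 ≤ n) {C M : ℝ} (hC : 1 ≤ C) (hs : s ≤ -C)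
    (hsM : s ≤ M) (a : ℝ) :
    a * (evenPowRatio n s * exp s) ≤ a * exp M + |a| * (exp M * (1 / C + (M - s))) := by
  have hupper : evenPowRatio n s * exp s ≤ exp M :=
    (mul_le_of_le_one_left (exp_pos s).le (evenPowRatio_le_one n s)).trans (exp_le_exp.2 hsM)
  have hexp : exp M * (1 - (M - s)) ≤ exp s := by
    have := mul_le_mul_of_nonneg_left (add_one_le_exp (s - M)) (exp_pos M).le
    rwa [← exp_add, add_sub_cancel, show s - M + 1 = 1 - (M - s) by ring] at this
  have hlower : exp M * (1 - (1 / C + (M - s))) ≤ evenPowRatio n s * exp s := by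
    have hC' : 0 ≤ 1 / C := by positivity
    have hCle : 1 / C ≤ 1 := by rw [div_le_one (by linarith)]; exact hC
    calc exp M * (1 - (1 / C + (M - s))) ≤ (1 - 1 / C) * (exp M * (1 - (M - s))) := by
          nlinarith [mul_nonneg (mul_nonneg hC' (sub_nonneg.2 hsM)) (exp_pos M).le]
      _ ≤ (1 - 1 / C) * exp s := mul_le_mul_of_nonneg_left hexp (by linarith)
      _ ≤ evenPowRatio n s * exp s :=
          mul_le_mul_of_nonneg_right (one_sub_inv_le_evenPowRatio hn hC hs) (exp_pos s).le
  have habs : |evenPowRatio n s * exp s - exp M| ≤ exp M * (1 / C + (M - s)) := by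
    rw [abs_le]; constructor <;> nlinarith
  calc a * (evenPowRatio n s * exp s) = a * exp M + a * (evenPowRatio n s * exp s - exp M) := by
        ring
    _ ≤ a * exp M + |a| * |evenPowRatio n s * exp s - exp M| := by
        rw [← abs_mul]; gcongr; exact le_abs_self _
    _ ≤ a * exp M + |a| * (exp M * (1 / C + (M - s))) := by gcongr

end evenPowRatio

open SimpleGraph

def IsSolution {V : Type*} [Fintype V] (G : SimpleGraph V) [DecidableRel G.Adj] (μ : V → ℝ)
    (w : V → V → ℝ) (h : V → ℝ) (n : ℕ) (t : ℝ) (u : V → ℝ) : Prop :=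
  ∀ x, G.weightedLaplacian w u x = μ x * (t - h x * (evenPowRatio n (u x) * exp (u x)))

section IsSolution

variable {V : Type*} [Fintype V] {G : SimpleGraph V} [DecidableRel G.Adj] {μ : V → ℝ}
  {w : V → V → ℝ} {h : V → ℝ} {n : ℕ} {t : ℝ} {u : V → ℝ}

theorem IsSolution.sum_mul_eq (hu : IsSolution G μ w h n t u) (hw : ∀ x y, w x y = w y x) :
    ∑ x, μ x * (h x * (evenPowRatio n (u x) * exp (u x))) = t * ∑ x, μ x := by
  have hzero := sum_weightedLaplacian (G := G) hw u
  rw [sum_congr rfl fun x _ => hu x] at hzero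
  simp only [mul_sub, sum_sub_distrib] at hzero
  rw [mul_sum]
  simp only [mul_comm t]
  linarith

theorem IsSolution.exists_isMax_ne_zero (hu : IsSolution G μ w h n t u) (hG : G.Connected)
    (hμ : ∀ x, 0 ≤ μ x) (hw : ∀ x y, G.Adj x y → 0 < w x y) (ht : 0 ≤ t)
    (hh : ∃ x, h x ≠ 0) : ∃ x, (∀ y, u y ≤ u x) ∧ h x ≠ 0 := by
  by_contra! hcon
  obtain ⟨x₀, hx₀⟩ := hh
  have hconst := hG.eq_of_weightedLaplacian_nonneg_of_isMax hw fun x hx => by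
    rw [hu x, hcon x hx, zero_mul, sub_zero]
    exact mul_nonneg (hμ x) ht
  exact hx₀ (hcon x₀ fun y => (hconst y x₀).le)

theorem IsSolution.pos_of_isMax (hu : IsSolution G μ w h n t u)
    (hw : ∀ x y, G.Adj x y → 0 ≤ w x y) (hμ : ∀ x, 0 < μ x) (ht : 0 ≤ t) {x : V}
    (hx : ∀ y, u y ≤ u x) (hhx : h x ≠ 0) (hx1 : 1 ≤ u x) : 0 < h x := by
  have hL := weightedLaplacian_nonpos_of_isMax (hw x) hx
  rw [hu x] at hL
  have hP : 0 < evenPowRatio n (u x) * exp (u x) :=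
    mul_pos (by linarith [one_half_le_evenPowRatio (n := n) hx1]) (exp_pos _)
  have : 0 ≤ h x * (evenPowRatio n (u x) * exp (u x)) := by
    nlinarith [mul_nonpos_iff.1 hL, hμ x]
  exact (nonneg_of_mul_nonneg_left this hP).lt_of_ne' hhx

theorem IsSolution.abs_weightedLaplacian_le (hu : IsSolution G μ w h n t u) (hμ : ∀ x, 0 ≤ μ x)
    (ht : 0 ≤ t) {M : ℝ} (hM : ∀ x, u x ≤ M) (x : V) :
    |G.weightedLaplacian w u x| ≤ (∑ y, μ y) * (t + (∑ y, |h y|) * exp M) := by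
  rw [hu x, abs_mul, abs_of_nonneg (hμ x)]
  refine mul_le_mul (single_le_sum (fun y _ => hμ y) (mem_univ x)) ?_ (abs_nonneg _)
    (sum_nonneg fun y _ => hμ y)
  calc |t - h x * (evenPowRatio n (u x) * exp (u x))|
      ≤ |t| + |h x * (evenPowRatio n (u x) * exp (u x))| := abs_sub _ _
    _ ≤ t + (∑ y, |h y|) * exp M := by
      rw [abs_of_nonneg ht]
      gcongr
      exact (abs_mul_evenPowRatio_mul_exp_le (hM x) (h x)).trans
        (mul_le_mul_of_nonneg_right
          (single_le_sum (f := fun y => |h y|) (fun y _ => abs_nonneg _) (mem_univ x))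
          (exp_pos M).le)

theorem IsSolution.mul_sum_le (hu : IsSolution G μ w h n t u) (hw : ∀ x y, w x y = w y x)
    (hμ : ∀ x, 0 ≤ μ x) {M : ℝ} (hM : ∀ x, u x ≤ M) :
    t * ∑ x, μ x ≤ (∑ x, |h x|) * exp M * ∑ x, μ x :=
  calc t * ∑ x, μ x = ∑ x, μ x * (h x * (evenPowRatio n (u x) * exp (u x))) :=
        (hu.sum_mul_eq hw).symm
    _ ≤ ∑ x, μ x * ((∑ y, |h y|) * exp M) := sum_le_sum fun x _ => mul_le_mul_of_nonneg_left
        ((le_abs_self _).trans ((abs_mul_evenPowRatio_mul_exp_le (hM x) (h x)).trans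
          (mul_le_mul_of_nonneg_right (single_le_sum (f := fun y => |h y|)
            (fun y _ => abs_nonneg _) (mem_univ x)) (exp_pos M).le))) (hμ x)
    _ = (∑ x, |h x|) * exp M * ∑ x, μ x := by rw [← sum_mul, mul_comm]

theorem IsSolution.mul_sum_le_of_le_neg (hu : IsSolution G μ w h n t u)
    (hw : ∀ x y, w x y = w y x) (hμ : ∀ x, 0 ≤ μ x) (hn : 1 ≤ n) {C M δ : ℝ} (hC : 1 ≤ C)
    (hneg : ∀ x, u x ≤ -C) (hM : ∀ x, u x ≤ M) (hδ : ∀ x, M - u x ≤ δ) :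
    t * ∑ x, μ x ≤ exp M * (∑ x, μ x * h x + (∑ x, μ x) * (∑ x, |h x|) * (1 / C + δ)) := by
  rw [← hu.sum_mul_eq hw]
  calc ∑ x, μ x * (h x * (evenPowRatio n (u x) * exp (u x)))
      ≤ ∑ x, μ x * (h x * exp M + (∑ y, |h y|) * (exp M * (1 / C + δ))) := by
        refine sum_le_sum fun x _ => mul_le_mul_of_nonneg_left ?_ (hμ x)
        have hH : |h x| ≤ ∑ y, |h y| :=
          single_le_sum (f := fun y => |h y|) (fun y _ => abs_nonneg _) (mem_univ x)
        have hgap : 0 ≤ exp M * (1 / C + (M - u x)) :=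
          mul_nonneg (exp_pos M).le (add_nonneg (by positivity) (sub_nonneg.2 (hM x)))
        refine (mul_evenPowRatio_mul_exp_le hn hC (hneg x) (hM x) (h x)).trans
          (add_le_add_right (mul_le_mul hH ?_ hgap ((abs_nonneg _).trans hH)) _)
        exact mul_le_mul_of_nonneg_left (add_le_add_right (hδ x) _) (exp_pos M).le
    _ = exp M * (∑ x, μ x * h x + (∑ x, μ x) * (∑ x, |h x|) * (1 / C + δ)) := by
        simp only [mul_add, sum_add_distrib, ← mul_assoc, ← sum_mul]
        ring

end IsSolution

section Bounds

variable {V : Type*} [Fintype V] {G : SimpleGraph V} [DecidableRel G.Adj] {μ : V → ℝ}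
  {w : V → V → ℝ} {h : V → ℝ} {n : ℕ}

theorem isSolution_of_forall_eq {t : ℝ} {u : V → ℝ} (hμ : ∀ x, μ x ≠ 0)
    (hu : ∀ x, -((1 / μ x) * G.weightedLaplacian w u x) =
      h x * evenPowRatio n (u x) * exp (u x) - t) :
    IsSolution G μ w h n t u := fun x => by
  rw [← mul_assoc, ← neg_sub, ← hu x, neg_neg, ← mul_assoc, mul_one_div_cancel (hμ x), one_mul]

theorem exists_exp_le_mul_one_add_exp (hw : ∀ x y, w x y = w y x) (hμ : ∀ x, 0 < μ x) :
    ∃ a, 0 ≤ a ∧ ∀ t ≤ 1, ∀ u, IsSolution G μ w h n t u → ∀ x N, 0 < h x → 1 ≤ u x →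
      (∀ y, h y < 0 → u y ≤ N) → exp (u x) ≤ a * (1 + exp N) := by
  obtain ⟨c, hc, hcle⟩ := exists_pos_forall_le (p := fun x => 0 < h x) (f := fun x => μ x * h x)
    fun x hx => mul_pos (hμ x) hx
  have hμV : 0 ≤ ∑ x, μ x := sum_nonneg fun x _ => (hμ x).le
  have hS : 0 ≤ ∑ x, μ x * |h x| := sum_nonneg fun x _ => mul_nonneg (hμ x).le (abs_nonneg _)
  refine ⟨2 * (∑ x, μ x + ∑ x, μ x * |h x|) / c, by positivity, ?_⟩
  intro t ht u hu x N hx hx1 hN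
  set f := fun y => μ y * (h y * (evenPowRatio n (u y) * exp (u y)))
  set g := fun y => μ y * |h y| * exp N
  have hfg : ∀ y, 0 ≤ f y + g y := fun y => by
    have hP := evenPowRatio_nonneg n (u y)
    rcases le_or_gt 0 (h y) with hy | hy
    · have := exp_pos (u y); have := exp_pos N; have := hμ y
      positivity
    · have hPe : evenPowRatio n (u y) * exp (u y) ≤ exp N :=
        (mul_le_of_le_one_left (exp_pos _).le (evenPowRatio_le_one n _)).trans
          (exp_le_exp.2 (hN y hy))
      simp only [f, g, abs_of_neg hy]
      nlinarith [mul_nonneg (mul_nonneg (hμ y).le (neg_nonneg.2 hy.le)) (sub_nonneg.2 hPe)]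
  have hsum : ∑ y, (f y + g y) = t * ∑ y, μ y + (∑ y, μ y * |h y|) * exp N := by
    rw [sum_add_distrib, hu.sum_mul_eq hw, sum_mul]
  have hfx : f x ≤ ∑ y, μ y + (∑ y, μ y * |h y|) * exp N := by
    have := single_le_sum (fun y _ => hfg y) (mem_univ x)
    have : 0 ≤ g x := by have := hμ x; positivity
    nlinarith
  have hlow : c * (1 / 2 * exp (u x)) ≤ f x :=
    calc c * (1 / 2 * exp (u x)) ≤ μ x * h x * (evenPowRatio n (u x) * exp (u x)) :=
          mul_le_mul (hcle x hx) (mul_le_mul_of_nonneg_right (one_half_le_evenPowRatio hx1)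
            (exp_pos _).le) (by positivity) (mul_pos (hμ x) hx).le
      _ = f x := mul_assoc _ _ _
  rw [div_mul_eq_mul_div, le_div_iff₀ hc]
  nlinarith [exp_pos N]

theorem exists_exp_le_mul_sub (hμ : ∀ x, 0 < μ x) (hw : ∀ x y, G.Adj x y → 0 ≤ w x y) :
    ∃ b, 0 ≤ b ∧ ∀ t, 0 ≤ t → ∀ u, IsSolution G μ w h n t u → ∀ x M, (∀ y, u y ≤ M) →
      h x < 0 → 1 ≤ u x → exp (u x) ≤ b * (M - u x) := by
  obtain ⟨c, hc, hcle⟩ := exists_pos_forall_le (p := fun x => h x < 0)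
    (f := fun x => μ x * -h x) fun x hx => mul_pos (hμ x) (neg_pos.2 hx)
  have hdeg : ∀ x, 0 ≤ ∑ y ∈ G.neighborFinset x, w x y := fun x =>
    sum_nonneg fun y hy => hw x y ((mem_neighborFinset G x y).1 hy)
  set W := ∑ x, ∑ y ∈ G.neighborFinset x, w x y
  have hW : 0 ≤ W := sum_nonneg fun x _ => hdeg x
  refine ⟨2 * W / c, by positivity, ?_⟩
  intro t ht u hu x M hM hx hx1
  have hlow : c * (1 / 2 * exp (u x)) ≤ μ x * -h x * (evenPowRatio n (u x) * exp (u x)) :=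
    mul_le_mul (hcle x hx) (mul_le_mul_of_nonneg_right (one_half_le_evenPowRatio hx1)
      (exp_pos _).le) (by positivity) (mul_pos (hμ x) (neg_pos.2 hx)).le
  have hup : G.weightedLaplacian w u x ≤ W * (M - u x) :=
    (weightedLaplacian_le_mul (hw x) hM).trans (mul_le_mul_of_nonneg_right
      (single_le_sum (f := fun x => ∑ y ∈ G.neighborFinset x, w x y) (fun x _ => hdeg x)
        (mem_univ x)) (sub_nonneg.2 (hM x)))
  rw [hu x] at hup
  rw [div_mul_eq_mul_div, le_div_iff₀ hc]
  nlinarith [hμ x]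

theorem exp_le_of_exp_le_mul_one_add_exp {a b M N : ℝ} (ha : 0 ≤ a) (hb : 0 ≤ b)
    (hM : exp M ≤ a * (1 + exp N)) (hN : 1 ≤ N → exp N ≤ b * (M - N)) :
    exp M ≤ a * (1 + exp 1 + 2 * a * b) := by
  suffices exp N ≤ exp 1 + 2 * a * b by nlinarith
  rcases lt_or_ge N 1 with hN1 | hN1
  · nlinarith [exp_le_exp.2 hN1.le]
  · have hexpN : 1 ≤ exp N := one_le_exp (by linarith)
    have hMN : M - N ≤ 2 * a := by
      have : exp (M - N) ≤ 2 * a := by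
        rw [exp_sub, div_le_iff₀ (exp_pos N)]
        nlinarith
      linarith [add_one_le_exp (M - N)]
    nlinarith [hN hN1, exp_pos 1]

theorem exists_forall_isSolution_le (hG : G.Connected) (hsymm : ∀ x y, w x y = w y x)
    (hwpos : ∀ x y, G.Adj x y → 0 < w x y) (hμ : ∀ x, 0 < μ x) (hneg : ∃ x, h x < 0) :
    ∃ C, ∀ t ∈ Set.Icc (0 : ℝ) 1, ∀ u, IsSolution G μ w h n t u → ∀ x, u x ≤ C := by
  classical
  have hwnonneg : ∀ x y, G.Adj x y → 0 ≤ w x y := fun x y hxy => (hwpos x y hxy).le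
  obtain ⟨a, ha, hexpM⟩ := exists_exp_le_mul_one_add_exp (G := G) (n := n) hsymm hμ
  obtain ⟨b, hb, hexpN⟩ := exists_exp_le_mul_sub (n := n) hμ hwnonneg
  refine ⟨max 1 (log (a * (1 + exp 1 + 2 * a * b))), ?_⟩
  rintro t ⟨ht0, ht1⟩ u hu x
  obtain ⟨xM, hxM, hhxM⟩ := hu.exists_isMax_ne_zero hG (fun x => (hμ x).le) hwpos ht0
    (hneg.imp fun _ hx => hx.ne)
  obtain ⟨xN, hxN, hxNmax⟩ := exists_max_image (univ.filter (h · < 0)) u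
    (hneg.imp fun y hy => mem_filter.2 ⟨mem_univ y, hy⟩)
  refine (hxM x).trans ?_
  rcases lt_or_ge (u xM) 1 with hM1 | hM1
  · exact le_max_of_le_left hM1.le
  · have hpos := hu.pos_of_isMax hwnonneg hμ ht0 hxM hhxM hM1
    have hexp := exp_le_of_exp_le_mul_one_add_exp ha hb
      (hexpM t ht1 u hu xM (u xN) hpos hM1 fun y hy => hxNmax y (mem_filter.2 ⟨mem_univ y, hy⟩))
      (hexpN t ht0 u hu xN (u xM) hxM (mem_filter.1 hxN).2)
    exact le_max_of_le_right ((log_exp (u xM)).symm.le.trans (log_le_log (exp_pos _) hexp))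

theorem exists_forall_isSolution_exists_neg_le (hG : G.Connected)
    (hsymm : ∀ x y, w x y = w y x) (hwpos : ∀ x y, G.Adj x y → 0 < w x y) (hμ : ∀ x, 0 < μ x)
    (hn : 1 ≤ n) (hint : ∑ x, μ x * h x < 0) :
    ∃ C, ∀ t ∈ Set.Icc (0 : ℝ) 1, ∀ u, IsSolution G μ w h n t u → ∃ x, -C ≤ u x := by
  have := hG.nonempty
  obtain ⟨K, hK, hosc⟩ := hG.exists_sub_le_of_abs_weightedLaplacian_le hsymm hwpos
  set μV := ∑ x, μ x
  set H := ∑ x, |h x|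
  set I := ∑ x, μ x * h x
  have hμV : 0 < μV := sum_pos (fun x _ => hμ x) univ_nonempty
  have hH0 : 0 ≤ H := sum_nonneg fun x _ => abs_nonneg (h x)
  set D := 2 * K * μV * H
  set C := max 1 (2 * μV * H * (1 + D) / -I)
  have hC1 : 1 ≤ C := le_max_left _ _
  have hCI : μV * H * (1 + D) / C ≤ -I / 2 := by
    have : 2 * μV * H * (1 + D) / -I ≤ C := le_max_right _ _
    rw [div_le_iff₀ (neg_pos.2 hint)] at this
    rw [div_le_iff₀ (by linarith)]
    linarith
  refine ⟨C, ?_⟩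
  rintro t ⟨ht0, -⟩ u hu
  by_contra! hlow
  obtain ⟨xM, -, hxM⟩ := exists_max_image univ u univ_nonempty
  set M := u xM
  have hM : ∀ x, u x ≤ M := fun x => hxM x (mem_univ x)
  have hexpM : exp M ≤ 1 / C :=
    calc exp M ≤ exp (-C) := exp_le_exp.2 (hlow xM).le
      _ = 1 / exp C := by rw [exp_neg, one_div]
      _ ≤ 1 / C := one_div_le_one_div_of_le (by linarith) (by linarith [add_one_le_exp C])
  have htM : t ≤ H * exp M :=
    le_of_mul_le_mul_right (hu.mul_sum_le hsymm (fun x => (hμ x).le) hM) hμV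
  -- the oscillation of `u` is `O(exp M)`, so `u` is nearly constant when `M ≪ 0`
  have hosc' : ∀ x, M - u x ≤ D / C := fun x =>
    calc M - u x ≤ K * (μV * (t + H * exp M)) :=
          hosc u _ (hu.abs_weightedLaplacian_le (fun x => (hμ x).le) ht0 hM) xM x
      _ ≤ K * (μV * (2 * H * (1 / C))) := by
          have := mul_le_mul_of_nonneg_left hexpM hH0
          exact mul_le_mul_of_nonneg_left (mul_le_mul_of_nonneg_left (by linarith) hμV.le) hK
      _ = D / C := by ring
  have hsum := hu.mul_sum_le_of_le_neg hsymm (fun x => (hμ x).le) hn hC1 (fun x => (hlow x).le)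
    hM hosc'
  rw [show μV * H * (1 / C + D / C) = μV * H * (1 + D) / C by ring] at hsum
  nlinarith [mul_pos (exp_pos M) (by linarith : 0 < -(I + μV * H * (1 + D) / C)),
    mul_nonneg ht0 hμV.le]

theorem exists_forall_isSolution_neg_le (hG : G.Connected) (hsymm : ∀ x y, w x y = w y x)
    (hwpos : ∀ x y, G.Adj x y → 0 < w x y) (hμ : ∀ x, 0 < μ x) (hn : 1 ≤ n)
    (hneg : ∃ x, h x < 0) (hint : ∑ x, μ x * h x < 0) :
    ∃ C, ∀ t ∈ Set.Icc (0 : ℝ) 1, ∀ u, IsSolution G μ w h n t u → ∀ x, -C ≤ u x := by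
  obtain ⟨C₁, hC₁⟩ := exists_forall_isSolution_le (n := n) hG hsymm hwpos hμ hneg
  obtain ⟨C₂, hC₂⟩ := exists_forall_isSolution_exists_neg_le hG hsymm hwpos hμ hn hint
  obtain ⟨K, hK, hosc⟩ := hG.exists_sub_le_of_abs_weightedLaplacian_le hsymm hwpos
  refine ⟨C₂ + K * ((∑ x, μ x) * (1 + (∑ x, |h x|) * exp C₁)), fun t ht u hu x => ?_⟩
  obtain ⟨x₀, hx₀⟩ := hC₂ t ht u hu
  have hdiff := hosc u _ (hu.abs_weightedLaplacian_le (fun x => (hμ x).le) ht.1 (hC₁ t ht u hu))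
    x₀ x
  have : K * ((∑ x, μ x) * (t + (∑ x, |h x|) * exp C₁)) ≤
      K * ((∑ x, μ x) * (1 + (∑ x, |h x|) * exp C₁)) := by
    have := sum_nonneg fun x (_ : x ∈ univ) => (hμ x).le
    gcongr
    exact ht.2
  linarith

end Bounds

theorem stmt19_general {V : Type*} [Fintype V]
    (G : SimpleGraph V) [DecidableRel G.Adj] (hconn : G.Connected)
    (μ : V → ℝ) (hμ : ∀ x, 0 < μ x)
    (w : V → V → ℝ) (hwsymm : ∀ x y, w x y = w y x)
    (hwpos : ∀ x y, G.Adj x y → 0 < w x y)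
    (n : ℕ) (hn : 1 ≤ n)
    (h : V → ℝ) (hneg : ∃ x, h x < 0)
    (hint : ∑ x, μ x * h x < 0) :
    ∃ C : ℝ, 0 < C ∧ ∀ t ∈ Set.Icc (0 : ℝ) 1, ∀ u : V → ℝ,
      (∀ x, -((1 / μ x) * ∑ y ∈ G.neighborFinset x, w x y * (u y - u x))
          = h x * ((u x) ^ (2 * n) / (1 + (u x) ^ (2 * n))) * Real.exp (u x) - t) →
      ∀ x, |u x| ≤ C := by
  obtain ⟨C₁, hC₁⟩ := exists_forall_isSolution_le (n := n) hconn hwsymm hwpos hμ hneg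
  obtain ⟨C₂, hC₂⟩ := exists_forall_isSolution_neg_le hconn hwsymm hwpos hμ hn hneg hint
  refine ⟨max 1 (max C₁ C₂), by positivity, fun t ht u hu x => abs_le.2 ?_⟩
  have hsol : IsSolution G μ w h n t u := isSolution_of_forall_eq (fun x => (hμ x).ne') hu
  have hC : max C₁ C₂ ≤ max 1 (max C₁ C₂) := le_max_right _ _
  exact ⟨by linarith [hC₂ t ht u hsol x, le_max_right C₁ C₂],
    by linarith [hC₁ t ht u hsol x, le_max_left C₁ C₂]⟩

/-- If `h` changes sign and `∫_V h dμ < 0`, then there is `C > 0`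
such that for every `t ∈ [0,1]`, every solution of
`-Δu = h (u^(2n)/(1+u^(2n))) e^u - t` satisfies `max_V |u| ≤ C`. -/
theorem stmt19 {V : Type*} [Fintype V] [Nonempty V]
    (G : SimpleGraph V) [DecidableRel G.Adj] (hconn : G.Connected)
    (μ : V → ℝ) (hμ : ∀ x, 0 < μ x)
    (w : V → V → ℝ) (hwsymm : ∀ x y, w x y = w y x)
    (hwpos : ∀ x y, G.Adj x y → 0 < w x y)
    (n : ℕ) (hn : 1 ≤ n)
    (h : V → ℝ) (hpos : ∃ x, 0 < h x) (hneg : ∃ x, h x < 0)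
    (hint : ∑ x, μ x * h x < 0) :
    ∃ C : ℝ, 0 < C ∧ ∀ t ∈ Set.Icc (0 : ℝ) 1, ∀ u : V → ℝ,
      (∀ x, -((1 / μ x) * ∑ y ∈ G.neighborFinset x, w x y * (u y - u x))
          = h x * ((u x) ^ (2 * n) / (1 + (u x) ^ (2 * n))) * Real.exp (u x) - t) →
      ∀ x, |u x| ≤ C :=
  stmt19_general G hconn μ hμ w hwsymm hwpos n hn h hneg hint
end
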